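/- arXiv:math/0601263 — 13 statements merged into one kernel-verified Lean document; each statement's English description precedes it below -/
import Mathlib

section
/- For every i ∈ ℤ, Q_i ≠ 0, Q_i divides N − P_i² exactly, and the identity N = P_i² + Q_i·Q_{i+1} holds in ℤ. (Theorem 2 (Riesel), parts (a) and (f): the pseudo-squares Q_i are integers and satisfy the fundamental identity.) -/
/-!
Integrality does not depend on how the partial quotients `b i` are chosen: if `q ∣ N - p²`, then
also `q ∣ N - (c q - p)²` for every integer `c`, so the division defining the next pseudo-square
`q'` is exact and `N = p² + q q'`; as `N` is not a square, `N - p² ≠ 0` and hence `q' ≠ 0`.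
Since `N` and `P (-1)` are odd, `Q 0 = 2` divides `N - P (-1)²`, and the invariant
`Q i ≠ 0 ∧ Q i ∣ N - P (i - 1)²` propagates from `i = 0` upwards and downwards.
-/

section CommRing

variable {R : Type*} [CommRing R] {N p q : R}

theorem sub_sq_ne_zero_of_not_isSquare (hN : ¬IsSquare N) (p : R) : N - p ^ 2 ≠ 0 :=
  fun h => hN ⟨p, by rw [← sq]; exact sub_eq_zero.mp h⟩

theorem dvd_sub_sq_mul_sub (hd : q ∣ N - p ^ 2) (c : R) : q ∣ N - (c * q - p) ^ 2 := by
  have h : N - (c * q - p) ^ 2 = (N - p ^ 2) + q * (c * (2 * p - c * q)) := by ring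
  rw [h]
  exact dvd_add hd (dvd_mul_right _ _)

theorem two_dvd_sub_sq_of_odd (hN : Odd N) (hp : Odd p) : 2 ∣ N - p ^ 2 :=
  even_iff_two_dvd.mp (hN.sub_odd hp.pow)

end CommRing

theorem Int.fdiv_sub_sq_ne_zero_dvd_eq {N p q q' : ℤ} (hN : ¬IsSquare N) (hd : q ∣ N - p ^ 2)
    (hq' : q' = (N - p ^ 2).fdiv q) : q' ≠ 0 ∧ q' ∣ N - p ^ 2 ∧ N = p ^ 2 + q * q' := by
  have hmul : q * q' = N - p ^ 2 := hq' ▸ Int.mul_fdiv_cancel' hd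
  refine ⟨right_ne_zero_of_mul (hmul ▸ sub_sq_ne_zero_of_not_isSquare hN p),
    Dvd.intro_left q hmul, ?_⟩
  rw [hmul]
  ring

theorem stmt_0_general (N : ℤ) (hN4 : N % 4 = 1) (hNsq : ¬ IsSquare N)
    (r : ℤ)
    (P Q b : ℤ → ℤ)
    (hP1 : P (-1) = if 2 ∣ r then r - 1 else r)
    (hQ0 : Q 0 = 2)
    (hPf : ∀ i : ℤ, 0 ≤ i → P i = b i * Q i - P (i - 1))
    (hQf : ∀ i : ℤ, 0 ≤ i → Q (i + 1) = Int.fdiv (N - P i ^ 2) (Q i))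
    (hQb : ∀ i : ℤ, i ≤ -1 → Q i = Int.fdiv (N - P i ^ 2) (Q (i + 1)))
    (hPb : ∀ i : ℤ, i ≤ -1 → P (i - 1) = b i * Q i - P i) :
    ∀ i : ℤ, Q i ≠ 0 ∧ Q i ∣ (N - P i ^ 2) ∧ N = P i ^ 2 + Q i * Q (i + 1) := by
  have hP1odd : Odd (P (-1)) := by
    rw [hP1, Int.odd_iff]
    split_ifs with h <;> omega
  have base : Q 0 ≠ 0 ∧ Q 0 ∣ N - P (0 - 1) ^ 2 :=
    ⟨by simp [hQ0], hQ0 ▸ two_dvd_sub_sq_of_odd (Int.odd_iff.mpr (by omega)) hP1odd⟩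
  have up : ∀ i, 0 ≤ i → Q i ≠ 0 ∧ Q i ∣ N - P (i - 1) ^ 2 := by
    refine Int.leInduction base fun i hi ⟨_, hd⟩ => ?_
    rw [add_sub_cancel_right]
    obtain ⟨hq, hd', -⟩ :=
      Int.fdiv_sub_sq_ne_zero_dvd_eq hNsq (hPf i hi ▸ dvd_sub_sq_mul_sub hd _) (hQf i hi)
    exact ⟨hq, hd'⟩
  have down : ∀ i ≤ 0, Q i ≠ 0 ∧ Q i ∣ N - P (i - 1) ^ 2 := by
    refine Int.leInductionDown base fun i hi ⟨_, hd⟩ => ?_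
    obtain ⟨hq, hd', -⟩ :=
      Int.fdiv_sub_sq_ne_zero_dvd_eq hNsq hd (by simpa using hQb (i - 1) (by omega))
    exact ⟨hq, hPb (i - 1) (by omega) ▸ dvd_sub_sq_mul_sub hd' _⟩
  intro i
  rcases le_or_gt 0 i with hi | hi
  · obtain ⟨hq, hd⟩ := up i hi
    have hd' := hPf i hi ▸ dvd_sub_sq_mul_sub hd (b i)
    exact ⟨hq, hd', (Int.fdiv_sub_sq_ne_zero_dvd_eq hNsq hd' (hQf i hi)).2.2⟩
  · obtain ⟨-, hd⟩ := down (i + 1) (by omega)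
    rw [add_sub_cancel_right] at hd
    obtain ⟨hq, hd', hid⟩ := Int.fdiv_sub_sq_ne_zero_dvd_eq hNsq hd (hQb i (by omega))
    exact ⟨hq, hd', hid.trans (by ring)⟩

/-- Two-sided continued fraction data of the normalized square root of `N`:
`N ≡ 1 (mod 4)` is positive and not a perfect square, `r = ⌊√N⌋`,
`P (-1) = r - 1` if `r` is even and `r` otherwise, `Q 0 = 2`, and the forward
(`i ≥ 0`) and backward (`i ≤ -1`) recursions (with `Int.fdiv` the floor
division on `ℤ`, so that `Int.fdiv x y = ⌊x / y⌋`). -/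
theorem stmt_0 (N : ℤ) (hNpos : 0 < N) (hN4 : N % 4 = 1) (hNsq : ¬ IsSquare N)
    (r : ℤ) (hr : r = ⌊Real.sqrt (N : ℝ)⌋)
    (P Q b : ℤ → ℤ)
    (hP1 : P (-1) = if 2 ∣ r then r - 1 else r)
    (hQ0 : Q 0 = 2)
    (hbf : ∀ i : ℤ, 0 ≤ i → b i = Int.fdiv (r + P (i - 1)) (Q i))
    (hPf : ∀ i : ℤ, 0 ≤ i → P i = b i * Q i - P (i - 1))
    (hQf : ∀ i : ℤ, 0 ≤ i → Q (i + 1) = Int.fdiv (N - P i ^ 2) (Q i))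
    (hQb : ∀ i : ℤ, i ≤ -1 → Q i = Int.fdiv (N - P i ^ 2) (Q (i + 1)))
    (hbb : ∀ i : ℤ, i ≤ -1 → b i = Int.fdiv (r + P i) (Q i))
    (hPb : ∀ i : ℤ, i ≤ -1 → P (i - 1) = b i * Q i - P i) :
    ∀ i : ℤ, Q i ≠ 0 ∧ Q i ∣ (N - P i ^ 2) ∧ N = P i ^ 2 + Q i * Q (i + 1) :=
  stmt_0_general N hN4 hNsq r P Q b hP1 hQ0 hPf hQf hQb hPb
end

section
/- For every i ∈ ℤ, the partial quotient satisfies b_i = ⌊(⌊√N⌋ + P_{i-1})/Q_i⌋ ≥ 1. (Theorem 2 (Riesel), part (c).) -/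
private def RInv (N p q : ℤ) : Prop :=
  0 < q ∧ q ∣ (N - p ^ 2) ∧ (p : ℝ) < Real.sqrt N ∧
    Real.sqrt N < (p : ℝ) + q ∧ (q : ℝ) < Real.sqrt N + p

private lemma fdiv_bounds (a q : ℤ) (hq : 0 < q) :
    a.fdiv q * q ≤ a ∧ a < (a.fdiv q + 1) * q := by
  rw [Int.fdiv_eq_ediv_of_nonneg _ hq.le]
  have h1 := Int.mul_ediv_add_emod a q
  have h2 := Int.emod_nonneg a hq.ne'
  have h3 := Int.emod_lt_of_pos a hq
  have h4 : a / q * q = q * (a / q) := mul_comm _ _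
  have h5 : (a / q + 1) * q = q * (a / q) + q := by ring
  constructor
  · linarith
  · linarith

private lemma floor_helper (s : ℝ) (b p q : ℤ) (hq : (0 : ℝ) < q)
    (h1 : (b : ℝ) * q ≤ s + p) (h2 : s + (p : ℝ) < ((b : ℝ) + 1) * q) :
    ⌊(s + (p : ℝ)) / q⌋ = b := by
  rw [Int.floor_eq_iff]
  constructor
  · rw [le_div_iff₀ hq]; exact h1
  · rw [div_lt_iff₀ hq]; push_cast; linarith

private lemma floor_fdiv (N r p q : ℤ) (hr1 : (r : ℝ) < Real.sqrt N)
    (hr2 : Real.sqrt N < (r : ℝ) + 1) (hq : 0 < q) :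
    ⌊(Real.sqrt N + (p : ℝ)) / q⌋ = (r + p).fdiv q := by
  obtain ⟨l, u⟩ := fdiv_bounds (r + p) q hq
  have u' : r + p + 1 ≤ ((r + p).fdiv q + 1) * q := u
  apply floor_helper _ _ _ _ (by exact_mod_cast hq)
  · have hl : (((r + p).fdiv q * q : ℤ) : ℝ) ≤ ((r : ℝ) + p) := by exact_mod_cast l
    push_cast at hl ⊢
    linarith
  · have hu : ((r : ℝ) + p + 1) ≤ ((((r + p).fdiv q + 1) * q : ℤ) : ℝ) := by exact_mod_cast u'
    push_cast at hu ⊢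
    linarith

/-- Forward step: from the invariant at one index derive it at the next. -/
private lemma fstep (N r p q b p' q' : ℤ)
    (hs2 : Real.sqrt N ^ 2 = (N : ℝ))
    (hsne : ∀ m : ℤ, (m : ℝ) ≠ Real.sqrt N)
    (hr1 : (r : ℝ) < Real.sqrt N) (hr2 : Real.sqrt N < (r : ℝ) + 1)
    (h : RInv N p q)
    (hb : b = (r + p).fdiv q) (hp' : p' = b * q - p)
    (hq' : q' = (N - p' ^ 2).fdiv q) :
    1 ≤ b ∧ RInv N p' q' := by
  obtain ⟨hq, hdvd, h1, h2, h3⟩ := h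
  set s := Real.sqrt N with hs
  have hqR : (0 : ℝ) < q := by exact_mod_cast hq
  have hfl : ⌊(s + (p : ℝ)) / q⌋ = b := by rw [hb]; exact floor_fdiv N r p q hr1 hr2 hq
  have hl : (b : ℝ) * q ≤ s + p := by
    have h0 := Int.floor_le ((s + (p : ℝ)) / q)
    rw [hfl, le_div_iff₀ hqR] at h0
    exact h0
  have hu : s + (p : ℝ) < ((b : ℝ) + 1) * q := by
    have h0 := Int.lt_floor_add_one ((s + (p : ℝ)) / q)
    rw [hfl, div_lt_iff₀ hqR] at h0
    push_cast at h0 ⊢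
    linarith
  have hlstrict : (b : ℝ) * q < s + p := by
    rcases lt_or_eq_of_le hl with h0 | h0
    · exact h0
    · exact absurd (show ((b * q - p : ℤ) : ℝ) = s by push_cast; linarith) (hsne _)
  have hb1 : 1 ≤ b := by
    by_contra hc
    push_neg at hc
    have hc' : b ≤ 0 := by omega
    have hbR : (b : ℝ) ≤ 0 := by exact_mod_cast hc'
    nlinarith
  have hbR1 : (1 : ℝ) ≤ (b : ℝ) := by exact_mod_cast hb1
  have hp'R : (p' : ℝ) = (b : ℝ) * q - p := by rw [hp']; push_cast; ring
  have lt1' : (p' : ℝ) < s := by rw [hp'R]; linarith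
  have spos : (0 : ℝ) < s - p' := by linarith
  have q_lt_sp' : (q : ℝ) < s + p' := by
    rw [hp'R]
    nlinarith [mul_nonneg (show (0 : ℝ) ≤ (b : ℝ) - 1 by linarith) hqR.le]
  have s_lt : s < (p' : ℝ) + q := by rw [hp'R]; push_cast at hu ⊢; linarith
  have hd2 : q ∣ N - p' ^ 2 := by
    obtain ⟨c0, hc0⟩ := hdvd
    exact ⟨c0 + (p - p') * b, by rw [hp']; linear_combination hc0⟩
  obtain ⟨c, hc⟩ := hd2
  have hq'c : q' = c := by
    rw [hq', hc, Int.fdiv_eq_ediv_of_nonneg _ hq.le, Int.mul_ediv_cancel_left _ hq.ne']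
  have hcR : s ^ 2 - (p' : ℝ) ^ 2 = (q : ℝ) * c := by
    have := congrArg (fun z : ℤ => (z : ℝ)) hc
    push_cast at this
    rw [← hs2] at this
    linarith
  have cposR : (0 : ℝ) < c := by
    by_contra hcc
    push_neg at hcc
    nlinarith
  have cpos : 0 < c := by exact_mod_cast cposR
  have lt2' : s < (p' : ℝ) + c := by
    have hmul : (q : ℝ) * (s - p') < (q : ℝ) * c := by nlinarith
    have := lt_of_mul_lt_mul_left hmul hqR.le
    linarith
  have lt3' : (c : ℝ) < s + p' := by
    have hmul : (c : ℝ) * (s - p') < (s + p') * (s - p') := by nlinarith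
    have := lt_of_mul_lt_mul_right hmul spos.le
    linarith
  have dvd' : c ∣ N - p' ^ 2 := ⟨q, by rw [hc]; ring⟩
  rw [hq'c]
  exact ⟨hb1, cpos, dvd', lt1', lt2', lt3'⟩

/-- Backward step. -/
private lemma bstep (N r p q q1 b p' : ℤ)
    (hs2 : Real.sqrt N ^ 2 = (N : ℝ))
    (hsne : ∀ m : ℤ, (m : ℝ) ≠ Real.sqrt N)
    (hr1 : (r : ℝ) < Real.sqrt N) (hr2 : Real.sqrt N < (r : ℝ) + 1)
    (h : RInv N p q)
    (hq1 : q1 = (N - p ^ 2).fdiv q) (hb : b = (r + p).fdiv q1)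
    (hp' : p' = b * q1 - p) :
    1 ≤ b ∧ b = (r + p').fdiv q1 ∧ RInv N p' q1 := by
  obtain ⟨hq, hdvd, h1, h2, h3⟩ := h
  set s := Real.sqrt N with hs
  have hqR : (0 : ℝ) < q := by exact_mod_cast hq
  obtain ⟨c, hc⟩ := hdvd
  have hq1c : q1 = c := by
    rw [hq1, hc, Int.fdiv_eq_ediv_of_nonneg _ hq.le, Int.mul_ediv_cancel_left _ hq.ne']
  have hcR : s ^ 2 - (p : ℝ) ^ 2 = (q : ℝ) * c := by
    have := congrArg (fun z : ℤ => (z : ℝ)) hc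
    push_cast at this
    rw [← hs2] at this
    linarith
  have cposR : (0 : ℝ) < c := by
    by_contra hcc
    push_neg at hcc
    nlinarith
  have cpos : 0 < c := by exact_mod_cast cposR
  -- c < s + p
  have c_lt : (c : ℝ) < s + p := by
    have hmul : (c : ℝ) * (s - p) < (s + p) * (s - p) := by nlinarith
    have := lt_of_mul_lt_mul_right hmul (by linarith : (0 : ℝ) ≤ s - p)
    linarith
  -- s - p < c
  have s_lt : s < (p : ℝ) + c := by
    have hmul : (q : ℝ) * (s - p) < (q : ℝ) * c := by nlinarith
    have := lt_of_mul_lt_mul_left hmul hqR.le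
    linarith
  have hcRpos : (0 : ℝ) < (c : ℝ) := cposR
  have hfl : ⌊(s + (p : ℝ)) / c⌋ = b := by
    rw [hb, hq1c]; exact floor_fdiv N r p c hr1 hr2 cpos
  have hl : (b : ℝ) * c ≤ s + p := by
    have h0 := Int.floor_le ((s + (p : ℝ)) / c)
    rw [hfl, le_div_iff₀ hcRpos] at h0
    exact h0
  have hu : s + (p : ℝ) < ((b : ℝ) + 1) * c := by
    have h0 := Int.lt_floor_add_one ((s + (p : ℝ)) / c)
    rw [hfl, div_lt_iff₀ hcRpos] at h0
    push_cast at h0 ⊢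
    linarith
  have hlstrict : (b : ℝ) * c < s + p := by
    rcases lt_or_eq_of_le hl with h0 | h0
    · exact h0
    · exact absurd (show ((b * c - p : ℤ) : ℝ) = s by push_cast; linarith) (hsne _)
  have hb1 : 1 ≤ b := by
    by_contra hcc
    push_neg at hcc
    have hc' : b ≤ 0 := by omega
    have hbR : (b : ℝ) ≤ 0 := by exact_mod_cast hc'
    nlinarith
  have hbR1 : (1 : ℝ) ≤ (b : ℝ) := by exact_mod_cast hb1
  have hp'R : (p' : ℝ) = (b : ℝ) * c - p := by rw [hp', hq1c]; push_cast; ring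
  have lt1' : (p' : ℝ) < s := by rw [hp'R]; linarith
  have lt2' : s < (p' : ℝ) + c := by rw [hp'R]; linarith
  have lt3' : (c : ℝ) < s + p' := by
    rw [hp'R]
    nlinarith [mul_nonneg (show (0 : ℝ) ≤ (b : ℝ) - 1 by linarith) hcRpos.le]
  have dvd' : c ∣ N - p' ^ 2 := by
    refine ⟨q + (p - p') * b, ?_⟩
    rw [hp', hq1c]
    linear_combination hc
  -- b = (r + p').fdiv c
  have hbeq : b = (r + p').fdiv c := by
    have : ⌊(s + (p' : ℝ)) / c⌋ = b := by
      apply floor_helper _ _ _ _ hcRpos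
      · rw [hp'R]; linarith
      · rw [hp'R]; linarith
    rw [← this, hs]
    exact floor_fdiv N r p' c hr1 hr2 cpos
  rw [hq1c]
  exact ⟨hb1, hbeq, cpos, dvd', lt1', lt2', lt3'⟩

/-- Two-sided continued fraction data of the normalized square root of `N`:
`N ≡ 1 (mod 4)` is positive and not a perfect square, `r = ⌊√N⌋`,
`P (-1) = r - 1` if `r` is even and `r` otherwise, `Q 0 = 2`, and the forward
(`i ≥ 0`) and backward (`i ≤ -1`) recursions (with `Int.fdiv` the floor
division on `ℤ`, so that `Int.fdiv x y = ⌊x / y⌋`). -/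
theorem stmt_1 (N : ℤ) (hNpos : 0 < N) (hN4 : N % 4 = 1) (hNsq : ¬ IsSquare N)
    (r : ℤ) (hr : r = ⌊Real.sqrt (N : ℝ)⌋)
    (P Q b : ℤ → ℤ)
    (hP1 : P (-1) = if 2 ∣ r then r - 1 else r)
    (hQ0 : Q 0 = 2)
    (hbf : ∀ i : ℤ, 0 ≤ i → b i = Int.fdiv (r + P (i - 1)) (Q i))
    (hPf : ∀ i : ℤ, 0 ≤ i → P i = b i * Q i - P (i - 1))
    (hQf : ∀ i : ℤ, 0 ≤ i → Q (i + 1) = Int.fdiv (N - P i ^ 2) (Q i))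
    (hQb : ∀ i : ℤ, i ≤ -1 → Q i = Int.fdiv (N - P i ^ 2) (Q (i + 1)))
    (hbb : ∀ i : ℤ, i ≤ -1 → b i = Int.fdiv (r + P i) (Q i))
    (hPb : ∀ i : ℤ, i ≤ -1 → P (i - 1) = b i * Q i - P i) :
    ∀ i : ℤ, b i = Int.fdiv (r + P (i - 1)) (Q i) ∧ 1 ≤ b i := by
  have hN5 : 5 ≤ N := by
    rcases eq_or_ne N 1 with h | h
    · exact absurd (h ▸ IsSquare.one) hNsq
    · omega
  have hNR : (0 : ℝ) ≤ (N : ℝ) := by exact_mod_cast hNpos.le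
  have hs2 : Real.sqrt (N : ℝ) ^ 2 = (N : ℝ) := Real.sq_sqrt hNR
  have hsne : ∀ m : ℤ, (m : ℝ) ≠ Real.sqrt N := by
    intro m hm
    apply hNsq
    have h2 : (m : ℝ) ^ 2 = (N : ℝ) := by rw [hm, hs2]
    have h3 : (m ^ 2 : ℤ) = N := by exact_mod_cast h2
    exact ⟨m, by rw [← h3]; ring⟩
  have hr1 : (r : ℝ) < Real.sqrt N := by
    refine lt_of_le_of_ne ?_ (hsne r)
    rw [hr]; exact Int.floor_le _
  have hr2 : Real.sqrt N < (r : ℝ) + 1 := by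
    rw [hr]; exact Int.lt_floor_add_one _
  have hsge : (2 : ℝ) < Real.sqrt N := by
    have h5 : (5 : ℝ) ≤ (N : ℝ) := by exact_mod_cast hN5
    nlinarith [Real.sqrt_nonneg (N : ℝ)]
  have hrge : 2 ≤ r := by
    rw [hr, Int.le_floor]; push_cast; linarith
  have hp0b : r - 1 ≤ P (-1) ∧ P (-1) ≤ r ∧ P (-1) % 2 = 1 := by
    rw [hP1]; split_ifs with h
    · exact ⟨by omega, by omega, by omega⟩
    · exact ⟨by omega, by omega, by omega⟩
  have base : RInv N (P (-1)) (Q 0) := by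
    obtain ⟨hb1, hb2, hb3⟩ := hp0b
    have hdvd : (2 : ℤ) ∣ N - P (-1) ^ 2 := by
      obtain ⟨k, hk⟩ : ∃ k, P (-1) = 2 * k + 1 := ⟨P (-1) / 2, by omega⟩
      obtain ⟨m, hm⟩ : ∃ m, N = 4 * m + 1 := ⟨N / 4, by omega⟩
      exact ⟨2 * m - 2 * k ^ 2 - 2 * k, by rw [hk, hm]; ring⟩
    have c1 : ((P (-1) : ℤ) : ℝ) ≤ (r : ℝ) := by exact_mod_cast hb2
    have c2 : ((r : ℤ) : ℝ) - 1 ≤ ((P (-1) : ℤ) : ℝ) := by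
      have : ((r - 1 : ℤ) : ℝ) ≤ ((P (-1) : ℤ) : ℝ) := by exact_mod_cast hb1
      push_cast at this; linarith
    have crge : (2 : ℝ) ≤ (r : ℝ) := by exact_mod_cast hrge
    rw [hQ0]
    refine ⟨by norm_num, hdvd, by linarith, ?_, ?_⟩
    · push_cast; linarith
    · push_cast; linarith
  -- forward invariant
  have fwd : ∀ n : ℕ, RInv N (P ((n : ℤ) - 1)) (Q (n : ℤ)) := by
    intro n
    induction n with
    | zero => simpa using base
    | succ n ih =>
      have h0 : (0 : ℤ) ≤ (n : ℤ) := Int.natCast_nonneg n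
      have res := (fstep N r (P ((n : ℤ) - 1)) (Q (n : ℤ)) (b (n : ℤ)) (P (n : ℤ))
        (Q ((n : ℤ) + 1)) hs2 hsne hr1 hr2 ih (hbf _ h0) (hPf _ h0) (hQf _ h0)).2
      have e : ((n + 1 : ℕ) : ℤ) = (n : ℤ) + 1 := by push_cast; ring
      rw [e, add_sub_cancel_right]
      exact res
  -- backward invariant
  have bwd : ∀ n : ℕ, RInv N (P (-(n : ℤ) - 1)) (Q (-(n : ℤ))) := by
    intro n
    induction n with
    | zero => simpa using base
    | succ n ih =>
      have hile : -(n : ℤ) - 1 ≤ -1 := by omega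
      have hq1 := hQb (-(n : ℤ) - 1) hile
      rw [show (-(n : ℤ) - 1) + 1 = -(n : ℤ) from by ring] at hq1
      have res := (bstep N r (P (-(n : ℤ) - 1)) (Q (-(n : ℤ))) (Q (-(n : ℤ) - 1))
        (b (-(n : ℤ) - 1)) (P ((-(n : ℤ) - 1) - 1)) hs2 hsne hr1 hr2 ih
        hq1 (hbb _ hile) (hPb _ hile)).2.2
      have e2 : (-((n + 1 : ℕ) : ℤ)) = -(n : ℤ) - 1 := by push_cast; ring
      rw [e2]
      exact res
  intro i
  rcases le_or_gt 0 i with hi | hi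
  · have hInv : RInv N (P (i - 1)) (Q i) := by
      have h0 := fwd i.toNat
      rwa [Int.toNat_of_nonneg hi] at h0
    have res := fstep N r (P (i - 1)) (Q i) (b i) (P i) (Q (i + 1)) hs2 hsne hr1 hr2 hInv
      (hbf i hi) (hPf i hi) (hQf i hi)
    exact ⟨hbf i hi, res.1⟩
  · have hile : i ≤ -1 := by omega
    have hInv : RInv N (P i) (Q (i + 1)) := by
      have h0 := bwd (-(i + 1)).toNat
      rw [Int.toNat_of_nonneg (by omega : (0 : ℤ) ≤ -(i + 1))] at h0
      rw [show -(-(i + 1)) = i + 1 from by ring] at h0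
      rwa [show i + 1 - 1 = i from by ring] at h0
    have res := bstep N r (P i) (Q (i + 1)) (Q i) (b i) (P (i - 1)) hs2 hsne hr1 hr2 hInv
      (hQb i hile) (hbb i hile) (hPb i hile)
    exact ⟨res.2.1, res.1⟩
end

section
/- For every i ∈ ℤ, 0 < P_i < √N (as real numbers, where P_i is an integer and √N is the real square root of N). (Theorem 2 (Riesel), part (d).) -/
/-- invariant: the pair `(P, Q)` is (the integer data of) a reduced quadratic surd. -/
def CFInv (N r P Q : ℤ) : Prop :=
  1 ≤ P ∧ P ≤ r ∧ 1 ≤ Q ∧ r + 1 ≤ P + Q ∧ Q - P ≤ r ∧ Q ∣ (N - P ^ 2)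

lemma cf_step (N r P Q P' : ℤ) (hNl : r ^ 2 < N) (hNu : N ≤ r ^ 2 + 2 * r)
    (h : CFInv N r P Q) (hP' : P' = (r + P).fdiv Q * Q - P) :
    CFInv N r P' Q ∧ CFInv N r P' ((N - P' ^ 2) / Q) := by
  obtain ⟨h1, h2, h3, h4, h5, h6⟩ := h
  have hQpos : 0 < Q := h3
  set b := (r + P).fdiv Q with hb
  have hbe : b = (r + P) / Q := Int.fdiv_eq_ediv_of_nonneg _ (le_of_lt hQpos)
  have hkey1 : b * Q ≤ r + P := by
    rw [hbe]
    exact Int.ediv_mul_le _ (ne_of_gt hQpos)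
  have hkey2 : r + P < b * Q + Q := by
    have := Int.lt_ediv_add_one_mul_self (r + P) hQpos
    rw [hbe]; linarith [this]
  have hb1 : 1 ≤ b := by
    rw [hbe]
    rw [Int.le_ediv_iff_mul_le hQpos]
    linarith
  have hP'r : P' ≤ r := by rw [hP']; linarith
  have hP'l : r - Q < P' := by rw [hP']; linarith
  have hQP' : Q - P' ≤ r := by
    have : (b - 1) * Q ≥ 0 := mul_nonneg (by linarith) (le_of_lt hQpos)
    rw [hP']; nlinarith
  have hP'low : 1 - r ≤ P' := by nlinarith
  have hP'sq : P' ^ 2 ≤ r ^ 2 := by nlinarith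
  have hdvd : Q ∣ N - P' ^ 2 := by
    have heq : N - P' ^ 2 = (N - P ^ 2) + Q * (2 * b * P - b ^ 2 * Q) := by
      rw [hP']; ring
    rw [heq]; exact dvd_add h6 (dvd_mul_right _ _)
  set Q' := (N - P' ^ 2) / Q with hQ'
  have hQQ' : Q * Q' = N - P' ^ 2 := Int.mul_ediv_cancel' hdvd
  have hpos : 0 < N - P' ^ 2 := by linarith
  have hQ'pos : 1 ≤ Q' := by nlinarith
  have hC : r + 1 ≤ P' + Q' := by
    by_contra hc
    push_neg at hc
    have hq' : Q' ≤ r - P' := by linarith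
    have hq : Q ≤ r + P' := by linarith
    nlinarith
  have hD : Q' - P' ≤ r := by
    by_contra hc
    push_neg at hc
    have hq' : r + 1 + P' ≤ Q' := by linarith
    have hq : r + 1 - P' ≤ Q := by linarith
    nlinarith
  have hP'1 : 1 ≤ P' := by omega
  exact ⟨⟨hP'1, hP'r, h3, by linarith, hQP', hdvd⟩,
    ⟨hP'1, hP'r, hQ'pos, hC, hD, ⟨Q, by linarith [hQQ']⟩⟩⟩

lemma cf_flip (N r P Q' : ℤ) (hNl : r ^ 2 < N) (hNu : N ≤ r ^ 2 + 2 * r)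
    (h : CFInv N r P Q') :
    CFInv N r P ((N - P ^ 2) / Q') := by
  obtain ⟨h1, h2, h3, h4, h5, h6⟩ := h
  set Q := (N - P ^ 2) / Q' with hQ
  have hQQ' : Q' * Q = N - P ^ 2 := Int.mul_ediv_cancel' h6
  have hpos : 0 < N - P ^ 2 := by nlinarith
  have hQpos : 1 ≤ Q := by nlinarith
  have hC : r + 1 ≤ P + Q := by
    by_contra hc
    push_neg at hc
    have hq : Q ≤ r - P := by linarith
    have hq' : Q' ≤ r + P := by linarith
    nlinarith
  have hD : Q - P ≤ r := by
    by_contra hc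
    push_neg at hc
    have hq : r + 1 + P ≤ Q := by linarith
    have hq' : r + 1 - P ≤ Q' := by linarith
    nlinarith
  exact ⟨h1, h2, hQpos, hC, hD, ⟨Q', by linarith [hQQ']⟩⟩

/-- Two-sided continued fraction data of the normalized square root of `N`:
`N ≡ 1 (mod 4)` is positive and not a perfect square, `r = ⌊√N⌋`,
`P (-1) = r - 1` if `r` is even and `r` otherwise, `Q 0 = 2`, and the forward
(`i ≥ 0`) and backward (`i ≤ -1`) recursions (with `Int.fdiv` the floor
division on `ℤ`, so that `Int.fdiv x y = ⌊x / y⌋`). -/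
theorem stmt_2 (N : ℤ) (hNpos : 0 < N) (hN4 : N % 4 = 1) (hNsq : ¬ IsSquare N)
    (r : ℤ) (hr : r = ⌊Real.sqrt (N : ℝ)⌋)
    (P Q b : ℤ → ℤ)
    (hP1 : P (-1) = if 2 ∣ r then r - 1 else r)
    (hQ0 : Q 0 = 2)
    (hbf : ∀ i : ℤ, 0 ≤ i → b i = Int.fdiv (r + P (i - 1)) (Q i))
    (hPf : ∀ i : ℤ, 0 ≤ i → P i = b i * Q i - P (i - 1))
    (hQf : ∀ i : ℤ, 0 ≤ i → Q (i + 1) = Int.fdiv (N - P i ^ 2) (Q i))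
    (hQb : ∀ i : ℤ, i ≤ -1 → Q i = Int.fdiv (N - P i ^ 2) (Q (i + 1)))
    (hbb : ∀ i : ℤ, i ≤ -1 → b i = Int.fdiv (r + P i) (Q i))
    (hPb : ∀ i : ℤ, i ≤ -1 → P (i - 1) = b i * Q i - P i) :
    ∀ i : ℤ, 0 < P i ∧ (P i : ℝ) < Real.sqrt (N : ℝ) := by
  -- basic bounds on r and N
  have hsnn : (0:ℝ) ≤ Real.sqrt (N:ℝ) := Real.sqrt_nonneg _
  have hNR : (0:ℝ) ≤ (N:ℝ) := by exact_mod_cast hNpos.le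
  have hsq : Real.sqrt (N:ℝ) ^ 2 = (N:ℝ) := Real.sq_sqrt hNR
  have hr0 : 0 ≤ r := by rw [hr]; exact Int.floor_nonneg.mpr hsnn
  have hfl : (r:ℝ) ≤ Real.sqrt (N:ℝ) := by rw [hr]; exact Int.floor_le _
  have hfu : Real.sqrt (N:ℝ) < (r:ℝ) + 1 := by rw [hr]; exact Int.lt_floor_add_one _
  have hrR : (0:ℝ) ≤ (r:ℝ) := by exact_mod_cast hr0
  have hNlr : ((r:ℝ))^2 ≤ (N:ℝ) := by nlinarith
  have hNl' : r^2 ≤ N := by exact_mod_cast hNlr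
  have hNur : (N:ℝ) < ((r:ℝ))^2 + 2*(r:ℝ) + 1 := by nlinarith
  have hNu' : N < r^2 + 2*r + 1 := by exact_mod_cast hNur
  have hNu : N ≤ r^2 + 2*r := Int.lt_add_one_iff.mp hNu'
  have hNl : r^2 < N := lt_of_le_of_ne hNl' (fun h => hNsq ⟨r, by rw [← h]; ring⟩)
  have hN5 : 5 ≤ N := by
    have h1 : N ≠ 1 := fun h => hNsq (by rw [h]; exact IsSquare.one)
    omega
  have hr2 : 2 ≤ r := by nlinarith
  -- base case
  have base : CFInv N r (P (-1)) (Q 0) := by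
    have hodd : P (-1) % 2 = 1 ∧ r - 1 ≤ P (-1) ∧ P (-1) ≤ r := by
      rw [hP1]; split <;> omega
    obtain ⟨ho1, ho2, ho3⟩ := hodd
    refine ⟨by omega, by omega, by omega, by omega, by omega, ?_⟩
    rw [hQ0]
    obtain ⟨k, hk⟩ : ∃ k, P (-1) = 2*k+1 := ⟨(P (-1) - 1) / 2, by omega⟩
    rw [hk]
    have he : N - (2*k+1)^2 = N - (4*(k*k) + 4*k + 1) := by ring
    rw [he]
    obtain ⟨m, hm⟩ : ∃ m, k * k = m := ⟨_, rfl⟩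
    rw [hm]
    omega
  -- forward induction
  have F : ∀ n : ℕ, CFInv N r (P ((n:ℤ) - 1)) (Q (n:ℤ)) := by
    intro n
    induction n with
    | zero => simpa using base
    | succ k ih =>
      have hk0 : (0:ℤ) ≤ (k:ℤ) := Int.natCast_nonneg k
      have hPdef : P (k:ℤ) =
          (r + P ((k:ℤ)-1)).fdiv (Q (k:ℤ)) * Q (k:ℤ) - P ((k:ℤ)-1) := by
        rw [hPf _ hk0, hbf _ hk0]
      have hst := cf_step N r (P ((k:ℤ)-1)) (Q (k:ℤ)) (P (k:ℤ)) hNl hNu ih hPdef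
      have hQnn : (0:ℤ) ≤ Q (k:ℤ) := le_trans zero_le_one ih.2.2.1
      have hQdef : Q ((k:ℤ)+1) = (N - P (k:ℤ)^2) / Q (k:ℤ) := by
        rw [hQf _ hk0]
        exact Int.fdiv_eq_ediv_of_nonneg _ hQnn
      have e1 : ((k+1:ℕ):ℤ) - 1 = (k:ℤ) := by push_cast; ring
      have e2 : ((k+1:ℕ):ℤ) = (k:ℤ) + 1 := by push_cast; ring
      rw [e1, e2, hQdef]
      exact hst.2
  -- backward induction
  have B : ∀ n : ℕ, CFInv N r (P (-(n:ℤ) - 1)) (Q (-(n:ℤ))) := by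
    intro n
    induction n with
    | zero => simpa using base
    | succ k ih =>
      have hi : (-(k:ℤ) - 1) ≤ -1 := by omega
      have e1 : -(k:ℤ) - 1 + 1 = -(k:ℤ) := by ring
      have hQnn : (0:ℤ) ≤ Q (-(k:ℤ) - 1 + 1) := by
        rw [e1]; exact le_trans zero_le_one ih.2.2.1
      have ihp : CFInv N r (P (-(k:ℤ)-1)) (Q (-(k:ℤ)-1+1)) := by rw [e1]; exact ih
      have hQi : Q (-(k:ℤ)-1) = (N - P (-(k:ℤ)-1) ^ 2) / Q (-(k:ℤ)-1+1) := by
        rw [hQb _ hi]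
        exact Int.fdiv_eq_ediv_of_nonneg _ hQnn
      have hflip : CFInv N r (P (-(k:ℤ)-1)) (Q (-(k:ℤ)-1)) := by
        have := cf_flip N r (P (-(k:ℤ)-1)) (Q (-(k:ℤ)-1+1)) hNl hNu ihp
        rwa [← hQi] at this
      have hPdef : P ((-(k:ℤ)-1) - 1) =
          (r + P (-(k:ℤ)-1)).fdiv (Q (-(k:ℤ)-1)) * Q (-(k:ℤ)-1) - P (-(k:ℤ)-1) := by
        rw [hPb _ hi, hbb _ hi]
      have hst := (cf_step N r (P (-(k:ℤ)-1)) (Q (-(k:ℤ)-1)) (P (-(k:ℤ)-1-1))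
        hNl hNu hflip hPdef).1
      have e2 : -((k+1:ℕ):ℤ) - 1 = -(k:ℤ)-1-1 := by push_cast; ring
      have e3 : -((k+1:ℕ):ℤ) = -(k:ℤ)-1 := by push_cast; ring
      rw [e2, e3]
      exact hst
  -- conclusion
  intro i
  have hPir : 1 ≤ P i ∧ P i ≤ r := by
    rcases le_or_gt 0 i with h | h
    · have hf := F (i+1).toNat
      have e : (((i+1).toNat : ℕ) : ℤ) = i + 1 := Int.toNat_of_nonneg (by omega)
      rw [e] at hf
      have e2 : i + 1 - 1 = i := by ring
      rw [e2] at hf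
      exact ⟨hf.1, hf.2.1⟩
    · have hb' := B (-(i+1)).toNat
      have e : (((-(i+1)).toNat : ℕ) : ℤ) = -(i+1) := Int.toNat_of_nonneg (by omega)
      rw [e] at hb'
      have e2 : -(-(i+1)) - 1 = i := by ring
      rw [e2] at hb'
      exact ⟨hb'.1, hb'.2.1⟩
  refine ⟨by omega, ?_⟩
  have h1 : (P i : ℝ) ≤ (r : ℝ) := by exact_mod_cast hPir.2
  have h2 : (r : ℝ) < Real.sqrt (N:ℝ) := by
    have : ((r:ℝ))^2 < (N:ℝ) := by exact_mod_cast hNl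
    nlinarith [Real.sqrt_nonneg (N:ℝ), Real.sq_sqrt hNR, hfl]
  linarith
end

section
/- For every i ∈ ℤ, the real floor identity ⌊(√N + P_i)/Q_i⌋ = ⌊(√N + P_{i-1})/Q_i⌋ = b_i holds, where √N is the real square root of N. (Theorem 2 (Riesel), part (i).) -/
/-!
Write `s = √N`. The pair `(p, q)` is *reduced* when `0 < s - p < q < s + p`, i.e. when
`(s + p) / q > 1` and its conjugate `(p - s) / q` lies in `(-1, 0)`. This property is preserved
by the two moves that make up one step of the recursion in either direction: `p ↦ b q - p`
with `b = ⌊(s + p) / q⌋`, and `q ↦ (N - p²) / q`. Starting from `(P (-1), Q 0)`, every pair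
`(P (i - 1), Q i)` is therefore reduced. For a reduced pair, `b = ⌊(s + p) / q⌋` and
`(s + (b q - p)) / q = b + (s - p) / q` with `0 < (s - p) / q < 1`, which gives both floors.
-/

section FloorRing

variable {k : Type*} [Field k] [LinearOrder k] [IsOrderedRing k] [FloorRing k]

theorem Int.floor_add_intCast_div_eq_fdiv (x : k) (p : ℤ) {q : ℤ} (hq : 0 ≤ q) :
    ⌊(x + p) / q⌋ = Int.fdiv (⌊x⌋ + p) q := by
  rw [Int.floor_div_cast_of_nonneg hq, Int.floor_add_intCast, Int.fdiv_eq_ediv_of_nonneg _ hq]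

theorem Int.floor_add_mul_sub_div_eq {x : k} {p q : ℤ} (b : ℤ) (h₀ : 0 < x - p)
    (h₁ : x - p < q) : ⌊(x + ↑(b * q - p)) / q⌋ = b := by
  have hq : (0 : k) < q := h₀.trans h₁
  rw [Int.floor_eq_iff, le_div_iff₀ hq, div_lt_iff₀ hq]
  push_cast
  constructor <;> linarith

end FloorRing

def IsReducedPair (N p q : ℤ) : Prop :=
  q ∣ N - p ^ 2 ∧ 0 < √(N : ℝ) - p ∧ √(N : ℝ) - p < q ∧ (q : ℝ) < √(N : ℝ) + p

namespace IsReducedPair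

variable {N p q : ℤ}

theorem pos (h : IsReducedPair N p q) : 0 < q := by
  obtain ⟨-, h₀, h₁, -⟩ := h
  exact_mod_cast h₀.trans h₁

theorem fdiv_mul_cancel (h : IsReducedPair N p q) : Int.fdiv (N - p ^ 2) q * q = N - p ^ 2 := by
  rw [Int.fdiv_eq_ediv_of_nonneg _ h.pos.le, Int.ediv_mul_cancel h.1]

theorem floor_add_div (h : IsReducedPair N p q) (b : ℤ) :
    ⌊(√(N : ℝ) + ↑(b * q - p)) / q⌋ = b :=
  Int.floor_add_mul_sub_div_eq b h.2.1 h.2.2.1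

/-- Since `(s - p)(s + p) = N - p² = q' q`, the inequalities `s - p < q < s + p` are equivalent to
`s - p < q' < s + p`. -/
theorem flip (h : IsReducedPair N p q) (hN : 0 ≤ N) {q' : ℤ} (hq' : q' * q = N - p ^ 2) :
    IsReducedPair N p q' := by
  obtain ⟨-, h₀, h₁, h₂⟩ := h
  have hsq : √(N : ℝ) ^ 2 = N := Real.sq_sqrt (by exact_mod_cast hN)
  have hprod : (q' : ℝ) * q = (√(N : ℝ) - p) * (√(N : ℝ) + p) := by
    have : (q' : ℝ) * q = N - p ^ 2 := by exact_mod_cast hq'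
    linear_combination this - hsq
  refine ⟨⟨q, hq'.symm⟩, h₀, ?_, ?_⟩
  · nlinarith [mul_lt_mul_of_pos_left h₂ h₀]
  · nlinarith [mul_lt_mul_of_pos_right h₁ (h₀.trans (h₁.trans h₂))]

theorem reflect (h : IsReducedPair N p q) (hirr : Irrational √(N : ℝ)) {b : ℤ}
    (hb : ⌊(√(N : ℝ) + p) / q⌋ = b) : IsReducedPair N (b * q - p) q := by
  obtain ⟨hdvd, h₀, h₁, h₂⟩ := h
  have hq : (0 : ℝ) < q := h₀.trans h₁
  rw [Int.floor_eq_iff, le_div_iff₀ hq, div_lt_iff₀ hq] at hb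
  have hb₀ : (0 : ℝ) < b := by nlinarith
  have hb₁ : (1 : ℝ) ≤ b := by
    have : 0 < b := by exact_mod_cast hb₀
    exact_mod_cast (by omega : 1 ≤ b)
  have hne : √(N : ℝ) ≠ b * q - p := by exact_mod_cast hirr.ne_int (b * q - p)
  refine ⟨?_, ?_, ?_, ?_⟩ <;> push_cast
  · have : N - (b * q - p) ^ 2 = N - p ^ 2 + (2 * b * p - b ^ 2 * q) * q := by ring
    rw [this]
    exact dvd_add hdvd (dvd_mul_left q _)
  · exact lt_of_le_of_ne (by linarith) (sub_ne_zero.mpr hne).symm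
  · linarith
  · nlinarith

end IsReducedPair

theorem isReducedPair_two {N p : ℤ} (hN : Odd N) (hp : Odd p) (hp₀ : 0 < p)
    (hps : (p : ℝ) < √(N : ℝ)) (hsp : √(N : ℝ) < p + 2) : IsReducedPair N p 2 := by
  have hp₁ : (1 : ℝ) ≤ p := by exact_mod_cast hp₀
  refine ⟨even_iff_two_dvd.mp (hN.sub_odd hp.pow), ?_, ?_, ?_⟩ <;> push_cast <;> linarith

theorem isReducedPair_initial {N : ℤ} (hN₀ : 0 < N) (hN : Odd N) (hirr : Irrational √(N : ℝ)) :
    IsReducedPair N (if 2 ∣ ⌊√(N : ℝ)⌋ then ⌊√(N : ℝ)⌋ - 1 else ⌊√(N : ℝ)⌋) 2 := by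
  set r := ⌊√(N : ℝ)⌋
  have hr₁ : 1 ≤ r :=
    Int.le_floor.mpr (by simpa using Real.one_le_sqrt.mpr (by exact_mod_cast hN₀))
  have hrs : (r : ℝ) < √(N : ℝ) := (Int.floor_le _).lt_of_ne (hirr.ne_int r).symm
  have hsr : √(N : ℝ) < r + 1 := Int.lt_floor_add_one _
  split_ifs with h2r
  · refine isReducedPair_two hN (Int.odd_iff.mpr (by omega)) (by omega) ?_ ?_ <;> push_cast <;>
      linarith
  · exact isReducedPair_two hN (Int.odd_iff.mpr (by omega)) (by omega) hrs (by linarith)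

/-- Two-sided continued fraction data of the normalized square root of `N`:
`N ≡ 1 (mod 4)` is positive and not a perfect square, `r = ⌊√N⌋`,
`P (-1) = r - 1` if `r` is even and `r` otherwise, `Q 0 = 2`, and the forward
(`i ≥ 0`) and backward (`i ≤ -1`) recursions (with `Int.fdiv` the floor
division on `ℤ`, so that `Int.fdiv x y = ⌊x / y⌋`). -/
theorem stmt_5 (N : ℤ) (hNpos : 0 < N) (hN4 : N % 4 = 1) (hNsq : ¬ IsSquare N)
    (r : ℤ) (hr : r = ⌊Real.sqrt (N : ℝ)⌋)
    (P Q b : ℤ → ℤ)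
    (hP1 : P (-1) = if 2 ∣ r then r - 1 else r)
    (hQ0 : Q 0 = 2)
    (hbf : ∀ i : ℤ, 0 ≤ i → b i = Int.fdiv (r + P (i - 1)) (Q i))
    (hPf : ∀ i : ℤ, 0 ≤ i → P i = b i * Q i - P (i - 1))
    (hQf : ∀ i : ℤ, 0 ≤ i → Q (i + 1) = Int.fdiv (N - P i ^ 2) (Q i))
    (hQb : ∀ i : ℤ, i ≤ -1 → Q i = Int.fdiv (N - P i ^ 2) (Q (i + 1)))
    (hbb : ∀ i : ℤ, i ≤ -1 → b i = Int.fdiv (r + P i) (Q i))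
    (hPb : ∀ i : ℤ, i ≤ -1 → P (i - 1) = b i * Q i - P i) :
    ∀ i : ℤ, ⌊(Real.sqrt (N : ℝ) + (P i : ℝ)) / (Q i : ℝ)⌋ = b i ∧
      ⌊(Real.sqrt (N : ℝ) + (P (i - 1) : ℝ)) / (Q i : ℝ)⌋ = b i := by
  have hirr : Irrational √(N : ℝ) := (irrational_sqrt_intCast_iff_of_nonneg hNpos.le).mpr hNsq
  have hfloor : ∀ {p q}, IsReducedPair N p q → ⌊(√(N : ℝ) + p) / q⌋ = Int.fdiv (r + p) q :=
    fun h ↦ hr ▸ Int.floor_add_intCast_div_eq_fdiv _ _ h.pos.le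
  have hforward : ∀ i ≥ 0, IsReducedPair N (P (i - 1)) (Q i) → IsReducedPair N (P i) (Q i) :=
    fun i hi h ↦ hPf i hi ▸ h.reflect hirr ((hfloor h).trans (hbf i hi).symm)
  have hbackward : ∀ i ≤ -1, IsReducedPair N (P i) (Q (i + 1)) → IsReducedPair N (P i) (Q i) :=
    fun i hi h ↦ h.flip hNpos.le (hQb i hi ▸ h.fdiv_mul_cancel)
  have hred : ∀ i, IsReducedPair N (P (i - 1)) (Q i) := by
    intro i
    induction i using Int.inductionOn' (b := 0) with
    | zero =>
      simpa [hP1, hQ0, hr] using isReducedPair_initial hNpos (Int.odd_iff.mpr (by omega)) hirr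
    | succ k hk ih =>
      have h := hforward k hk ih
      simpa using h.flip hNpos.le (hQf k hk ▸ h.fdiv_mul_cancel)
    | pred k hk ih =>
      have h := hbackward (k - 1) (by omega) (by simpa using ih)
      exact hPb (k - 1) (by omega) ▸
        h.reflect hirr ((hfloor h).trans (hbb _ (by omega)).symm)
  intro i
  rcases le_or_gt 0 i with hi | hi
  · have h := hred i
    exact ⟨hPf i hi ▸ h.floor_add_div (b i), (hfloor h).trans (hbf i hi).symm⟩
  · have h := hbackward i (by omega) (by simpa using hred (i + 1))
    exact ⟨(hfloor h).trans (hbb i (by omega)).symm, hPb i (by omega) ▸ h.floor_add_div (b i)⟩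
end

section
/- The sequence of pseudo-squares is symmetric about Q_0: for all i ∈ ℤ, Q_i = Q_{−i}. (Theorem 4 (c); the hypothesis Q_0 ∣ 2P_{−1} of that theorem holds automatically here since Q_0 = 2.) -/
/-!
The forward recursion read at `n` and the backward recursion read at `-n - 1` are the same
recursion, provided `(Q n, P n) = (Q (-n), P (-n - 1))`. With `Q 0 = 2`, the parity choice of
`P (-1)` makes `P 0 = P (-1)`, so this holds for `n = 0`, and it propagates to all `n ≥ 0`.
-/

lemma fdiv_two_mul_two_sub_eq_self {r p : ℤ} (hp : p = r ∨ p = r - 1) :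
    (r + p).fdiv 2 * 2 - p = p := by
  rw [Int.fdiv_eq_ediv_of_nonneg _ zero_le_two]
  omega

lemma Int.apply_eq_apply_neg_of_forall_nat {α : Type*} {f : ℤ → α} (hf : ∀ n : ℕ, f n = f (-n)) (i : ℤ) :
    f i = f (-i) := by
  obtain ⟨n, rfl | rfl⟩ := Int.eq_nat_or_neg i
  · exact hf n
  · rw [neg_neg, hf n]

section Reflection

variable {N r : ℤ} {P Q b : ℤ → ℤ}
    (hbf : ∀ i : ℤ, 0 ≤ i → b i = Int.fdiv (r + P (i - 1)) (Q i))
    (hPf : ∀ i : ℤ, 0 ≤ i → P i = b i * Q i - P (i - 1))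
    (hQf : ∀ i : ℤ, 0 ≤ i → Q (i + 1) = Int.fdiv (N - P i ^ 2) (Q i))
    (hQb : ∀ i : ℤ, i ≤ -1 → Q i = Int.fdiv (N - P i ^ 2) (Q (i + 1)))
    (hbb : ∀ i : ℤ, i ≤ -1 → b i = Int.fdiv (r + P i) (Q i))
    (hPb : ∀ i : ℤ, i ≤ -1 → P (i - 1) = b i * Q i - P i)
include hbf hPf hQf hQb hbb hPb

lemma Q_eq_Q_neg_and_P_eq_P_neg_sub_one (h0 : P 0 = P (-1)) (n : ℕ) :
    Q n = Q (-n) ∧ P n = P (-n - 1) := by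
  induction n with
  | zero => simpa using h0
  | succ m ih =>
    obtain ⟨hQm, hPm⟩ := ih
    have hm : (0 : ℤ) ≤ m := m.cast_nonneg
    push_cast
    have hQ : Q (m + 1) = Q (-(m + 1)) := by
      rw [hQf m hm, hQm, hPm, neg_add', hQb (-m - 1) (by omega), sub_add_cancel]
    refine ⟨hQ, ?_⟩
    have hPf' := hPf (m + 1) (by omega)
    have hbf' := hbf (m + 1) (by omega)
    rw [add_sub_cancel_right] at hPf' hbf'
    rw [hPf', hbf', hPm, hQ, neg_add', hPb (-m - 1) (by omega), hbb (-m - 1) (by omega)]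

end Reflection

theorem stmt_7_general (N : ℤ)
    (r : ℤ)
    (P Q b : ℤ → ℤ)
    (hP1 : P (-1) = if 2 ∣ r then r - 1 else r)
    (hQ0 : Q 0 = 2)
    (hbf : ∀ i : ℤ, 0 ≤ i → b i = Int.fdiv (r + P (i - 1)) (Q i))
    (hPf : ∀ i : ℤ, 0 ≤ i → P i = b i * Q i - P (i - 1))
    (hQf : ∀ i : ℤ, 0 ≤ i → Q (i + 1) = Int.fdiv (N - P i ^ 2) (Q i))
    (hQb : ∀ i : ℤ, i ≤ -1 → Q i = Int.fdiv (N - P i ^ 2) (Q (i + 1)))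
    (hbb : ∀ i : ℤ, i ≤ -1 → b i = Int.fdiv (r + P i) (Q i))
    (hPb : ∀ i : ℤ, i ≤ -1 → P (i - 1) = b i * Q i - P i) :
    ∀ i : ℤ, Q i = Q (-i) := by
  have hP0 : P 0 = P (-1) := by
    have hP1' : P (-1) = r ∨ P (-1) = r - 1 := by split_ifs at hP1 <;> omega
    rw [hPf 0 le_rfl, hbf 0 le_rfl, hQ0, zero_sub]
    exact fdiv_two_mul_two_sub_eq_self hP1'
  exact Int.apply_eq_apply_neg_of_forall_nat fun n ↦
    (Q_eq_Q_neg_and_P_eq_P_neg_sub_one hbf hPf hQf hQb hbb hPb hP0 n).1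

/-- Two-sided continued fraction data of the normalized square root of `N`:
`N ≡ 1 (mod 4)` is positive and not a perfect square, `r = ⌊√N⌋`,
`P (-1) = r - 1` if `r` is even and `r` otherwise, `Q 0 = 2`, and the forward
(`i ≥ 0`) and backward (`i ≤ -1`) recursions (with `Int.fdiv` the floor
division on `ℤ`, so that `Int.fdiv x y = ⌊x / y⌋`). -/
theorem stmt_7 (N : ℤ) (hNpos : 0 < N) (hN4 : N % 4 = 1) (hNsq : ¬ IsSquare N)
    (r : ℤ) (hr : r = ⌊Real.sqrt (N : ℝ)⌋)
    (P Q b : ℤ → ℤ)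
    (hP1 : P (-1) = if 2 ∣ r then r - 1 else r)
    (hQ0 : Q 0 = 2)
    (hbf : ∀ i : ℤ, 0 ≤ i → b i = Int.fdiv (r + P (i - 1)) (Q i))
    (hPf : ∀ i : ℤ, 0 ≤ i → P i = b i * Q i - P (i - 1))
    (hQf : ∀ i : ℤ, 0 ≤ i → Q (i + 1) = Int.fdiv (N - P i ^ 2) (Q i))
    (hQb : ∀ i : ℤ, i ≤ -1 → Q i = Int.fdiv (N - P i ^ 2) (Q (i + 1)))
    (hbb : ∀ i : ℤ, i ≤ -1 → b i = Int.fdiv (r + P i) (Q i))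
    (hPb : ∀ i : ℤ, i ≤ -1 → P (i - 1) = b i * Q i - P i) :
    ∀ i : ℤ, Q i = Q (-i) :=
  stmt_7_general N r P Q b hP1 hQ0 hbf hPf hQf hQb hbb hPb
end

section
/- The two-sided continued fraction expansion of the normalized square root of N is palindromic about the index 0: for all i ∈ ℤ, P_{−1−i} = P_i and b_{−i} = b_i. (This is the symmetry of the periodic continued fraction expansion corresponding to the unit reduced form, as in Cohen's lemma, made explicit for the normalized square root.) -/
/-!
The choice of `P (-1)` makes `2 ⌊(r + P (-1)) / 2⌋ - P (-1) = P (-1)`, i.e. `P 0 = P (-1)`.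
Given this, reading the expansion backwards is again a forward expansion: the backward recursion
at index `-i` is the forward recursion for `i ↦ (P (-1 - i), Q (-i), b (-i))`. The forward
recursion is determined by `P (-1)` and `Q 0`, which the reflected expansion shares with the
original one, so the two coincide.
-/

def IsForwardExpansion (N r : ℤ) (P Q b : ℤ → ℤ) : Prop :=
  ∀ i : ℤ, 0 ≤ i →
    b i = Int.fdiv (r + P (i - 1)) (Q i) ∧ P i = b i * Q i - P (i - 1) ∧
      Q (i + 1) = Int.fdiv (N - P i ^ 2) (Q i)

def IsBackwardExpansion (N r : ℤ) (P Q b : ℤ → ℤ) : Prop :=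
  ∀ i : ℤ, i ≤ -1 →
    Q i = Int.fdiv (N - P i ^ 2) (Q (i + 1)) ∧ b i = Int.fdiv (r + P i) (Q i) ∧
      P (i - 1) = b i * Q i - P i

namespace IsForwardExpansion

variable {N r : ℤ} {P Q b P' Q' b' : ℤ → ℤ}

theorem eq_of_init (hf : IsForwardExpansion N r P Q b) (hf' : IsForwardExpansion N r P' Q' b')
    (hP : P (-1) = P' (-1)) (hQ : Q 0 = Q' 0) {i : ℤ} (hi : 0 ≤ i) :
    P i = P' i ∧ b i = b' i ∧ Q (i + 1) = Q' (i + 1) := by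
  induction i, hi using Int.leInduction with
  | base =>
    obtain ⟨hb, hP0, hQ1⟩ := hf 0 le_rfl
    obtain ⟨hb', hP0', hQ1'⟩ := hf' 0 le_rfl
    have hb0 : b 0 = b' 0 := by rw [hb, hb', zero_sub, hP, hQ]
    refine ⟨by rw [hP0, hP0', hb0, hQ, zero_sub, hP], hb0, ?_⟩
    rw [hQ1, hQ1', hP0, hP0', hb0, hQ, zero_sub, hP]
  | succ i hi ih =>
    obtain ⟨hPi, -, hQi⟩ := ih
    obtain ⟨hb, hPs, hQs⟩ := hf (i + 1) (by omega)
    obtain ⟨hb', hPs', hQs'⟩ := hf' (i + 1) (by omega)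
    rw [add_sub_cancel_right] at hb hb' hPs hPs'
    have hbs : b (i + 1) = b' (i + 1) := by rw [hb, hb', hPi, hQi]
    have hPs'' : P (i + 1) = P' (i + 1) := by rw [hPs, hPs', hbs, hQi, hPi]
    exact ⟨hPs'', hbs, by rw [hQs, hQs', hPs'', hQi]⟩

end IsForwardExpansion

theorem IsBackwardExpansion.isForwardExpansion_reflect {N r : ℤ} {P Q b : ℤ → ℤ}
    (hf : IsForwardExpansion N r P Q b) (hb : IsBackwardExpansion N r P Q b)
    (hP0 : P 0 = P (-1)) :
    IsForwardExpansion N r (fun i => P (-1 - i)) (fun i => Q (-i)) (fun i => b (-i)) := by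
  intro i hi
  have hQ : Q (-(i + 1)) = Int.fdiv (N - P (-1 - i) ^ 2) (Q (-i)) := by
    have h := (hb (-(i + 1)) (by omega)).1
    rwa [show -(i + 1) + 1 = -i by ring, congrArg P (show -(i + 1) = -1 - i by ring)] at h
  rcases hi.eq_or_lt with rfl | hi
  · obtain ⟨hb0, hP0', -⟩ := hf 0 le_rfl
    simp only [neg_zero, sub_zero, zero_sub, sub_neg_eq_add, neg_add_cancel] at hb0 hP0' hQ ⊢
    exact ⟨by rw [hb0, hP0], by rw [hP0']; ring, hQ⟩
  · obtain ⟨-, hbi, hPi⟩ := hb (-i) (by omega)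
    have e : -1 - (i - 1) = -i := by ring
    have e' : -i - 1 = -1 - i := by ring
    rw [e'] at hPi
    simp only [e]
    exact ⟨hbi, hPi, hQ⟩

theorem fdiv_two_mul_two_sub_of_parity {r p : ℤ} (hp : p = if 2 ∣ r then r - 1 else r) :
    Int.fdiv (r + p) 2 * 2 - p = p := by
  rw [Int.fdiv_eq_ediv_of_nonneg _ (by norm_num)]
  split_ifs at hp <;> omega

theorem stmt_8_general (N : ℤ)
    (r : ℤ)
    (P Q b : ℤ → ℤ)
    (hP1 : P (-1) = if 2 ∣ r then r - 1 else r)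
    (hQ0 : Q 0 = 2)
    (hbf : ∀ i : ℤ, 0 ≤ i → b i = Int.fdiv (r + P (i - 1)) (Q i))
    (hPf : ∀ i : ℤ, 0 ≤ i → P i = b i * Q i - P (i - 1))
    (hQf : ∀ i : ℤ, 0 ≤ i → Q (i + 1) = Int.fdiv (N - P i ^ 2) (Q i))
    (hQb : ∀ i : ℤ, i ≤ -1 → Q i = Int.fdiv (N - P i ^ 2) (Q (i + 1)))
    (hbb : ∀ i : ℤ, i ≤ -1 → b i = Int.fdiv (r + P i) (Q i))
    (hPb : ∀ i : ℤ, i ≤ -1 → P (i - 1) = b i * Q i - P i) :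
    ∀ i : ℤ, P (-1 - i) = P i ∧ b (-i) = b i := by
  have hf : IsForwardExpansion N r P Q b := fun i hi => ⟨hbf i hi, hPf i hi, hQf i hi⟩
  have hb : IsBackwardExpansion N r P Q b := fun i hi => ⟨hQb i hi, hbb i hi, hPb i hi⟩
  have hP0 : P 0 = P (-1) := by
    rw [hPf 0 le_rfl, hbf 0 le_rfl, hQ0, zero_sub]
    exact fdiv_two_mul_two_sub_of_parity hP1
  have symm_of_nonneg : ∀ i : ℤ, 0 ≤ i → P (-1 - i) = P i ∧ b (-i) = b i := fun i hi =>
    let h := (hb.isForwardExpansion_reflect hf hP0).eq_of_init hf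
      (by simp [hP0]) (by simp) hi
    ⟨h.1, h.2.1⟩
  intro i
  rcases le_or_gt 0 i with hi | hi
  · exact symm_of_nonneg i hi
  · have hP := (symm_of_nonneg (-1 - i) (by omega)).1
    have hb := (symm_of_nonneg (-i) (by omega)).2
    rw [sub_sub_cancel] at hP
    rw [neg_neg] at hb
    exact ⟨hP.symm, hb.symm⟩

/-- Two-sided continued fraction data of the normalized square root of `N`:
`N ≡ 1 (mod 4)` is positive and not a perfect square, `r = ⌊√N⌋`,
`P (-1) = r - 1` if `r` is even and `r` otherwise, `Q 0 = 2`, and the forward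
(`i ≥ 0`) and backward (`i ≤ -1`) recursions (with `Int.fdiv` the floor
division on `ℤ`, so that `Int.fdiv x y = ⌊x / y⌋`). -/
theorem stmt_8 (N : ℤ) (hNpos : 0 < N) (hN4 : N % 4 = 1) (hNsq : ¬ IsSquare N)
    (r : ℤ) (hr : r = ⌊Real.sqrt (N : ℝ)⌋)
    (P Q b : ℤ → ℤ)
    (hP1 : P (-1) = if 2 ∣ r then r - 1 else r)
    (hQ0 : Q 0 = 2)
    (hbf : ∀ i : ℤ, 0 ≤ i → b i = Int.fdiv (r + P (i - 1)) (Q i))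
    (hPf : ∀ i : ℤ, 0 ≤ i → P i = b i * Q i - P (i - 1))
    (hQf : ∀ i : ℤ, 0 ≤ i → Q (i + 1) = Int.fdiv (N - P i ^ 2) (Q i))
    (hQb : ∀ i : ℤ, i ≤ -1 → Q i = Int.fdiv (N - P i ^ 2) (Q (i + 1)))
    (hbb : ∀ i : ℤ, i ≤ -1 → b i = Int.fdiv (r + P i) (Q i))
    (hPb : ∀ i : ℤ, i ≤ -1 → P (i - 1) = b i * Q i - P i) :
    ∀ i : ℤ, P (-1 - i) = P i ∧ b (-i) = b i :=
  stmt_8_general N r P Q b hP1 hQ0 hbf hPf hQf hQb hbb hPb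
end

section
/- (Reversal Lemma) Fix i ≥ 0. Define real numbers y_0 = (√N + P_{i+1})/Q_{i+1}, c_0 = ⌊y_0⌋, and for j ≥ 1, y_j = 1/(y_{j-1} − c_{j-1}) with c_j = ⌊y_j⌋. Then c_0 = b_{i+1}, and for all j with 0 ≤ j ≤ i one has y_j = (√N + P_{i−j+1})/Q_{i−j+1}; that is, applying the same continued fraction recursion after exchanging P_{i+1} for P_i in the numerator steps the expansion backwards. -/
private lemma fdiv_bd (a q : ℤ) (hq : 0 < q) :
    (a.fdiv q) * q ≤ a ∧ a < (a.fdiv q) * q + q := by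
  rw [Int.fdiv_eq_ediv_of_nonneg a hq.le]
  have h1 := Int.emod_nonneg a hq.ne'
  have h2 := Int.emod_lt_of_pos a hq
  have h3 := Int.mul_ediv_add_emod a q
  constructor <;> nlinarith

set_option maxHeartbeats 1000000 in
/-- Two-sided continued fraction data of the normalized square root of `N`:
`N ≡ 1 (mod 4)` is positive and not a perfect square, `r = ⌊√N⌋`,
`P (-1) = r - 1` if `r` is even and `r` otherwise, `Q 0 = 2`, and the forward
(`i ≥ 0`) and backward (`i ≤ -1`) recursions (with `Int.fdiv` the floor
division on `ℤ`, so that `Int.fdiv x y = ⌊x / y⌋`). -/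
theorem stmt_9 (N : ℤ) (hNpos : 0 < N) (hN4 : N % 4 = 1) (hNsq : ¬ IsSquare N)
    (r : ℤ) (hr : r = ⌊Real.sqrt (N : ℝ)⌋)
    (P Q b : ℤ → ℤ)
    (hP1 : P (-1) = if 2 ∣ r then r - 1 else r)
    (hQ0 : Q 0 = 2)
    (hbf : ∀ i : ℤ, 0 ≤ i → b i = Int.fdiv (r + P (i - 1)) (Q i))
    (hPf : ∀ i : ℤ, 0 ≤ i → P i = b i * Q i - P (i - 1))
    (hQf : ∀ i : ℤ, 0 ≤ i → Q (i + 1) = Int.fdiv (N - P i ^ 2) (Q i))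
    (hQb : ∀ i : ℤ, i ≤ -1 → Q i = Int.fdiv (N - P i ^ 2) (Q (i + 1)))
    (hbb : ∀ i : ℤ, i ≤ -1 → b i = Int.fdiv (r + P i) (Q i))
    (hPb : ∀ i : ℤ, i ≤ -1 → P (i - 1) = b i * Q i - P i) (i : ℤ) (hi : 0 ≤ i)
    (y : ℕ → ℝ) (c : ℕ → ℤ)
    (hy0 : y 0 = (Real.sqrt (N : ℝ) + (P (i + 1) : ℝ)) / (Q (i + 1) : ℝ))
    (hc : ∀ j : ℕ, c j = ⌊y j⌋)
    (hyr : ∀ j : ℕ, y (j + 1) = 1 / (y j - (c j : ℝ))) :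
    c 0 = b (i + 1) ∧
      ∀ j : ℕ, (j : ℤ) ≤ i →
        y j = (Real.sqrt (N : ℝ) + (P (i - (j : ℤ) + 1) : ℝ)) / (Q (i - (j : ℤ) + 1) : ℝ) := by
  set s : ℝ := Real.sqrt (N : ℝ) with hs
  -- basic facts about N and r
  have hN5 : 5 ≤ N := by
    by_contra h
    have : N = 1 := by omega
    exact hNsq (this ▸ IsSquare.one)
  have hsnn : (0:ℝ) ≤ s := Real.sqrt_nonneg _
  have hs2 : s ^ 2 = (N : ℝ) := Real.sq_sqrt (by positivity)
  have hr2 : 2 ≤ r := by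
    rw [hr]
    refine Int.le_floor.2 ?_
    have : (2:ℝ) ≤ s := by
      rw [show (2:ℝ) = Real.sqrt 4 by
        rw [show (4:ℝ) = 2^2 by norm_num, Real.sqrt_sq]; norm_num]
      exact Real.sqrt_le_sqrt (by exact_mod_cast by omega)
    exact_mod_cast this
  have hrs : (r : ℝ) ≤ s := hr ▸ Int.floor_le s
  have hsr1 : s < (r : ℝ) + 1 := by
    have := hr ▸ Int.lt_floor_add_one s
    push_cast at this ⊢; linarith
  have hr2R : (2:ℝ) ≤ (r:ℝ) := by exact_mod_cast hr2
  have hr2N : r ^ 2 < N := by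
    have h1 : (r:ℝ)^2 ≤ (N:ℝ) := by nlinarith [hs2, hrs, hr2R, hsnn]
    have h2 : r ^ 2 ≤ N := by exact_mod_cast h1
    rcases lt_or_eq_of_le h2 with h | h
    · exact h
    · exact absurd ⟨r, by rw [← h]; ring⟩ hNsq
  have hN1r : N < (r + 1) ^ 2 := by
    have h1 : (N:ℝ) < ((r:ℝ)+1)^2 := by nlinarith [hs2, hsr1, hsnn]
    exact_mod_cast h1
  have hrsS : (r : ℝ) < s := by
    by_contra h
    push_neg at h
    have h1 : (N:ℝ) ≤ (r:ℝ)^2 := by nlinarith [hs2, hsnn, h, hr2R]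
    have h2 : N ≤ r ^ 2 := by exact_mod_cast h1
    omega
  -- the main integer invariant
  have key : ∀ n : ℤ, 0 ≤ n →
      0 < Q n ∧ Q n ∣ N - P (n-1)^2 ∧ P (n-1) ≤ r ∧ r < P (n-1) + Q n ∧
        Q n ≤ r + P (n-1) := by
    refine Int.le_induction ?_ ?_
    ·
      simp only [zero_sub, hQ0]
      have hPodd : Odd (P (-1)) ∧ P (-1) ≤ r ∧ r - 1 ≤ P (-1) := by
        rw [hP1]
        by_cases h2 : (2:ℤ) ∣ r
        · rw [if_pos h2]
          exact ⟨by rcases h2 with ⟨t, ht⟩; exact ⟨t - 1, by omega⟩, by omega, by omega⟩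
        · rw [if_neg h2]
          exact ⟨by rcases Int.even_or_odd r with h | h;
                    · exact absurd h.two_dvd h2
                    · exact h, le_refl _, by omega⟩
      obtain ⟨hodd, hle, hge⟩ := hPodd
      refine ⟨by norm_num, ?_, hle, by omega, by omega⟩
      have hNodd : Odd N := by
        rcases Int.even_or_odd N with h | h
        · exfalso; rcases h with ⟨t, ht⟩; omega
        · exact h
      have : Even (N - P (-1) ^ 2) := by
        refine Odd.sub_odd hNodd ?_
        exact hodd.pow
      exact this.two_dvd
    · intro n hn ih
      obtain ⟨hQpos, hdvd, hPle, hlt, hle⟩ := ih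
      have hb := hbf n hn
      have hP := hPf n hn
      have hbnd := fdiv_bd (r + P (n-1)) (Q n) hQpos
      rw [← hb] at hbnd
      obtain ⟨hbnd1, hbnd2⟩ := hbnd
      have hb1 : 1 ≤ b n := by
        by_contra hb0
        push_neg at hb0
        have h0 : b n * Q n ≤ 0 :=
          mul_nonpos_iff.mpr (Or.inr ⟨by omega, hQpos.le⟩)
        linarith
      have hPnle : P n ≤ r := by rw [hP]; linarith
      have hrPn : r - P n < Q n := by rw [hP]; linarith
      have hQlePn : Q n - P n ≤ r := by
        have hbb1 : Q n ≤ b n * Q n := le_mul_of_one_le_left hQpos.le hb1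
        rw [hP]; linarith
      have hPge : 1 - r ≤ P n := by linarith
      have hPsq : P n ^ 2 < N := by
        nlinarith [mul_nonneg (by linarith : (0:ℤ) ≤ r - P n)
          (by linarith : (0:ℤ) ≤ r + P n), hr2N]
      have hdvd' : Q n ∣ N - P n ^ 2 := by
        have heq : N - P n ^ 2 = (N - P (n-1)^2) + ((P (n-1) - P n) * b n) * Q n := by
          rw [hP]; ring
        rw [heq]
        exact dvd_add hdvd (Dvd.intro_left _ rfl)
      have hQn1 : Q (n+1) * Q n = N - P n ^ 2 := by
        rw [hQf n hn, Int.fdiv_eq_ediv_of_nonneg _ hQpos.le]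
        exact Int.ediv_mul_cancel hdvd'
      have hQ1pos : 0 < Q (n+1) := by
        by_contra hq
        push_neg at hq
        have h0 : Q (n+1) * Q n ≤ 0 := mul_nonpos_iff.mpr (Or.inr ⟨hq, hQpos.le⟩)
        linarith
      have hQlePn' : Q n ≤ r + P n := by linarith
      refine ⟨hQ1pos, ?_, ?_, ?_, ?_⟩ <;> simp only [add_sub_cancel_right]
      · exact ⟨Q n, hQn1.symm⟩
      · exact hPnle
      · by_contra h
        push_neg at h
        have h1 : Q (n+1) ≤ r - P n := by omega
        have h2 : Q (n+1) * Q n ≤ (r - P n) * (r + P n) :=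
          mul_le_mul h1 hQlePn' hQpos.le (by linarith)
        nlinarith [h2, hQn1, hr2N]
      · by_contra h
        push_neg at h
        have h1 : r + P n + 1 ≤ Q (n+1) := by omega
        have h2 : r - P n + 1 ≤ Q n := by omega
        have h3 : (r + P n + 1) * (r - P n + 1) ≤ Q (n+1) * Q n :=
          mul_le_mul h1 h2 (by linarith) hQ1pos.le
        nlinarith [h3, hQn1, hN1r]
  -- floor computation
  have hfloor : ∀ k : ℤ, 0 ≤ k → ⌊(s + (P (k+1) : ℝ)) / (Q (k+1) : ℝ)⌋ = b (k+1) := by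
    intro k hk
    obtain ⟨hQ1pos, _, hPkle, hlt1, _⟩ := key (k+1) (by omega)
    simp only [add_sub_cancel_right] at hPkle hlt1
    have hPrel : P (k+1) = b (k+1) * Q (k+1) - P k := by
      have := hPf (k+1) (by omega)
      simpa using this
    have hQR : (0:ℝ) < (Q (k+1) : ℝ) := by exact_mod_cast hQ1pos
    rw [Int.floor_eq_iff]
    constructor
    · rw [le_div_iff₀ hQR]
      have : (P (k+1) : ℝ) = (b (k+1) : ℝ) * (Q (k+1) : ℝ) - (P k : ℝ) := by
        exact_mod_cast hPrel
      have hPks : (P k : ℝ) ≤ s := le_trans (by exact_mod_cast hPkle) hrs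
      linarith
    · rw [div_lt_iff₀ hQR]
      have h1 : (P (k+1) : ℝ) = (b (k+1) : ℝ) * (Q (k+1) : ℝ) - (P k : ℝ) := by
        exact_mod_cast hPrel
      have h2 : (r : ℝ) + 1 ≤ (P k : ℝ) + (Q (k+1) : ℝ) := by
        exact_mod_cast (by omega : r + 1 ≤ P k + Q (k+1))
      have : s < (P k : ℝ) + (Q (k+1) : ℝ) := lt_of_lt_of_le hsr1 h2
      nlinarith [h1, this, hQR]
  constructor
  · rw [hc 0, hy0]; exact hfloor i hi
  · intro j
    induction j with
    | zero =>
      intro _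
      simpa using hy0
    | succ j ih =>
      intro hji
      have hj1 : (j:ℤ) + 1 ≤ i := by exact_mod_cast hji
      have hj : (j:ℤ) ≤ i := by omega
      have hk0 : 0 ≤ i - (j:ℤ) := by omega
      have hyj : y j = (s + (P (i - (j:ℤ) + 1) : ℝ)) / (Q (i - (j:ℤ) + 1) : ℝ) := ih hj
      have hcj : c j = b (i - (j:ℤ) + 1) := by
        rw [hc j, hyj]
        exact hfloor (i - (j:ℤ)) hk0
      obtain ⟨hQkpos, _, hPk1le, hltk, _⟩ := key (i - (j:ℤ) + 1) (by omega)
      simp only [add_sub_cancel_right] at hPk1le hltk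
      obtain ⟨hQkpos0, hdvdk, _, _, _⟩ := key (i - (j:ℤ)) hk0
      have hPrel : P (i - (j:ℤ) + 1) = b (i - (j:ℤ) + 1) * Q (i - (j:ℤ) + 1) - P (i - (j:ℤ)) := by
        simpa using hPf (i - (j:ℤ) + 1) (by omega)
      have hQprod : Q (i - (j:ℤ) + 1) * Q (i - (j:ℤ)) = N - P (i - (j:ℤ)) ^ 2 := by
        have hdvd' : Q (i - (j:ℤ)) ∣ N - P (i - (j:ℤ)) ^ 2 := by
          have hPk := hPf (i - (j:ℤ)) hk0
          have heq : N - P (i - (j:ℤ)) ^ 2 = (N - P (i - (j:ℤ) - 1)^2)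
              + ((P (i - (j:ℤ) - 1) - P (i - (j:ℤ))) * b (i - (j:ℤ))) * Q (i - (j:ℤ)) := by
            rw [hPk]; ring
          rw [heq]
          exact dvd_add hdvdk (Dvd.intro_left _ rfl)
        rw [hQf (i - (j:ℤ)) hk0, Int.fdiv_eq_ediv_of_nonneg _ hQkpos0.le]
        exact Int.ediv_mul_cancel hdvd'
      have hQkR : (0:ℝ) < (Q (i - (j:ℤ)) : ℝ) := by exact_mod_cast hQkpos0
      have hQk1R : (0:ℝ) < (Q (i - (j:ℤ) + 1) : ℝ) := by exact_mod_cast hQkpos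
      have hsPk : (P (i - (j:ℤ)) : ℝ) < s := lt_of_le_of_lt (by exact_mod_cast hPk1le) hrsS
      have hQprodR : (Q (i - (j:ℤ) + 1) : ℝ) * (Q (i - (j:ℤ)) : ℝ)
          = (N : ℝ) - (P (i - (j:ℤ)) : ℝ)^2 := by exact_mod_cast hQprod
      have hPrelR : (P (i - (j:ℤ) + 1) : ℝ)
          = (b (i - (j:ℤ) + 1) : ℝ) * (Q (i - (j:ℤ) + 1) : ℝ) - (P (i - (j:ℤ)) : ℝ) := by
        exact_mod_cast hPrel
      have hmain : y (j + 1) = (s + (P (i - (j:ℤ)) : ℝ)) / (Q (i - (j:ℤ)) : ℝ) := by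
        rw [hyr j, hcj, hyj]
        have h1 : (s + (P (i - (j:ℤ) + 1) : ℝ)) / (Q (i - (j:ℤ) + 1) : ℝ)
            - (b (i - (j:ℤ) + 1) : ℝ)
            = (s - (P (i - (j:ℤ)) : ℝ)) / (Q (i - (j:ℤ) + 1) : ℝ) := by
          rw [sub_eq_iff_eq_add, div_add' _ _ _ hQk1R.ne', div_eq_div_iff hQk1R.ne' hQk1R.ne']
          linear_combination (Q (i - (j:ℤ) + 1) : ℝ) * hPrelR
        rw [h1, one_div, inv_div, div_eq_div_iff (by linarith : (0:ℝ) < s - (P (i - (j:ℤ)) : ℝ)).ne' hQkR.ne']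
        linear_combination hQprodR - hs2
      rw [hmain]
      push_cast
      rw [show i - ((j:ℤ) + 1) + 1 = i - (j:ℤ) by ring]
end

section
/- (Theorem 5, even period case) Suppose the minimal period π is even and set s = π/2. Then: (a) Q_{s+i} = Q_{s−i} for all i ∈ ℤ; (b) Q_s ≠ Q_0; (c) P_s = P_{s−1}; and (d) Q_s divides 2N. In particular the halfway point of the period is a symmetry point yielding a divisor of 2N. -/
/-!
Both the forward and the backward recursion are driven by the same map on the states
`(P (i - 1), Q i)`, and the initial value `P (-1)` is chosen so that `P 0 = P (-1)`; hence the
two-sided expansion is reflected about `0`: `Q (-i) = Q i` and `P (-i - 1) = P i`. Combined with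
the period `2 s`, this reflection becomes one about `s`, which gives (a) and (c). Along the
expansion `Q i` divides `N - P i ^ 2` and, `N` not being a square, never vanishes; and (c) gives
`2 P s = b s Q s`, whence `Q s ∣ 2 N`.
Finally, if `Q s = 2` then `P s = ⌊(r + P s) / 2⌋` is an odd number in `{r - 1, r}`, that is
`P (-1)`; so the state at `s` is the state at `0`, and `s < π` would be a period.
-/

lemma Function.Periodic.of_nonneg {α : Type*} {f : ℤ → α} {T s : ℤ}
    (hT : Function.Periodic f T) (hTpos : 0 < T) (h : ∀ n, 0 ≤ n → f (n + s) = f n) :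
    Function.Periodic f s := by
  intro i
  have hshift : 0 ≤ i + |i| * T := by nlinarith [abs_nonneg i, neg_abs_le i]
  have hkT : Function.Periodic f (|i| * T) := by simpa using hT.int_mul |i|
  rw [← hkT i, ← h _ hshift, ← hkT (i + s)]
  ring_nf

lemma Function.Even.eq_of_periodic {α : Type*} {f : ℤ → α} {s : ℤ}
    (hf : Function.Even f) (hper : Function.Periodic f (2 * s)) (i : ℤ) :
    f (s + i) = f (s - i) := by
  rw [← hper.sub_eq, ← hf]
  ring_nf

lemma Int.dvd_sub_sq_of_add_eq_mul {N p p' c q : ℤ} (hq : q ∣ N - p ^ 2)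
    (hadd : p' + p = c * q) : q ∣ N - p' ^ 2 := by
  obtain ⟨k, hk⟩ := hq
  exact ⟨k - (p' - p) * c, by linear_combination hk - (p' - p) * hadd⟩

lemma Int.two_dvd_sub_sq_iff {N p : ℤ} (hN : Odd N) : 2 ∣ N - p ^ 2 ↔ Odd p := by
  rw [← even_iff_two_dvd, Int.even_sub, Int.even_pow' two_ne_zero, ← Int.not_odd_iff_even,
    ← Int.not_odd_iff_even, not_iff_not, iff_true_intro hN, true_iff]

namespace SqrtContinuedFraction

variable {N r : ℤ} {P Q b : ℤ → ℤ}
  (hbf : ∀ i : ℤ, 0 ≤ i → b i = Int.fdiv (r + P (i - 1)) (Q i))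
  (hPf : ∀ i : ℤ, 0 ≤ i → P i = b i * Q i - P (i - 1))
  (hQf : ∀ i : ℤ, 0 ≤ i → Q (i + 1) = Int.fdiv (N - P i ^ 2) (Q i))
  (hQb : ∀ i : ℤ, i ≤ -1 → Q i = Int.fdiv (N - P i ^ 2) (Q (i + 1)))
  (hbb : ∀ i : ℤ, i ≤ -1 → b i = Int.fdiv (r + P i) (Q i))
  (hPb : ∀ i : ℤ, i ≤ -1 → P (i - 1) = b i * Q i - P i)

include hbf hPf in
lemma P_zero_eq_of_Q_zero (hP1 : P (-1) = if 2 ∣ r then r - 1 else r) (hQ0 : Q 0 = 2) :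
    P 0 = P (-1) := by
  have hP0 := hPf 0 le_rfl
  rw [hbf 0 le_rfl, hQ0, Int.fdiv_eq_ediv_of_nonneg _ zero_le_two] at hP0
  simp only [zero_sub] at hP0
  split_ifs at hP1 <;> omega

include hbf hPf hQf hQb hbb hPb in
lemma reflect_of_nonneg (hP0 : P 0 = P (-1)) :
    ∀ n, 0 ≤ n → P (-n - 1) = P n ∧ Q (-n) = Q n := by
  intro n hn
  induction n, hn using Int.leInduction with
  | base => simpa using hP0.symm
  | succ n hn ih =>
    obtain ⟨ihP, ihQ⟩ := ih
    have hQ : Q (-n - 1) = Q (n + 1) := by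
      rw [hQb _ (by omega), sub_add_cancel, ihP, ihQ, hQf n hn]
    have hb : b (-n - 1) = b (n + 1) := by
      rw [hbb _ (by omega), hbf _ (by omega), add_sub_cancel_right, ihP, hQ]
    refine ⟨?_, by rw [neg_add', hQ]⟩
    rw [show -(n + 1) - 1 = -n - 1 - 1 by ring, hPb _ (by omega), hb, hQ, ihP,
      hPf (n + 1) (by omega), add_sub_cancel_right]

include hbf hPf hQf hQb hbb hPb in
lemma reflect (hP0 : P 0 = P (-1)) :
    Function.Even Q ∧ ∀ i, P (-i - 1) = P i := by
  have h := reflect_of_nonneg hbf hPf hQf hQb hbb hPb hP0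
  constructor
  · intro i
    rcases le_or_gt 0 i with hi | hi
    · exact (h i hi).2
    · simpa using ((h (-i) (by omega)).2).symm
  · intro i
    rcases le_or_gt 0 i with hi | hi
    · exact (h i hi).1
    · simpa using ((h (-i - 1) (by omega)).1).symm

include hPf hQf in
lemma Q_ne_zero_and_dvd (hNsq : ¬ IsSquare N) (hQ0 : Q 0 ≠ 0) (h0 : Q 0 ∣ N - P 0 ^ 2) :
    ∀ n, 0 ≤ n → Q n ≠ 0 ∧ Q n ∣ N - P n ^ 2 := by
  intro n hn
  induction n, hn using Int.leInduction with
  | base => exact ⟨hQ0, h0⟩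
  | succ n hn ih =>
    have hprod : Q n * Q (n + 1) = N - P n ^ 2 := by
      rw [hQf n hn]; exact Int.mul_fdiv_cancel' ih.2
    refine ⟨fun hQ => hNsq ⟨P n, by linear_combination -hprod + Q n * hQ⟩, ?_⟩
    refine Int.dvd_sub_sq_of_add_eq_mul (Dvd.intro_left _ hprod) (c := b (n + 1)) ?_
    rw [hPf _ (by omega), add_sub_cancel_right, sub_add_cancel]

include hbf hPf in
lemma P_eq_P_neg_one_of_Q_eq_two (hN : Odd N) (hP1 : P (-1) = if 2 ∣ r then r - 1 else r)
    {s : ℤ} (hs : 0 ≤ s) (hQs : Q s = 2) (hPs : P s = P (s - 1)) (hdvd : Q s ∣ N - P s ^ 2) :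
    P s = P (-1) := by
  rw [hQs, Int.two_dvd_sub_sq_iff hN, Int.odd_iff] at hdvd
  have hfloor := hPf s hs
  rw [hbf s hs, ← hPs, hQs, Int.fdiv_eq_ediv_of_nonneg _ zero_le_two] at hfloor
  split_ifs at hP1 <;> omega

include hbf hPf hQf in
lemma shift_of_state_eq {s : ℤ} (hs : 0 ≤ s) (hP : P (s - 1) = P (-1)) (hQ : Q s = Q 0) :
    ∀ n, 0 ≤ n → P (n + s - 1) = P (n - 1) ∧ Q (n + s) = Q n := by
  intro n hn
  induction n, hn using Int.leInduction with
  | base => simpa using ⟨hP, hQ⟩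
  | succ n hn ih =>
    obtain ⟨ihP, ihQ⟩ := ih
    have hb : b (n + s) = b n := by
      rw [hbf _ (by omega), hbf n hn, ← ihP, ihQ]
    have hP' : P (n + s) = P n := by
      rw [hPf _ (by omega), hPf n hn, hb, ihQ, ihP]
    refine ⟨by rwa [add_right_comm, add_sub_cancel_right, add_sub_cancel_right], ?_⟩
    rw [add_right_comm, hQf _ (by omega), hQf n hn, hP', ihQ]

include hbf hPf hQf in
lemma periodic_of_state_eq {s T : ℤ} (hs : 0 ≤ s) (hP : P (s - 1) = P (-1)) (hQ : Q s = Q 0)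
    (hPT : Function.Periodic P T) (hQT : Function.Periodic Q T) (hT : 0 < T) :
    Function.Periodic P s ∧ Function.Periodic Q s := by
  have h := shift_of_state_eq hbf hPf hQf hs hP hQ
  refine ⟨hPT.of_nonneg hT fun n hn => ?_, hQT.of_nonneg hT fun n hn => (h n hn).2⟩
  simpa only [add_right_comm, add_sub_cancel_right] using (h (n + 1) (by omega)).1

end SqrtContinuedFraction

theorem stmt_10_general (N : ℤ) (hN4 : N % 4 = 1) (hNsq : ¬ IsSquare N)
    (r : ℤ)
    (P Q b : ℤ → ℤ)
    (hP1 : P (-1) = if 2 ∣ r then r - 1 else r)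
    (hQ0 : Q 0 = 2)
    (hbf : ∀ i : ℤ, 0 ≤ i → b i = Int.fdiv (r + P (i - 1)) (Q i))
    (hPf : ∀ i : ℤ, 0 ≤ i → P i = b i * Q i - P (i - 1))
    (hQf : ∀ i : ℤ, 0 ≤ i → Q (i + 1) = Int.fdiv (N - P i ^ 2) (Q i))
    (hQb : ∀ i : ℤ, i ≤ -1 → Q i = Int.fdiv (N - P i ^ 2) (Q (i + 1)))
    (hbb : ∀ i : ℤ, i ≤ -1 → b i = Int.fdiv (r + P i) (Q i))
    (hPb : ∀ i : ℤ, i ≤ -1 → P (i - 1) = b i * Q i - P i) (T : ℤ) (hTpos : 0 < T)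
    (hTper : ∀ i : ℤ, P (i + T) = P i ∧ Q (i + T) = Q i)
    (hTmin : ∀ k : ℤ, 0 < k → (∀ i : ℤ, P (i + k) = P i ∧ Q (i + k) = Q i) → T ≤ k)
    (hTeven : 2 ∣ T) (s : ℤ) (hs : s = T / 2) :
    (∀ i : ℤ, Q (s + i) = Q (s - i)) ∧ Q s ≠ Q 0 ∧ P s = P (s - 1) ∧ Q s ∣ 2 * N := by
  have hT : T = 2 * s := by omega
  have hPT : Function.Periodic P (2 * s) := hT ▸ fun i => (hTper i).1
  have hQT : Function.Periodic Q (2 * s) := hT ▸ fun i => (hTper i).2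
  have hN : Odd N := Int.odd_iff.mpr (by omega)
  have hP0 := SqrtContinuedFraction.P_zero_eq_of_Q_zero hbf hPf hP1 hQ0
  obtain ⟨hQeven, hPrefl⟩ := SqrtContinuedFraction.reflect hbf hPf hQf hQb hbb hPb hP0
  have hc : P s = P (s - 1) := by
    rw [← hPT.sub_eq, ← hPrefl (s - 1)]; ring_nf
  have hdvd : Q s ∣ N - P s ^ 2 := by
    refine (SqrtContinuedFraction.Q_ne_zero_and_dvd hPf hQf hNsq (by omega) ?_ s (by omega)).2
    rw [hQ0, Int.two_dvd_sub_sq_iff hN, hP0, hP1, Int.odd_iff]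
    split_ifs <;> omega
  refine ⟨hQeven.eq_of_periodic hQT, fun hQs => ?_, hc, ?_⟩
  · have hPs := SqrtContinuedFraction.P_eq_P_neg_one_of_Q_eq_two hbf hPf hN hP1 (by omega) (hQs.trans hQ0) hc hdvd
    obtain ⟨hPs, hQs⟩ := SqrtContinuedFraction.periodic_of_state_eq hbf hPf hQf (by omega) (hc ▸ hPs) hQs
      (hT ▸ hPT) (hT ▸ hQT) hTpos
    have := hTmin s (by omega) fun i => ⟨hPs i, hQs i⟩
    omega
  · have hPs : 2 * P s = b s * Q s := by linear_combination hPf s (by omega) + hc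
    exact ⟨2 * ((N - P s ^ 2) / Q s) + P s * b s, by
      linear_combination (-2 : ℤ) * Int.mul_ediv_cancel' hdvd + P s * hPs⟩

/-- Two-sided continued fraction data of the normalized square root of `N`:
`N ≡ 1 (mod 4)` is positive and not a perfect square, `r = ⌊√N⌋`,
`P (-1) = r - 1` if `r` is even and `r` otherwise, `Q 0 = 2`, and the forward
(`i ≥ 0`) and backward (`i ≤ -1`) recursions (with `Int.fdiv` the floor
division on `ℤ`, so that `Int.fdiv x y = ⌊x / y⌋`). -/
theorem stmt_10 (N : ℤ) (hNpos : 0 < N) (hN4 : N % 4 = 1) (hNsq : ¬ IsSquare N)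
    (r : ℤ) (hr : r = ⌊Real.sqrt (N : ℝ)⌋)
    (P Q b : ℤ → ℤ)
    (hP1 : P (-1) = if 2 ∣ r then r - 1 else r)
    (hQ0 : Q 0 = 2)
    (hbf : ∀ i : ℤ, 0 ≤ i → b i = Int.fdiv (r + P (i - 1)) (Q i))
    (hPf : ∀ i : ℤ, 0 ≤ i → P i = b i * Q i - P (i - 1))
    (hQf : ∀ i : ℤ, 0 ≤ i → Q (i + 1) = Int.fdiv (N - P i ^ 2) (Q i))
    (hQb : ∀ i : ℤ, i ≤ -1 → Q i = Int.fdiv (N - P i ^ 2) (Q (i + 1)))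
    (hbb : ∀ i : ℤ, i ≤ -1 → b i = Int.fdiv (r + P i) (Q i))
    (hPb : ∀ i : ℤ, i ≤ -1 → P (i - 1) = b i * Q i - P i) (T : ℤ) (hTpos : 0 < T)
    (hTper : ∀ i : ℤ, P (i + T) = P i ∧ Q (i + T) = Q i)
    (hTmin : ∀ k : ℤ, 0 < k → (∀ i : ℤ, P (i + k) = P i ∧ Q (i + k) = Q i) → T ≤ k)
    (hTeven : 2 ∣ T) (s : ℤ) (hs : s = T / 2) :
    (∀ i : ℤ, Q (s + i) = Q (s - i)) ∧ Q s ≠ Q 0 ∧ P s = P (s - 1) ∧ Q s ∣ 2 * N :=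
  stmt_10_general N hN4 hNsq r P Q b hP1 hQ0 hbf hPf hQf hQb hbb hPb T hTpos hTper hTmin hTeven s hs
end

section
/- (Theorem 5, odd period case) Suppose the minimal period π is odd and set s = ⌊π/2⌋ = (π−1)/2. Then: Q_{s+i+1} = Q_{s−i} for all i ∈ ℤ; and moreover either gcd(Q_s, N) is a nontrivial factor of N (i.e. 1 < gcd(Q_s, N) < N), or −1 is a quadratic residue modulo N (i.e. there exists an integer x with x² ≡ −1 (mod N)). -/
/-- Two-sided continued fraction data of the normalized square root of `N`:
`N ≡ 1 (mod 4)` is positive and not a perfect square, `r = ⌊√N⌋`,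
`P (-1) = r - 1` if `r` is even and `r` otherwise, `Q 0 = 2`, and the forward
(`i ≥ 0`) and backward (`i ≤ -1`) recursions (with `Int.fdiv` the floor
division on `ℤ`, so that `Int.fdiv x y = ⌊x / y⌋`). -/
theorem stmt_11 (N : ℤ) (hNpos : 0 < N) (hN4 : N % 4 = 1) (hNsq : ¬ IsSquare N)
    (r : ℤ) (hr : r = ⌊Real.sqrt (N : ℝ)⌋)
    (P Q b : ℤ → ℤ)
    (hP1 : P (-1) = if 2 ∣ r then r - 1 else r)
    (hQ0 : Q 0 = 2)
    (hbf : ∀ i : ℤ, 0 ≤ i → b i = Int.fdiv (r + P (i - 1)) (Q i))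
    (hPf : ∀ i : ℤ, 0 ≤ i → P i = b i * Q i - P (i - 1))
    (hQf : ∀ i : ℤ, 0 ≤ i → Q (i + 1) = Int.fdiv (N - P i ^ 2) (Q i))
    (hQb : ∀ i : ℤ, i ≤ -1 → Q i = Int.fdiv (N - P i ^ 2) (Q (i + 1)))
    (hbb : ∀ i : ℤ, i ≤ -1 → b i = Int.fdiv (r + P i) (Q i))
    (hPb : ∀ i : ℤ, i ≤ -1 → P (i - 1) = b i * Q i - P i) (T : ℤ) (hTpos : 0 < T)
    (hTper : ∀ i : ℤ, P (i + T) = P i ∧ Q (i + T) = Q i)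
    (hTmin : ∀ k : ℤ, 0 < k → (∀ i : ℤ, P (i + k) = P i ∧ Q (i + k) = Q i) → T ≤ k)
    (hTodd : ¬ 2 ∣ T) (s : ℤ) (hs : s = (T - 1) / 2) :
    (∀ i : ℤ, Q (s + i + 1) = Q (s - i)) ∧
      ((1 < Int.gcd (Q s) N ∧ (Int.gcd (Q s) N : ℤ) < N) ∨ ∃ x : ℤ, N ∣ x ^ 2 + 1) := by
  -- P 0 = P (-1)
  have hP0 : P 0 = P (-1) := by
    have h1 := hPf 0 le_rfl
    have h2 := hbf 0 le_rfl
    rw [show (0:ℤ) - 1 = -1 by ring, hQ0] at h1 h2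
    rw [Int.fdiv_eq_ediv_of_nonneg _ (by norm_num)] at h2
    by_cases hre : 2 ∣ r <;> simp [hP1, hre] at * <;> omega
  -- P 0 is odd
  have hP0odd : P 0 % 2 = 1 := by
    by_cases hre : 2 ∣ r <;> simp [hP0, hP1, hre] <;> omega
  -- symmetry
  have sym : ∀ i : ℤ, 0 ≤ i → Q (-i) = Q i ∧ P (-i - 1) = P i := by
    refine fun i hi =>
      Int.le_induction (motive := fun j _ => Q (-j) = Q j ∧ P (-j - 1) = P j) ?_ ?_ i hi
    · constructor
      · norm_num
      · rw [show (-(0:ℤ) - 1) = -1 by ring]; exact hP0.symm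
    · intro i hi ih
      obtain ⟨ihQ, ihP⟩ := ih
      have hq : Q (-(i + 1)) = Q (i + 1) := by
        have h1 := hQb (-(i+1)) (by omega)
        rw [show (-(i+1) + 1 : ℤ) = -i by ring, show (-(i+1) : ℤ) = -i - 1 by ring] at h1
        rw [show (-(i+1) : ℤ) = -i - 1 by ring, h1, ihP, ihQ]
        exact (hQf i hi).symm
      refine ⟨hq, ?_⟩
      have h1 := hPb (-(i+1)) (by omega)
      have h2 := hbb (-(i+1)) (by omega)
      have h3 := hPf (i+1) (by omega)
      have h4 := hbf (i+1) (by omega)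
      rw [show (-(i+1) : ℤ) = -i - 1 by ring] at h1 h2
      rw [show (-(i+1) : ℤ) = -i - 1 by ring] at hq
      rw [show (-(i+1) - 1 : ℤ) = -i - 1 - 1 by ring, h1, h2, ihP, hq]
      rw [show (i + 1 - 1 : ℤ) = i by ring] at h3 h4
      rw [h3, h4]
  have symQ : ∀ j : ℤ, Q (-j) = Q j := by
    intro j
    rcases le_or_gt 0 j with h | h
    · exact (sym j h).1
    · have := (sym (-j) (by omega)).1
      rw [neg_neg] at this; exact this.symm
  -- key invariant
  have key : ∀ i : ℤ, 0 ≤ i → Q i ≠ 0 ∧ Q i * Q (i + 1) = N - P i ^ 2 := by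
    have nzero : ∀ j : ℤ, N - P j ^ 2 ≠ 0 := fun j h => hNsq ⟨P j, by nlinarith⟩
    refine fun i hi =>
      Int.le_induction (motive := fun j _ => Q j ≠ 0 ∧ Q j * Q (j + 1) = N - P j ^ 2) ?_ ?_ i hi
    · have hdvd : (2:ℤ) ∣ N - P 0 ^ 2 := by
        obtain ⟨k, hk⟩ : ∃ k, P 0 = 2 * k + 1 := ⟨(P 0 - 1)/2, by omega⟩
        obtain ⟨j, hj⟩ : ∃ j, N = 2 * j + 1 := ⟨(N - 1)/2, by omega⟩
        exact ⟨j - 2*(k*k) - 2*k, by rw [hk, hj]; ring⟩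
      refine ⟨by rw [hQ0]; norm_num, ?_⟩
      rw [hQf 0 le_rfl, hQ0, Int.fdiv_eq_ediv_of_dvd hdvd]
      exact Int.mul_ediv_cancel' hdvd
    · intro i hi ih
      obtain ⟨ihn, ihe⟩ := ih
      have hQn : Q (i + 1) ≠ 0 := by
        intro h; rw [h, mul_zero] at ihe; exact nzero i ihe.symm
      have hdvd : Q (i + 1) ∣ N - P (i + 1) ^ 2 := by
        have h3 := hPf (i+1) (by omega)
        rw [show (i + 1 - 1 : ℤ) = i by ring] at h3
        exact ⟨Q i - b (i+1) * (P (i+1) - P i), by linear_combination (P i - P (i+1)) * h3 - ihe⟩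
      refine ⟨hQn, ?_⟩
      rw [hQf (i+1) (by omega), Int.fdiv_eq_ediv_of_dvd hdvd]
      exact Int.mul_ediv_cancel' hdvd
  have hsnn : 0 ≤ s := by omega
  -- part 1
  have part1 : ∀ i : ℤ, Q (s + i + 1) = Q (s - i) := by
    intro i
    have hper := (hTper (i - s)).2
    rw [show (i - s + T : ℤ) = s + i + 1 by omega] at hper
    rw [hper, show (i - s : ℤ) = -(s - i) by ring, symQ]
  refine ⟨part1, ?_⟩
  -- Q s ^ 2 = N - P s ^ 2
  obtain ⟨hQsn, hQse⟩ := key s hsnn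
  have hQss : Q (s + 1) = Q s := by
    have := part1 0
    rw [show (s + 0 + 1 : ℤ) = s + 1 by ring, show (s - 0 : ℤ) = s by ring] at this
    exact this
  rw [hQss] at hQse
  -- dichotomy
  set g : ℕ := Int.gcd (Q s) N with hg
  have hgn : g ≠ 0 := fun h => hQsn (by simpa using (Int.gcd_eq_zero_iff.mp h).1)
  by_cases hg1 : g = 1
  · right
    have hco : IsCoprime (Q s) N := Int.isCoprime_iff_gcd_eq_one.mpr hg1
    obtain ⟨u, v, huv⟩ := hco
    refine ⟨P s * u, u ^ 2 + 2 * v - v ^ 2 * N, ?_⟩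
    linear_combination u^2 * hQse + (v * N - 1 - u * Q s) * huv
  · left
    have hg2 : 1 < g := by omega
    refine ⟨hg2, ?_⟩
    by_contra hle
    push_neg at hle
    have hdQ : (g : ℤ) ∣ Q s := Int.gcd_dvd_left _ _
    have hgabs : (g : ℤ) ≤ |Q s| := Int.le_of_dvd (abs_pos.mpr hQsn) ((dvd_abs _ _).mpr hdQ)
    have hsq : Q s ^ 2 ≤ N := by nlinarith [sq_nonneg (P s)]
    nlinarith [sq_abs (Q s), hgabs, hle, hg2]
end

section
/- (Lemma 1 (a), Buell) For every reduced integral binary quadratic form f of discriminant D there exists exactly one reduced form of discriminant D adjacent to the right of f, and exactly one reduced form of discriminant D adjacent to the left of f. -/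
/-! For a reduced form `(a, b, c)` one has `(2|a|)(2|c|) = D - b² = (√D - b)(√D + b)`, so the
reducedness condition `√D - b < 2|a| < √D + b` is equivalent to the same condition on `c`.
A reduced right neighbour `(c, b', c')` is then pinned down by `b'`: it lies in the residue class
of `-b` modulo `2|c|` and in the interval `(√D - 2|c|, √D)` of length `2|c|`, which contains
exactly one such integer because `√D` is irrational. The remaining bound `2|c| - √D < b'` is
automatic, as otherwise `0 < b + b' < 2|c|`; and `c'` is determined by the discriminant.
Left neighbours of `(a, b, c)` are the right neighbours of `(c, b, a)`, read backwards. -/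

/-- The discriminant of the integral binary quadratic form `(a, b, c)`,
represented as the triple `f = (a, (b, c))`. -/
def disc (f : ℤ × ℤ × ℤ) : ℤ := f.2.1 ^ 2 - 4 * f.1 * f.2.2

/-- The form `(a, b, c)` of discriminant `D > 0` is reduced:
`|√D - 2|a|| < b < √D` (as real numbers). -/
def IsReducedForm (D : ℤ) (f : ℤ × ℤ × ℤ) : Prop :=
  disc f = D ∧
  abs (Real.sqrt (D : ℝ) - 2 * |(f.1 : ℝ)|) < (f.2.1 : ℝ) ∧ (f.2.1 : ℝ) < Real.sqrt (D : ℝ)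

/-- `g = (a₂, b₂, c₂)` is adjacent to the right of `f = (a₁, b₁, c₁)`:
both have discriminant `D`, `c₁ = a₂`, and `b₁ + b₂ ≡ 0 (mod 2 a₂)`. -/
def AdjRight (D : ℤ) (f g : ℤ × ℤ × ℤ) : Prop :=
  disc f = D ∧ disc g = D ∧ f.2.2 = g.1 ∧ (2 * g.1) ∣ (f.2.1 + g.2.1)

lemma Int.existsUnique_dvd_sub_mem_Ioc (n r : ℤ) {t : ℤ} (ht : 0 < t) :
    ∃! b : ℤ, t ∣ b - r ∧ n - t < b ∧ b ≤ n := by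
  have hdvd : t ∣ n - (n - r) % t - r := sub_right_comm n r _ ▸ Int.dvd_self_sub_emod
  have hlt := Int.emod_lt_of_pos (n - r) ht
  have hnonneg := Int.emod_nonneg (n - r) ht.ne'
  refine ⟨n - (n - r) % t, ⟨hdvd, by linarith, by linarith⟩, ?_⟩
  rintro b ⟨hb, hlo, hhi⟩
  have hsub : t ∣ b - (n - (n - r) % t) := by
    simpa only [sub_sub_sub_cancel_right] using dvd_sub hb hdvd
  exact sub_eq_zero.mp <| Int.eq_zero_of_abs_lt_dvd hsub (abs_lt.mpr ⟨by linarith, by linarith⟩)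

lemma Irrational.intCast_mem_Ioo_iff {s : ℝ} (hs : Irrational s) (b t : ℤ) :
    (s - t < b ∧ (b : ℝ) < s) ↔ ⌊s⌋ - t < b ∧ b ≤ ⌊s⌋ := by
  rw [Int.le_floor, sub_lt_iff_lt_add, sub_lt_iff_lt_add, ← Int.cast_add, Int.floor_lt]
  exact and_congr_right' ⟨le_of_lt, fun h ↦ h.lt_of_ne (hs.ne_int b).symm⟩

lemma Irrational.existsUnique_dvd_sub_mem_Ioo {s : ℝ} (hs : Irrational s) (r : ℤ) {t : ℤ}
    (ht : 0 < t) : ∃! b : ℤ, t ∣ b - r ∧ s - t < b ∧ (b : ℝ) < s := by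
  simpa only [hs.intCast_mem_Ioo_iff] using Int.existsUnique_dvd_sub_mem_Ioc ⌊s⌋ r ht

lemma abs_sub_lt_of_mul_eq {s b x y : ℝ} (hbs : b < s) (hxy : x * y = (s - b) * (s + b))
    (hx : |s - x| < b) : |s - y| < b := by
  rw [abs_lt] at hx ⊢
  constructor <;> nlinarith

lemma abs_sub_lt_of_dvd_add {s : ℝ} {b b' t : ℤ} (hb : |s - t| < b) (hbs : (b : ℝ) < s)
    (hdvd : t ∣ b + b') (hb' : s - t < b') : |s - t| < b' := by
  refine abs_lt.mpr ⟨neg_lt_sub_iff_lt_add'.mpr <| not_le.mp fun h ↦ ?_, hb'⟩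
  have hb := abs_lt.mp hb
  have hpos : 0 < b + b' := by exact_mod_cast (show (0 : ℝ) < b + b' by linarith)
  have hlt : b + b' < t := by exact_mod_cast (show (b + b' : ℝ) < t by linarith)
  exact hpos.ne' (Int.eq_zero_of_dvd_of_nonneg_of_lt hpos.le hlt hdvd)

def swapVars (f : ℤ × ℤ × ℤ) : ℤ × ℤ × ℤ := (f.2.2, f.2.1, f.1)

lemma swapVars_involutive : Function.Involutive swapVars := fun _ ↦ rfl

lemma disc_swapVars (f : ℤ × ℤ × ℤ) : disc (swapVars f) = disc f := by
  simp only [disc, swapVars]; ring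

lemma disc_injective {a : ℤ} (ha : a ≠ 0) (b : ℤ) : Function.Injective fun c ↦ disc (a, b, c) :=
  fun c c' h ↦ by
    simp only [disc] at h
    exact mul_left_cancel₀ (mul_ne_zero four_ne_zero ha) (by linarith)

lemma adjRight_swapVars {D : ℤ} {f g : ℤ × ℤ × ℤ} :
    AdjRight D (swapVars f) (swapVars g) ↔ AdjRight D g f := by
  simp only [AdjRight, disc_swapVars]
  simp only [swapVars, add_comm f.2.1]
  exact ⟨fun ⟨h₁, h₂, h₃, h₄⟩ ↦ ⟨h₂, h₁, h₃.symm, h₃ ▸ h₄⟩,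
    fun ⟨h₁, h₂, h₃, h₄⟩ ↦ ⟨h₂, h₁, h₃.symm, h₃ ▸ h₄⟩⟩

namespace IsReducedForm

variable {D : ℤ} {f : ℤ × ℤ × ℤ}

lemma b_pos (hf : IsReducedForm D f) : 0 < f.2.1 := by
  exact_mod_cast (abs_nonneg _).trans_lt hf.2.1

lemma mul_neg (hD : 0 ≤ D) (hf : IsReducedForm D f) : f.1 * f.2.2 < 0 := by
  have hb : (0 : ℝ) < f.2.1 := by exact_mod_cast hf.b_pos
  have hsq : (f.2.1 : ℝ) ^ 2 < (D : ℝ) := by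
    calc (f.2.1 : ℝ) ^ 2 < √(D : ℝ) ^ 2 := by gcongr; exact hf.2.2
      _ = (D : ℝ) := Real.sq_sqrt (by exact_mod_cast hD)
  have hdisc : f.2.1 ^ 2 - 4 * f.1 * f.2.2 = D := hf.1
  have : f.2.1 ^ 2 < D := by exact_mod_cast hsq
  linarith

lemma swapVars (hD : 0 ≤ D) (hf : IsReducedForm D f) : IsReducedForm D (_root_.swapVars f) := by
  refine ⟨(disc_swapVars f).trans hf.1, abs_sub_lt_of_mul_eq hf.2.2 ?_ hf.2.1, hf.2.2⟩
  have hdisc : (f.2.1 : ℝ) ^ 2 - 4 * f.1 * f.2.2 = D := by exact_mod_cast hf.1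
  have hac : (f.1 : ℝ) * f.2.2 < 0 := by exact_mod_cast hf.mul_neg hD
  have hsq : √(D : ℝ) ^ 2 = D := Real.sq_sqrt (by exact_mod_cast hD)
  show 2 * |(f.1 : ℝ)| * (2 * |(f.2.2 : ℝ)|) = (√(D : ℝ) - f.2.1) * (√(D : ℝ) + f.2.1)
  calc 2 * |(f.1 : ℝ)| * (2 * |(f.2.2 : ℝ)|) = -4 * (f.1 * f.2.2) := by
        rw [mul_mul_mul_comm, ← abs_mul, abs_of_neg hac]; ring
    _ = _ := by linear_combination hdisc - hsq

end IsReducedForm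

lemma isReducedForm_swapVars_iff {D : ℤ} (hD : 0 ≤ D) {f : ℤ × ℤ × ℤ} :
    IsReducedForm D (swapVars f) ↔ IsReducedForm D f :=
  ⟨fun h ↦ swapVars_involutive f ▸ h.swapVars hD, fun h ↦ h.swapVars hD⟩

theorem IsReducedForm.existsUnique_adjRight {D : ℤ} {f : ℤ × ℤ × ℤ} (hD : 0 ≤ D)
    (hirr : Irrational √(D : ℝ)) (hf : IsReducedForm D f) :
    ∃! g, IsReducedForm D g ∧ AdjRight D f g := by
  obtain ⟨a, b, c⟩ := f
  have hc : abs (√(D : ℝ) - 2 * |(c : ℝ)|) < b := (hf.swapVars hD).2.1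
  have hc0 : c ≠ 0 := right_ne_zero_of_mul (hf.mul_neg hD).ne
  have hcast : ((|2 * c| : ℤ) : ℝ) = 2 * |(c : ℝ)| := by push_cast; rw [abs_mul, abs_two]
  have hdvd_iff (b' : ℤ) : |2 * c| ∣ b' - -b ↔ 2 * c ∣ b + b' := by
    rw [abs_dvd, sub_neg_eq_add, add_comm]
  obtain ⟨b', ⟨hdvd, hlo, hhi⟩, huniq⟩ :=
    hirr.existsUnique_dvd_sub_mem_Ioo (-b) (abs_pos.mpr (mul_ne_zero two_ne_zero hc0))
  rw [hdvd_iff] at hdvd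
  obtain ⟨k, hk⟩ := hdvd
  have hdisc : disc (c, b', a - b * k + c * k ^ 2) = D := by
    have ha : disc (a, b, c) = D := hf.1
    simp only [disc] at ha ⊢
    rw [show b' = 2 * c * k - b by linarith]
    linear_combination ha
  have hred : abs (√(D : ℝ) - 2 * |(c : ℝ)|) < b' := by
    rw [← hcast] at hc ⊢
    exact abs_sub_lt_of_dvd_add hc hf.2.2 ((abs_dvd _ _).mpr ⟨k, hk⟩) hlo
  refine ⟨(c, b', a - b * k + c * k ^ 2), ⟨⟨hdisc, hred, hhi⟩, hf.1, hdisc, rfl, k, hk⟩, ?_⟩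
  rintro ⟨c₁, b₁, c₂⟩ ⟨hg, -, hg₁, rfl, hdvd₁⟩
  obtain rfl : b₁ = b' := huniq b₁ ⟨(hdvd_iff b₁).mpr hdvd₁,
    hcast ▸ (le_abs_self _).trans_lt hg.2.1, hg.2.2⟩
  rw [disc_injective hc0 b₁ (hg₁.trans hdisc.symm)]

/-- Lemma 1 (a) (Buell): every reduced form of discriminant `D` has a unique
reduced form adjacent to its right and a unique reduced form adjacent to its
left. -/
theorem stmt_12 (D : ℤ) (hD : 0 < D) (hDsq : ¬ IsSquare D)
    (f : ℤ × ℤ × ℤ) (hf : IsReducedForm D f) :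
    (∃! g : ℤ × ℤ × ℤ, IsReducedForm D g ∧ AdjRight D f g) ∧
    (∃! g : ℤ × ℤ × ℤ, IsReducedForm D g ∧ AdjRight D g f) := by
  have hirr : Irrational √(D : ℝ) := (irrational_sqrt_intCast_iff_of_nonneg hD.le).mpr hDsq
  refine ⟨hf.existsUnique_adjRight hD.le hirr, ?_⟩
  refine (swapVars_involutive.toPerm _).existsUnique_congr (fun g ↦ ?_) |>.mpr
    ((hf.swapVars hD.le).existsUnique_adjRight hD.le hirr)
  simp only [Function.Involutive.coe_toPerm, isReducedForm_swapVars_iff hD.le, adjRight_swapVars]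
end

section
/- The adjacency map ρ, which sends each reduced form of discriminant D to the unique reduced form of discriminant D adjacent to its right, is a bijection of the set of reduced forms of discriminant D onto itself; consequently the set of reduced forms of discriminant D is partitioned into cycles of adjacent forms (the orbits of ρ). (Proposition 1.) -/
/-
Write `s = √D`. For a form `(a, b, c)` of discriminant `D` with `0 < b < s` one has
`4|a||c| = s² - b²`, and then `|s - 2|a|| < b` is equivalent to `|a| + |c| < s`; so a form is
reduced exactly when its reverse `(c, b, a)` is. A reduced form is determined by its first
coefficient `a` and by `b mod 2a`, because `b` lies in the window `(s - 2|a|, s)` of length `2|a|`.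
This gives uniqueness of the right neighbour and, applied to reversed forms, of the left neighbour,
so `ρ` is injective. For surjectivity, given a reduced `(a, b, c)` let `b'` be the integer
`≡ -b (mod 2a)` in the window `(s - 2|a|, s)`, which exists since `s` is irrational; the form
`((b'² - D) / 4a, b', a)` is then reduced and adjacent to the left of `(a, b, c)`.
-/

open Real

@[simp]
lemma disc_mk (a b c : ℤ) : disc (a, b, c) = b ^ 2 - 4 * a * c := rfl

lemma Int.le_of_dvd_sub_of_lt_add {m n n' : ℤ} (hm : m ∣ n' - n) (h : n' < n + m) : n' ≤ n := by
  by_contra! hlt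
  have := Int.le_of_dvd (sub_pos.mpr hlt) hm
  omega

lemma Int.le_of_dvd_sub_of_lt_of_lt {x : ℝ} {m n n' : ℤ} (hm : m ∣ n' - n)
    (hn : x - m < n) (hn' : (n' : ℝ) < x) : n' ≤ n :=
  Int.le_of_dvd_sub_of_lt_add hm (by exact_mod_cast (by linarith : (n' : ℝ) < n + m))

lemma Irrational.exists_dvd_sub_of_mem_Ioo {x : ℝ} (hx : Irrational x) {m : ℤ} (hm : 0 < m)
    (r : ℤ) : ∃ n : ℤ, m ∣ n - r ∧ x - m < n ∧ (n : ℝ) < x := by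
  have hmR : (0 : ℝ) < m := by exact_mod_cast hm
  set k := ⌊(x - r) / m⌋
  have hk_le : (k : ℝ) * m ≤ x - r := (le_div_iff₀ hmR).mp (Int.floor_le _)
  have hk_lt : x - r < (k + 1) * m := (div_lt_iff₀ hmR).mp (Int.lt_floor_add_one _)
  refine ⟨r + m * k, ⟨k, by ring⟩, by push_cast; linarith, ?_⟩
  exact lt_of_le_of_ne (by push_cast; linarith) (hx.ne_int _).symm

lemma abs_sub_two_mul_lt_iff {s b A C : ℝ} (hA : 0 < A) (hb : 0 < b)
    (h : 4 * A * C = s ^ 2 - b ^ 2) : |s - 2 * A| < b ↔ A + C < s := by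
  have key : (2 * A - (s - b)) * (s + b - 2 * A) = 4 * A * (s - A - C) := by
    linear_combination h
  rw [abs_lt]
  constructor
  · rintro ⟨h₁, h₂⟩
    nlinarith [mul_pos (by linarith : 0 < 2 * A - (s - b)) (by linarith : 0 < s + b - 2 * A)]
  · intro hs
    have hprod : 0 < (2 * A - (s - b)) * (s + b - 2 * A) := by rw [key]; nlinarith
    constructor <;> nlinarith

namespace IsReducedForm

variable {D a b c : ℤ}

lemma b_pos_s13 (h : IsReducedForm D (a, b, c)) : (0 : ℝ) < b :=
  (abs_nonneg _).trans_lt h.2.1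

lemma sqrt_sub_lt (h : IsReducedForm D (a, b, c)) : √D - 2 * |(a : ℝ)| < b :=
  (abs_lt.mp h.2.1).2

lemma pos (h : IsReducedForm D (a, b, c)) : 0 < D := by
  exact_mod_cast Real.sqrt_pos.mp (h.b_pos_s13.trans h.2.2)

lemma sq_lt (h : IsReducedForm D (a, b, c)) : b ^ 2 < D := by
  have hb := h.b_pos_s13
  have hs : √(D : ℝ) ^ 2 = D := Real.sq_sqrt (by exact_mod_cast h.pos.le)
  have : (b : ℝ) ^ 2 < D := by nlinarith [h.2.2]
  exact_mod_cast this

lemma mul_neg_s13 (h : IsReducedForm D (a, b, c)) : a * c < 0 := by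
  have := h.sq_lt
  have := h.1
  simp only [disc_mk] at this
  linarith

lemma swap (h : IsReducedForm D (a, b, c)) : IsReducedForm D (c, b, a) := by
  have hac := h.mul_neg_s13
  have ha : (0 : ℝ) < |(a : ℝ)| := by
    exact_mod_cast abs_pos.mpr (left_ne_zero_of_mul hac.ne)
  have hc : (0 : ℝ) < |(c : ℝ)| := by
    exact_mod_cast abs_pos.mpr (right_ne_zero_of_mul hac.ne)
  have hprod : 4 * |(a : ℝ)| * |(c : ℝ)| = √(D : ℝ) ^ 2 - (b : ℝ) ^ 2 := by
    have hd : (b : ℝ) ^ 2 - 4 * a * c = D := by exact_mod_cast h.1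
    have hac' : |(a : ℝ)| * |(c : ℝ)| = -(a * c) := by
      rw [← abs_mul]; exact abs_of_neg (by exact_mod_cast hac)
    rw [Real.sq_sqrt (by exact_mod_cast h.pos.le)]
    linear_combination 4 * hac' + hd
  have hmid : abs (√(D : ℝ) - 2 * |(c : ℝ)|) < b := by
    rw [abs_sub_two_mul_lt_iff (C := |(a : ℝ)|) hc h.b_pos_s13 (by linarith), add_comm,
      ← abs_sub_two_mul_lt_iff ha h.b_pos_s13 hprod]
    exact h.2.1
  exact ⟨by simpa [mul_comm, mul_left_comm] using h.1, hmid, h.2.2⟩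

lemma eq_of_dvd_sub {b' c' : ℤ} (h : IsReducedForm D (a, b, c))
    (h' : IsReducedForm D (a, b', c')) (hdvd : 2 * a ∣ b - b') : (a, b, c) = (a, b', c') := by
  have hM : 2 * |a| ∣ b - b' := by rwa [← abs_two, ← abs_mul, abs_dvd]
  have hwin : √(D : ℝ) - ((2 * |a| : ℤ) : ℝ) < b := by push_cast; exact h.sqrt_sub_lt
  have hwin' : √(D : ℝ) - ((2 * |a| : ℤ) : ℝ) < b' := by push_cast; exact h'.sqrt_sub_lt
  have hb : b = b' := le_antisymm
    (Int.le_of_dvd_sub_of_lt_of_lt hM hwin' h.2.2)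
    (Int.le_of_dvd_sub_of_lt_of_lt (by rwa [← dvd_neg, neg_sub]) hwin h'.2.2)
  subst hb
  have ha : a ≠ 0 := left_ne_zero_of_mul h.mul_neg_s13.ne
  have hd := h.1.trans h'.1.symm
  simp only [disc_mk] at hd
  have hc : c = c' := mul_left_cancel₀ (mul_ne_zero four_ne_zero ha) (by linarith)
  rw [hc]

end IsReducedForm

namespace AdjRight

variable {D : ℤ} {f f' g g' : ℤ × ℤ × ℤ}

lemma right_unique (hg : IsReducedForm D g) (hg' : IsReducedForm D g') (h : AdjRight D f g)
    (h' : AdjRight D f g') : g = g' := by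
  obtain ⟨a, b, c⟩ := g
  obtain ⟨a', b', c'⟩ := g'
  obtain rfl : a = a' := h.2.2.1.symm.trans h'.2.2.1
  refine hg.eq_of_dvd_sub hg' ?_
  simpa using dvd_sub h.2.2.2 h'.2.2.2

lemma left_unique (hf : IsReducedForm D f) (hf' : IsReducedForm D f') (h : AdjRight D f g)
    (h' : AdjRight D f' g) : f = f' := by
  obtain ⟨a, b, c⟩ := f
  obtain ⟨a', b', c'⟩ := f'
  obtain rfl : c = c' := h.2.2.1.trans h'.2.2.1.symm
  have hdvd : 2 * c ∣ b - b' := by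
    rw [show c = g.1 from h.2.2.1]; simpa using dvd_sub h.2.2.2 h'.2.2.2
  have := hf.swap.eq_of_dvd_sub hf'.swap hdvd
  simp only [Prod.mk.injEq, true_and, and_true] at this ⊢
  exact this.symm

end AdjRight

lemma IsReducedForm.exists_adjRight {D a b c : ℤ} (hD : ¬IsSquare D)
    (hg : IsReducedForm D (a, b, c)) : ∃ f, IsReducedForm D f ∧ AdjRight D f (a, b, c) := by
  have ha : a ≠ 0 := left_ne_zero_of_mul hg.mul_neg_s13.ne
  have hirr : Irrational √(D : ℝ) := (irrational_sqrt_intCast_iff_of_nonneg hg.pos.le).mpr hD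
  obtain ⟨b', hdvd, hlow, hup⟩ :=
    hirr.exists_dvd_sub_of_mem_Ioo (m := 2 * |a|) (by positivity) (-b)
  push_cast at hlow
  -- `2|a| - b` is in the residue class of `-b` and below `√D`, so it is at most `b'`.
  have hb' : 2 * |a| - b ≤ b' := by
    refine Int.le_of_dvd_sub_of_lt_of_lt (m := 2 * |a|) (x := √(D : ℝ)) ?_
      (by push_cast; linarith) (by push_cast; linarith [(abs_lt.mp hg.2.1).1])
    rw [show 2 * |a| - b - b' = 2 * |a| - (b' - -b) by ring]
    exact dvd_sub dvd_rfl hdvd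
  have hsum : 2 * a ∣ b' + b := by
    rw [← abs_dvd, abs_mul, abs_two, ← sub_neg_eq_add]; exact hdvd
  have h4 : 4 * a ∣ b' ^ 2 - D := by
    have hd : b ^ 2 - 4 * a * c = D := hg.1
    have h2 : (2 : ℤ) ∣ b' - b := by
      have := (dvd_mul_right 2 a).trans hsum
      omega
    have hprod : 4 * a ∣ (b' + b) * (b' - b) := by
      rw [show 4 * a = 2 * a * 2 by ring]; exact mul_dvd_mul hsum h2
    rw [show b' ^ 2 - D = (b' + b) * (b' - b) + 4 * a * c by linear_combination hd]
    exact dvd_add hprod (dvd_mul_right _ _)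
  obtain ⟨a', ha'⟩ := h4
  have hb'R : 2 * |(a : ℝ)| - b ≤ b' := by exact_mod_cast hb'
  have hmid : abs (√(D : ℝ) - 2 * |(a : ℝ)|) < b' :=
    abs_lt.mpr ⟨by linarith [hg.2.2], by linarith⟩
  have hf : IsReducedForm D (a', b', a) :=
    IsReducedForm.swap ⟨by simp only [disc_mk]; linear_combination ha', hmid, hup⟩
  exact ⟨(a', b', a), hf, hf.1, hg.1, rfl, hsum⟩

theorem stmt_13_general (D : ℤ) (hDsq : ¬ IsSquare D)
    (ρ : {f : ℤ × ℤ × ℤ // IsReducedForm D f} → {f : ℤ × ℤ × ℤ // IsReducedForm D f})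
    (hρ : ∀ f : {f : ℤ × ℤ × ℤ // IsReducedForm D f}, AdjRight D f.1 (ρ f).1) :
    Function.Bijective ρ := by
  refine ⟨fun f g hfg => Subtype.ext (AdjRight.left_unique f.2 g.2 (hρ f) (hfg ▸ hρ g)), ?_⟩
  rintro ⟨⟨a, b, c⟩, hg⟩
  obtain ⟨f, hf, hfg⟩ := hg.exists_adjRight hDsq
  exact ⟨⟨f, hf⟩, Subtype.ext (AdjRight.right_unique (ρ _).2 hg (hρ _) hfg)⟩

/-- Proposition 1: the adjacency map `ρ`, sending each reduced form of
discriminant `D` to the (unique) reduced form adjacent to its right, is a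
bijection of the set of reduced forms of discriminant `D` onto itself (hence
its orbits partition the reduced forms into cycles of adjacent forms). -/
theorem stmt_13 (D : ℤ) (hD : 0 < D) (hDsq : ¬ IsSquare D)
    (ρ : {f : ℤ × ℤ × ℤ // IsReducedForm D f} → {f : ℤ × ℤ × ℤ // IsReducedForm D f})
    (hρ : ∀ f : {f : ℤ × ℤ × ℤ // IsReducedForm D f}, AdjRight D f.1 (ρ f).1) :
    Function.Bijective ρ :=
  stmt_13_general D hDsq ρ hρ
end

section
/- (Correctness of the reduction algorithm, Algorithm 1) Every integral binary quadratic form of discriminant D is properly equivalent to some reduced form of discriminant D; that is, for every (a,b,c) with b² − 4ac = D there exists γ ∈ SL₂(ℤ) such that γ*(a,b,c) is reduced. -/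
/-- The action of a `2 × 2` integer matrix `γ = [[s, t], [u, v]]` on a binary
quadratic form: `(γ* f)(x, y) = f (s x + t y, u x + v y)`. -/
def actForm (γ : Matrix (Fin 2) (Fin 2) ℤ) (f : ℤ × ℤ × ℤ) : ℤ × ℤ × ℤ :=
  (f.1 * γ 0 0 ^ 2 + f.2.1 * γ 0 0 * γ 1 0 + f.2.2 * γ 1 0 ^ 2,
   2 * f.1 * γ 0 0 * γ 0 1 + f.2.1 * (γ 0 0 * γ 1 1 + γ 0 1 * γ 1 0) +
     2 * f.2.2 * γ 1 0 * γ 1 1,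
   f.1 * γ 0 1 ^ 2 + f.2.1 * γ 0 1 * γ 1 1 + f.2.2 * γ 1 1 ^ 2)

/-!
The matrix `[[0, -1], [1, v]]` takes `(a, b, c)` to its right neighbour `(c, b', c')` with
`b' = -b + 2cv`, and `v` can be chosen so that `√D - 2|c| < b' < √D`. If that neighbour is not
reduced, then `|b'| < 2|c| - √D` (the endpoint is excluded because `√D` is irrational), so
`|4cc'| = |b'² - D| < 4c²`, i.e. `|c'| < |c|`. Induction on `|c|` finishes the proof.
-/

open Matrix

lemma actForm_mul (A B : Matrix (Fin 2) (Fin 2) ℤ) (f : ℤ × ℤ × ℤ) :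
    actForm (A * B) f = actForm B (actForm A f) := by
  simp only [actForm, mul_apply, Fin.sum_univ_two, Prod.mk.injEq]
  refine ⟨by ring, by ring, by ring⟩

lemma disc_actForm (γ : SpecialLinearGroup (Fin 2) ℤ) (f : ℤ × ℤ × ℤ) :
    disc (actForm γ f) = disc f := by
  have hdet := γ.2
  rw [det_fin_two] at hdet
  simp only [disc, actForm]
  linear_combination (γ 0 0 * γ 1 1 - γ 0 1 * γ 1 0 + 1) * (f.2.1 ^ 2 - 4 * f.1 * f.2.2) * hdet

def stepSL (v : ℤ) : SpecialLinearGroup (Fin 2) ℤ :=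
  ⟨!![0, -1; 1, v], by simp [det_fin_two_of]⟩

lemma actForm_stepSL (v a b c : ℤ) :
    actForm (stepSL v) (a, b, c) = (c, -b + 2 * c * v, a - b * v + c * v ^ 2) := by
  simp only [actForm, stepSL, of_apply, cons_val', cons_val_zero, cons_val_one, cons_val_fin_one,
    Prod.mk.injEq]
  refine ⟨by ring, by ring, by ring⟩

lemma exists_add_mul_mem_Ioo {r : ℝ} (hr : Irrational r) (b : ℤ) {m : ℤ} (hm : m ≠ 0) :
    ∃ k : ℤ, ((b + m * k : ℤ) : ℝ) ∈ Set.Ioo (r - |m|) r := by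
  have hM : (0 : ℝ) < |(m : ℝ)| := abs_pos.2 (Int.cast_ne_zero.2 hm)
  have hj := Int.floor_le ((r - b) / |(m : ℝ)|)
  have hj' := Int.lt_floor_add_one ((r - b) / |(m : ℝ)|)
  rw [le_div_iff₀ hM] at hj
  rw [div_lt_iff₀ hM] at hj'
  have hne := hr.ne_int (b + |m| * ⌊(r - b) / |(m : ℝ)|⌋)
  refine ⟨m.sign * ⌊(r - b) / |(m : ℝ)|⌋, ?_, ?_⟩ <;>
    rw [← mul_assoc, mul_comm m, Int.sign_mul_self_eq_abs] <;> push_cast at hne ⊢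
  · linarith
  · exact lt_of_le_of_ne (by linarith) hne.symm

lemma abs_sq_sub_sq_lt {x R A : ℝ} (hR : 0 ≤ R) (hx : |x| < A - R) : |x ^ 2 - R ^ 2| < A ^ 2 := by
  have hx0 := abs_nonneg x
  rw [abs_lt]
  constructor <;> nlinarith [sq_abs x]

lemma abs_lt_abs_of_not_isReducedForm {D : ℤ} (hD : Irrational √(D : ℝ)) {a b c : ℤ}
    (hf : disc (a, b, c) = D) (hlo : √(D : ℝ) - 2 * |(a : ℝ)| < b) (hhi : (b : ℝ) < √(D : ℝ))
    (hred : ¬ IsReducedForm D (a, b, c)) : |c| < |a| := by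
  have hle : (b : ℝ) ≤ abs (√(D : ℝ) - 2 * |(a : ℝ)|) := by
    by_contra h
    exact hred ⟨hf, not_le.1 h, hhi⟩
  have hsmall : √(D : ℝ) < 2 * |(a : ℝ)| := by
    by_contra h
    rw [abs_of_nonneg (by linarith)] at hle
    linarith
  rw [abs_of_neg (by linarith)] at hle
  have hb : |(b : ℝ)| < 2 * |(a : ℝ)| - √(D : ℝ) := by
    have hne := hD.ne_int (2 * |a| - b)
    push_cast at hne
    rw [abs_lt]
    constructor
    · linarith
    · exact lt_of_le_of_ne (by linarith) (fun h => hne (by linarith))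
  have hsq := abs_sq_sub_sq_lt (Real.sqrt_nonneg _) hb
  have hD0 : (0 : ℝ) ≤ D := by exact_mod_cast (irrational_sqrt_intCast_iff.1 hD).2
  rw [Real.sq_sqrt hD0, ← show ((b ^ 2 - D : ℤ) : ℝ) = (b : ℝ) ^ 2 - D by push_cast; ring,
    show b ^ 2 - D = 4 * a * c by rw [← hf, disc]; ring] at hsq
  have h4 : |4 * a * c| < (2 * |a|) ^ 2 := by exact_mod_cast hsq
  rw [abs_mul, abs_mul, abs_of_pos four_pos] at h4
  exact lt_of_mul_lt_mul_left (by linarith) (abs_nonneg a)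

/-- Correctness of the reduction algorithm (Algorithm 1): every integral binary
quadratic form of discriminant `D` is properly equivalent to a reduced form. -/
theorem stmt_15 (D : ℤ) (hD : 0 < D) (hDsq : ¬ IsSquare D)
    (f : ℤ × ℤ × ℤ) (hf : disc f = D) :
    ∃ γ : Matrix.SpecialLinearGroup (Fin 2) ℤ, IsReducedForm D (actForm γ.1 f) := by
  have hirr : Irrational √(D : ℝ) := irrational_sqrt_intCast_iff.2 ⟨hDsq, hD.le⟩
  induction hn : f.2.2.natAbs using Nat.strong_induction_on generalizing f with
  | _ n ih =>
    obtain ⟨a, b, c⟩ := f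
    have hc : c ≠ 0 := by
      rintro rfl
      exact hDsq ⟨b, by rw [← hf, disc]; ring⟩
    obtain ⟨k, hlo, hhi⟩ := exists_add_mul_mem_Ioo hirr (-b) (mul_ne_zero two_ne_zero hc)
    have hstep := actForm_stepSL k a b c
    have hgD : disc (c, -b + 2 * c * k, a - b * k + c * k ^ 2) = D := by
      rw [← hstep, disc_actForm, hf]
    by_cases hred : IsReducedForm D (c, -b + 2 * c * k, a - b * k + c * k ^ 2)
    · exact ⟨stepSL k, hstep ▸ hred⟩
    push_cast [abs_mul] at hlo hhi
    have hlt := abs_lt_abs_of_not_isReducedForm hirr hgD (by simpa using hlo)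
      (by simpa using hhi) hred
    obtain ⟨γ, hγ⟩ := ih _ (by rw [← hn]; zify; exact hlt) _ hgD rfl
    refine ⟨stepSL k * γ, ?_⟩
    rwa [show (stepSL k * γ).1 = (stepSL k).1 * γ.1 from rfl, actForm_mul, hstep]
end

section
/- (Lemma 2) Let f be a reduced integral binary quadratic form of discriminant D lying in an ambiguous proper equivalence class (i.e. some form properly equivalent to f is ambiguous). Then the cycle {ρⁿ f : n ∈ ℤ} contains two points of symmetry: two distinct pairs of adjacent reduced forms in which the left form (c,b,a) is the symmetric reverse of the right form (a,b,c) (that is, ρ(c,b,a) = (a,b,c)). Moreover, for any such symmetry pair, either a divides D, or a is even and a/2 divides D. -/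
/-- A form is ambiguous if it has an automorph in `GL₂(ℤ)` of determinant `-1`. -/
def Ambiguous (f : ℤ × ℤ × ℤ) : Prop :=
  ∃ γ : Matrix (Fin 2) (Fin 2) ℤ, γ.det = -1 ∧ actForm γ f = f

/-- The symmetric reverse of the form `(a, b, c)`, namely `(c, b, a)`. -/
def revForm (f : ℤ × ℤ × ℤ) : ℤ × ℤ × ℤ := (f.2.2, f.2.1, f.1)

/-- `g = (a, b, c)` is a point of symmetry: its symmetric reverse `(c, b, a)` is
a reduced form adjacent to its left, i.e. `ρ (c, b, a) = (a, b, c)`. -/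
def IsSymPoint (D : ℤ) (g : ℤ × ℤ × ℤ) : Prop :=
  IsReducedForm D (revForm g) ∧ AdjRight D (revForm g) g


/-! ### Basic facts -/

section Basic

variable {D : ℤ}

noncomputable abbrev rt (D : ℤ) : ℝ := Real.sqrt (D : ℝ)

lemma rt_pos (hD : 0 < D) : 0 < rt D := Real.sqrt_pos.2 (by exact_mod_cast hD)

lemma rt_sq (hD : 0 < D) : rt D ^ 2 = (D : ℝ) := Real.sq_sqrt (by positivity)

lemma D_ge_two (hD : 0 < D) (hDsq : ¬ IsSquare D) : 2 ≤ D := by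
  rcases (by omega : D = 1 ∨ 2 ≤ D) with h | h
  · exact absurd (h ▸ IsSquare.one) hDsq
  · exact h

lemma rt_gt_one (hD : 0 < D) (hDsq : ¬ IsSquare D) : 1 < rt D := by
  have h2 : (2:ℝ) ≤ (D:ℝ) := by exact_mod_cast D_ge_two hD hDsq
  nlinarith [rt_sq hD, rt_pos hD]

variable {f : ℤ × ℤ × ℤ}

lemma red_b_pos (hf : IsReducedForm D f) : 0 < f.2.1 := by
  have h := hf.2.1
  have : (0:ℝ) < (f.2.1 : ℝ) := lt_of_le_of_lt (abs_nonneg _) h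
  exact_mod_cast this

lemma red_a_lb (hf : IsReducedForm D f) : rt D - (f.2.1:ℝ) < 2 * |(f.1:ℝ)| := by
  have := abs_lt.1 hf.2.1
  linarith [this.1, this.2]

lemma red_a_ub (hf : IsReducedForm D f) : 2 * |(f.1:ℝ)| < rt D + (f.2.1:ℝ) := by
  have := abs_lt.1 hf.2.1
  linarith [this.1, this.2]

lemma red_a_ne (hD : 0 < D) (hf : IsReducedForm D f) : f.1 ≠ 0 := by
  intro h
  have h1 := red_a_lb hf
  have h2 := hf.2.2
  rw [h] at h1
  simp at h1
  linarith

lemma red_b_sq_lt (hD : 0 < D) (hf : IsReducedForm D f) : f.2.1 ^ 2 < D := by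
  have hb := red_b_pos hf
  have h2 := hf.2.2
  have : ((f.2.1:ℝ))^2 < (D:ℝ) := by
    nlinarith [rt_sq hD, rt_pos hD, (by exact_mod_cast hb : (0:ℝ) < (f.2.1:ℝ))]
  exact_mod_cast this

lemma red_ac_neg (hD : 0 < D) (hf : IsReducedForm D f) : f.1 * f.2.2 < 0 := by
  have h := hf.1
  have hb := red_b_sq_lt hD hf
  simp only [disc] at h
  nlinarith

lemma red_c_ne (hD : 0 < D) (hf : IsReducedForm D f) : f.2.2 ≠ 0 := by
  have := red_ac_neg hD hf
  intro h; rw [h] at this; simp at this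

lemma red_prod (hD : 0 < D) (hf : IsReducedForm D f) :
    (2 * |(f.1:ℝ)|) * (2 * |(f.2.2:ℝ)|) = (rt D - f.2.1) * (rt D + f.2.1) := by
  have h := hf.1
  simp only [disc] at h
  have hac : f.1 * f.2.2 < 0 := red_ac_neg hD hf
  have habs : |(f.1:ℝ)| * |(f.2.2:ℝ)| = -((f.1:ℝ) * (f.2.2:ℝ)) := by
    rw [← abs_mul]
    rw [abs_of_neg (by exact_mod_cast hac)]
  have hDr : rt D ^ 2 = (D:ℝ) := rt_sq hD
  have hh : ((f.2.1:ℝ))^2 - 4 * (f.1:ℝ) * (f.2.2:ℝ) = (D:ℝ) := by exact_mod_cast h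
  nlinarith [habs, hDr, hh]

lemma red_c_lb (hD : 0 < D) (hf : IsReducedForm D f) : rt D - (f.2.1:ℝ) < 2 * |(f.2.2:ℝ)| := by
  have hp := red_prod hD hf
  have h2 := red_a_ub hf
  have hbr : (0:ℝ) < (f.2.1:ℝ) := by exact_mod_cast red_b_pos hf
  have hblt : (f.2.1:ℝ) < rt D := hf.2.2
  have hcpos : 0 < 2 * |(f.2.2:ℝ)| := by
    have h0 := red_c_ne hD hf
    have : (f.2.2:ℝ) ≠ 0 := by exact_mod_cast h0
    positivity
  nlinarith

lemma red_c_ub (hD : 0 < D) (hf : IsReducedForm D f) : 2 * |(f.2.2:ℝ)| < rt D + (f.2.1:ℝ) := by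
  have hp := red_prod hD hf
  have h1 := red_a_lb hf
  have hbr : (0:ℝ) < (f.2.1:ℝ) := by exact_mod_cast red_b_pos hf
  have hblt : (f.2.1:ℝ) < rt D := hf.2.2
  nlinarith

lemma red_rev (hD : 0 < D) (hf : IsReducedForm D f) : IsReducedForm D (revForm f) := by
  refine ⟨?_, ?_, ?_⟩
  · have := hf.1; simp only [disc, revForm] at *; linarith
  · simp only [revForm]
    have h1 := red_c_lb hD hf
    have h2 := red_c_ub hD hf
    rw [abs_lt]
    constructor
    · linarith
    · linarith
  · simpa only [revForm] using hf.2.2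

lemma adj_unique {g g' : ℤ × ℤ × ℤ} (hD : 0 < D) (hf : IsReducedForm D f)
    (hg : IsReducedForm D g) (hg' : IsReducedForm D g')
    (h1 : AdjRight D f g) (h2 : AdjRight D f g') : g = g' := by
  obtain ⟨_, hdg, he1, hd1⟩ := h1
  obtain ⟨_, hdg', he2, hd2⟩ := h2
  have ha : g.1 = g'.1 := he1 ▸ he2
  have hbdvd : (2 * g.1) ∣ (g.2.1 - g'.2.1) := by
    have := dvd_sub hd1 (ha ▸ hd2)
    simpa using this
  have hane : g.1 ≠ 0 := red_a_ne hD hg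
  have hb : g.2.1 = g'.2.1 := by
    by_contra hne
    have hne' : g.2.1 - g'.2.1 ≠ 0 := fun h => hne (by omega)
    have h2a : |2 * g.1| ≤ |g.2.1 - g'.2.1| :=
      Int.le_of_dvd (abs_pos.mpr hne') ((abs_dvd _ _).mpr ((dvd_abs _ _).mpr hbdvd))
    have h2aR : |2 * (g.1:ℝ)| ≤ |(g.2.1:ℝ) - (g'.2.1:ℝ)| := by
      exact_mod_cast h2a
    have hgb1 : rt D - 2*|(g.1:ℝ)| < (g.2.1:ℝ) := by
      have := red_a_lb hg; linarith
    have hgb2 : (g.2.1:ℝ) < rt D := hg.2.2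
    have haR : (g.1:ℝ) = (g'.1:ℝ) := by exact_mod_cast ha
    have hgb1' : rt D - 2*|(g.1:ℝ)| < (g'.2.1:ℝ) := by
      have := red_a_lb hg'; rw [← haR] at this; linarith
    have hgb2' : (g'.2.1:ℝ) < rt D := hg'.2.2
    have habs2 : |2 * (g.1:ℝ)| = 2 * |(g.1:ℝ)| := by
      rw [abs_mul]; norm_num
    rw [habs2] at h2aR
    have hlt : |(g.2.1:ℝ) - (g'.2.1:ℝ)| < 2 * |(g.1:ℝ)| :=
      abs_sub_lt_iff.mpr ⟨by linarith, by linarith⟩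
    linarith
  have hc : g.2.2 = g'.2.2 := by
    have e1 : g.2.1^2 - 4 * g.1 * g.2.2 = D := hdg
    have e2 : g'.2.1^2 - 4 * g'.1 * g'.2.2 = D := hdg'
    rw [← ha, ← hb] at e2
    have h4 : (4 : ℤ) * g.1 ≠ 0 := by simp [hane]
    have heq : (4 * g.1) * g.2.2 = (4 * g.1) * g'.2.2 := by linarith
    exact mul_left_cancel₀ h4 heq
  exact Prod.ext ha (Prod.ext hb hc)

lemma adj_rev {g : ℤ × ℤ × ℤ} (h : AdjRight D f g) :
    AdjRight D (revForm g) (revForm f) := by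
  obtain ⟨h1, h2, h3, h4⟩ := h
  refine ⟨?_, ?_, ?_, ?_⟩
  · simp only [disc, revForm] at *; linarith
  · simp only [disc, revForm] at *; linarith
  · simp only [revForm]; exact h3.symm
  · simp only [revForm]
    rw [h3]
    rwa [show g.2.1 + f.2.1 = f.2.1 + g.2.1 from add_comm _ _]

end Basic

/-! ### Roots and the beta invariant -/

section Roots

variable {D : ℤ}

noncomputable def alp (D : ℤ) (g : ℤ × ℤ × ℤ) : ℝ := (-(g.2.1:ℝ) + rt D) / (2 * g.1)
noncomputable def alb (D : ℤ) (g : ℤ × ℤ × ℤ) : ℝ := (-(g.2.1:ℝ) - rt D) / (2 * g.1)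

/-- `w = (s,t,u)` encodes the improper automorph `[[s,t],[u,-s]]` of `g`. -/
def Good (g w : ℤ × ℤ × ℤ) : Prop :=
  w.1 ^ 2 + w.2.1 * w.2.2 = 1 ∧ g.1 * w.2.1 = g.2.1 * w.1 + g.2.2 * w.2.2

noncomputable def bet (D : ℤ) (g w : ℤ × ℤ × ℤ) : ℝ := w.2.2 * alp D g - w.1
noncomputable def betb (D : ℤ) (g w : ℤ × ℤ × ℤ) : ℝ := w.2.2 * alb D g - w.1

variable {g w : ℤ × ℤ × ℤ}

lemma red_aR_ne (hD : 0 < D) (hg : IsReducedForm D g) : (g.1:ℝ) ≠ 0 := by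
  exact_mod_cast red_a_ne hD hg

lemma alp_mul_alb (hD : 0 < D) (hg : IsReducedForm D g) :
    alp D g * alb D g = (g.2.2:ℝ) / g.1 := by
  have ha := red_aR_ne hD hg
  have hd : ((g.2.1:ℝ))^2 - 4*(g.1:ℝ)*(g.2.2:ℝ) = (D:ℝ) := by exact_mod_cast hg.1
  have hr := rt_sq hD
  unfold alp alb
  field_simp
  linear_combination hd - hr

lemma alp_add_alb (hD : 0 < D) (hg : IsReducedForm D g) :
    alp D g + alb D g = -(g.2.1:ℝ) / g.1 := by
  have ha := red_aR_ne hD hg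
  unfold alp alb
  field_simp
  ring

lemma alp_sub_alb (hD : 0 < D) (hg : IsReducedForm D g) :
    alp D g - alb D g = rt D / g.1 := by
  have ha := red_aR_ne hD hg
  unfold alp alb
  field_simp
  ring

lemma abs_alp_lt_one (hD : 0 < D) (hg : IsReducedForm D g) : |alp D g| < 1 := by
  have ha := red_aR_ne hD hg
  have hbl := red_a_lb hg
  have hb2 : (g.2.1:ℝ) < rt D := hg.2.2
  unfold alp
  rw [abs_div]
  rw [div_lt_one (by positivity)]
  have h1 : |(-(g.2.1:ℝ) + rt D)| = rt D - g.2.1 := by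
    rw [abs_of_pos (by linarith)]; ring
  have h2 : |2 * (g.1:ℝ)| = 2 * |(g.1:ℝ)| := by rw [abs_mul]; norm_num
  rw [h1, h2]
  linarith

lemma one_lt_abs_alb (hD : 0 < D) (hg : IsReducedForm D g) : 1 < |alb D g| := by
  have ha := red_aR_ne hD hg
  have hbu := red_a_ub hg
  have hb2 : (0:ℝ) < (g.2.1:ℝ) := by exact_mod_cast red_b_pos hg
  have hr := rt_pos hD
  unfold alb
  rw [abs_div]
  rw [lt_div_iff₀ (by positivity)]
  have h1 : |(-(g.2.1:ℝ) - rt D)| = (g.2.1:ℝ) + rt D := by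
    rw [abs_of_neg (by linarith)]; ring
  have h2 : |2 * (g.1:ℝ)| = 2 * |(g.1:ℝ)| := by rw [abs_mul]; norm_num
  rw [h1, h2]
  linarith

lemma good_eq1 (hD : 0 < D) (hg : IsReducedForm D g) (hw : Good g w) :
    (g.1:ℝ) * w.1^2 + g.2.1 * w.1 * w.2.2 + g.2.2 * w.2.2^2 = g.1 := by
  have e0 : (w.1:ℝ)^2 + w.2.1 * w.2.2 = 1 := by exact_mod_cast hw.1
  have e1 : (g.1:ℝ) * w.2.1 = g.2.1 * w.1 + g.2.2 * w.2.2 := by exact_mod_cast hw.2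
  linear_combination (-(w.2.2:ℝ)) * e1 + (g.1:ℝ) * e0

lemma bet_mul_betb (hD : 0 < D) (hg : IsReducedForm D g) (hw : Good g w) :
    bet D g w * betb D g w = 1 := by
  have ha := red_aR_ne hD hg
  have hm := alp_mul_alb hD hg
  have hs := alp_add_alb hD hg
  have he := good_eq1 hD hg hw
  have expand : bet D g w * betb D g w =
      (w.2.2:ℝ)^2 * (alp D g * alb D g) - w.1 * w.2.2 * (alp D g + alb D g) + w.1^2 := by
    unfold bet betb; ring
  rw [expand, hm, hs]
  field_simp
  linear_combination he

lemma bet_ne_zero (hD : 0 < D) (hg : IsReducedForm D g) (hw : Good g w) :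
    bet D g w ≠ 0 := by
  intro h
  have := bet_mul_betb hD hg hw
  rw [h] at this; simp at this

lemma betb_eq_inv (hD : 0 < D) (hg : IsReducedForm D g) (hw : Good g w) :
    betb D g w = 1 / bet D g w := by
  have h := bet_mul_betb hD hg hw
  have hne := bet_ne_zero hD hg hw
  field_simp
  linarith [h]

lemma bet_sub_betb (hD : 0 < D) (hg : IsReducedForm D g) (hw : Good g w) :
    bet D g w - betb D g w = w.2.2 * rt D / g.1 := by
  have hd := alp_sub_alb hD hg
  have ha := red_aR_ne hD hg
  unfold bet betb
  rw [show (w.2.2:ℝ) * alp D g - w.1 - ((w.2.2:ℝ) * alb D g - w.1)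
      = w.2.2 * (alp D g - alb D g) by ring, hd]
  ring

lemma swap_id (hD : 0 < D) (hg : IsReducedForm D g) (hw : Good g w) :
    (w.1:ℝ) * alp D g + w.2.1 = bet D g w * alb D g := by
  have ha := red_aR_ne hD hg
  have hm := alp_mul_alb hD hg
  have hs := alp_add_alb hD hg
  have e1 : (g.1:ℝ) * w.2.1 = g.2.1 * w.1 + g.2.2 * w.2.2 := by exact_mod_cast hw.2
  have expand : bet D g w * alb D g - ((w.1:ℝ) * alp D g + w.2.1)
      = (w.2.2:ℝ) * (alp D g * alb D g) - w.1 * (alp D g + alb D g)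
        - w.1 * alp D g + w.1 * alp D g - w.2.1 := by
    unfold bet; ring
  have : bet D g w * alb D g - ((w.1:ℝ) * alp D g + w.2.1) = 0 := by
    rw [expand, hm, hs]
    field_simp
    linear_combination (-1:ℝ) * e1
  linarith

end Roots

/-! ### Stepping an automorph along an adjacency -/

section Step

variable {D : ℤ}

def stepW (m : ℤ) (w : ℤ × ℤ × ℤ) : ℤ × ℤ × ℤ :=
  (m * w.2.1 - w.1, m ^ 2 * w.2.1 - 2 * m * w.1 - w.2.2, -w.2.1)

def adjm (g g' : ℤ × ℤ × ℤ) : ℤ := (g.2.1 + g'.2.1) / (2 * g.2.2)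

variable {g g' w : ℤ × ℤ × ℤ}

lemma adjm_spec (hadj : AdjRight D g g') :
    2 * g.2.2 * adjm g g' = g.2.1 + g'.2.1 := by
  obtain ⟨_, _, h3, h4⟩ := hadj
  rw [← h3] at h4
  exact Int.mul_ediv_cancel' h4

lemma adj_b' (hadj : AdjRight D g g') :
    g'.2.1 = 2 * g.2.2 * adjm g g' - g.2.1 := by
  have := adjm_spec (D := D) hadj
  omega

lemma adj_a' (hadj : AdjRight D g g') : g'.1 = g.2.2 := hadj.2.2.1.symm

lemma adj_c' (hD : 0 < D) (hg : IsReducedForm D g) (hadj : AdjRight D g g') :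
    g'.2.2 = g.2.2 * (adjm g g') ^ 2 - g.2.1 * adjm g g' + g.1 := by
  have hc := red_c_ne hD hg
  have hdg : g.2.1 ^ 2 - 4 * g.1 * g.2.2 = D := hg.1
  have hdg' : g'.2.1 ^ 2 - 4 * g'.1 * g'.2.2 = D := hadj.2.1
  have ha' := adj_a' (D := D) hadj
  have hb' := adj_b' (D := D) hadj
  rw [ha'] at hdg'
  set m := adjm g g' with hm
  rw [hb'] at hdg'
  have h4 : (4 * g.2.2) * g'.2.2 = (4 * g.2.2) * (g.2.2 * m ^ 2 - g.2.1 * m + g.1) := by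
    linear_combination hdg - hdg'
  exact mul_left_cancel₀ (by simp [hc]) h4

lemma good_step (hD : 0 < D) (hg : IsReducedForm D g) (hadj : AdjRight D g g')
    (hw : Good g w) : Good g' (stepW (adjm g g') w) := by
  have hb' := adj_b' (D := D) hadj
  have ha' := adj_a' (D := D) hadj
  have hc' := adj_c' hD hg hadj
  set m := adjm g g' with hmdef
  constructor
  · show (m * w.2.1 - w.1) ^ 2 + (m ^ 2 * w.2.1 - 2 * m * w.1 - w.2.2) * (-w.2.1) = 1
    linear_combination hw.1
  · show g'.1 * (m ^ 2 * w.2.1 - 2 * m * w.1 - w.2.2)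
      = g'.2.1 * (m * w.2.1 - w.1) + g'.2.2 * (-w.2.1)
    rw [ha', hb', hc']
    linear_combination hw.2
end Step

section Step2

variable {D : ℤ} {g g' w : ℤ × ℤ × ℤ}

lemma alp_ne_zero (hD : 0 < D) (hg : IsReducedForm D g) : alp D g ≠ 0 := by
  intro h
  have := alp_mul_alb hD hg
  rw [h, zero_mul] at this
  have hc : (g.2.2:ℝ) ≠ 0 := by exact_mod_cast red_c_ne hD hg
  have ha : (g.1:ℝ) ≠ 0 := red_aR_ne hD hg
  exact hc (by field_simp at this; linarith [this])

lemma alp_step (hD : 0 < D) (hg : IsReducedForm D g) (hadj : AdjRight D g g') :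
    alp D g' * alp D g = -1 - (adjm g g' : ℝ) * alp D g := by
  have ha : (g.1:ℝ) ≠ 0 := red_aR_ne hD hg
  have hc : (g.2.2:ℝ) ≠ 0 := by exact_mod_cast red_c_ne hD hg
  have hdg : ((g.2.1:ℝ))^2 - 4*(g.1:ℝ)*(g.2.2:ℝ) = (D:ℝ) := by exact_mod_cast hg.1
  have hr := rt_sq hD
  have ha0 := adj_a' (D := D) hadj
  have hb0 := adj_b' (D := D) hadj
  have ha' : ((g'.1 : ℤ):ℝ) = ((g.2.2 : ℤ):ℝ) := by exact_mod_cast ha0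
  have hb' : ((g'.2.1 : ℤ):ℝ) = 2*(g.2.2:ℝ)*(adjm g g') - g.2.1 := by exact_mod_cast hb0
  unfold alp
  rw [ha', hb']
  field_simp
  linear_combination hr - hdg

lemma bet_step (hD : 0 < D) (hg : IsReducedForm D g) (hadj : AdjRight D g g')
    (hw : Good g w) :
    bet D g' (stepW (adjm g g') w) * alp D g = bet D g w * alb D g := by
  have h1 := alp_step hD hg hadj
  have h2 := swap_id hD hg hw
  have h3 : bet D g w = w.2.2 * alp D g - w.1 := rfl
  simp only [bet, stepW]
  push_cast
  linear_combination (-(w.2.1:ℝ)) * h1 + h2 + alb D g * h3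

lemma abs_alp_eq (hD : 0 < D) (hg : IsReducedForm D g) :
    |alp D g| = (rt D - g.2.1) / (2 * |(g.1:ℝ)|) := by
  have hb2 : (g.2.1:ℝ) < rt D := hg.2.2
  unfold alp
  rw [abs_div]
  congr 1
  · rw [abs_of_pos (by linarith)]; ring
  · rw [abs_mul]; norm_num

lemma abs_alb_eq (hD : 0 < D) (hg : IsReducedForm D g) :
    |alb D g| = (rt D + g.2.1) / (2 * |(g.1:ℝ)|) := by
  have hb2 : (0:ℝ) < (g.2.1:ℝ) := by exact_mod_cast red_b_pos hg
  have hr := rt_pos hD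
  unfold alb
  rw [abs_div]
  congr 1
  · rw [abs_of_neg (by linarith)]; ring
  · rw [abs_mul]; norm_num

lemma bet_step_abs (hD : 0 < D) (hg : IsReducedForm D g) (hadj : AdjRight D g g')
    (hw : Good g w) :
    |bet D g' (stepW (adjm g g') w)|
      = |bet D g w| * ((rt D + g.2.1) / (rt D - g.2.1)) := by
  have h := congrArg abs (bet_step hD hg hadj hw)
  rw [abs_mul, abs_mul] at h
  have hane : |(g.1:ℝ)| > 0 := abs_pos.mpr (red_aR_ne hD hg)
  have hbl : (g.2.1:ℝ) < rt D := hg.2.2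
  have hbp : (0:ℝ) < (g.2.1:ℝ) := by exact_mod_cast red_b_pos hg
  have hap := abs_alp_eq hD hg
  have hbp' := abs_alb_eq hD hg
  rw [hap, hbp'] at h
  have h1 : (0:ℝ) < rt D - g.2.1 := by linarith
  field_simp at h ⊢
  nlinarith [h]

end Step2

/-! ### Matrices: extracting a trace-zero improper automorph -/

section Mat

variable {D : ℤ} {f g w : ℤ × ℤ × ℤ}

lemma actForm_comp (A B : Matrix (Fin 2) (Fin 2) ℤ) (f : ℤ × ℤ × ℤ) :
    actForm B (actForm A f) = actForm (A * B) f := by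
  simp only [actForm, Matrix.mul_apply, Fin.sum_univ_two]
  refine Prod.ext ?_ (Prod.ext ?_ ?_) <;> simp <;> ring

lemma actForm_one (f : ℤ × ℤ × ℤ) : actForm 1 f = f := by
  simp [actForm, Matrix.one_apply]

lemma exists_improper (hamb : ∃ γ : Matrix.SpecialLinearGroup (Fin 2) ℤ,
    Ambiguous (actForm γ.1 f)) :
    ∃ τ : Matrix (Fin 2) (Fin 2) ℤ, τ.det = -1 ∧ actForm τ f = f := by
  obtain ⟨δ, γm, hdet, hfix⟩ := hamb
  refine ⟨δ.1 * γm * δ.1.adjugate, ?_, ?_⟩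
  · rw [Matrix.det_mul, Matrix.det_mul, hdet, Matrix.det_adjugate, δ.2]
    simp
  · have h1 : actForm (δ.1 * γm) f = actForm δ.1 f := by
      rw [← actForm_comp, hfix]
    rw [← actForm_comp, h1, actForm_comp, Matrix.mul_adjugate, δ.2]
    simp [actForm_one]

lemma improper_good (hD : 0 < D) (hg : IsReducedForm D g)
    (τ : Matrix (Fin 2) (Fin 2) ℤ) (hdet : τ.det = -1) (hfix : actForm τ g = g) :
    Good g (τ 0 0, τ 0 1, τ 1 0) := by
  set a := g.1 with ha0
  set b := g.2.1
  set c := g.2.2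
  set s := τ 0 0
  set t := τ 0 1
  set u := τ 1 0
  set v := τ 1 1
  have hane : a ≠ 0 := red_a_ne hD hg
  have e1 : a * s ^ 2 + b * s * u + c * u ^ 2 = a := congrArg Prod.fst hfix
  have e2 : 2 * a * s * t + b * (s * v + t * u) + 2 * c * u * v = b :=
    congrArg (fun p => p.2.1) hfix
  have e3 : a * t ^ 2 + b * t * v + c * v ^ 2 = c :=
    congrArg (fun p => p.2.2) hfix
  have ed : s * v - t * u = -1 := by
    rw [Matrix.det_fin_two] at hdet; exact hdet
  -- trace zero
  have htr : 2 * a * (s + v) = 0 := by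
    linear_combination (-2*v) * e1 + u * e2 + (2*a*s + u*b) * ed
  have hv : v = -s := by
    have h2 : (2 * a) * (s + v) = 0 := by linear_combination htr
    rcases mul_eq_zero.mp h2 with h | h
    · omega
    · omega
  rw [hv] at e2 e3 ed
  have hdet2 : s ^ 2 + t * u = 1 := by linear_combination -ed
  refine ⟨hdet2, ?_⟩
  show a * t = b * s + c * u
  have hXu : u * (a * t - b * s - c * u) = 0 := by
    linear_combination (-1) * e1 + a * hdet2
  have hXt : t * (a * t - b * s - c * u) = 0 := by
    linear_combination e3 - c * hdet2
  have hXs : 2 * (s * (a * t - b * s - c * u)) = 0 := by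
    linear_combination e2 - b * hdet2
  by_contra hX
  have hX' : a * t - b * s - c * u ≠ 0 := fun h => hX (by omega)
  have hu0 : u = 0 := by
    rcases mul_eq_zero.mp hXu with h | h
    · exact h
    · exact absurd h hX'
  have ht0 : t = 0 := by
    rcases mul_eq_zero.mp hXt with h | h
    · exact h
    · exact absurd h hX'
  have hs0 : s = 0 := by
    have : s * (a * t - b * s - c * u) = 0 := by omega
    rcases mul_eq_zero.mp this with h | h
    · exact h
    · exact absurd h hX'
  rw [hs0, ht0, hu0] at hdet2
  simp at hdet2

/-! ### The reversal switch -/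

lemma good_rev (hw : Good g w) : Good (revForm g) (-w.1, w.2.2, w.2.1) := by
  constructor
  · show (-w.1) ^ 2 + w.2.2 * w.2.1 = 1
    linear_combination hw.1
  · show (revForm g).1 * w.2.2 = (revForm g).2.1 * (-w.1) + (revForm g).2.2 * w.2.1
    simp only [revForm]
    linear_combination -hw.2

lemma alp_rev_mul (hD : 0 < D) (hg : IsReducedForm D g) :
    alp D (revForm g) * alb D g = 1 := by
  have ha : (g.1:ℝ) ≠ 0 := red_aR_ne hD hg
  have hc : (g.2.2:ℝ) ≠ 0 := by exact_mod_cast red_c_ne hD hg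
  have hdg : ((g.2.1:ℝ))^2 - 4*(g.1:ℝ)*(g.2.2:ℝ) = (D:ℝ) := by exact_mod_cast hg.1
  have hr := rt_sq hD
  simp only [alp, alb, revForm]
  field_simp
  linear_combination hdg - hr

lemma swap_id2 (hD : 0 < D) (hg : IsReducedForm D g) (hw : Good g w) :
    (w.1:ℝ) * alb D g + w.2.1 = betb D g w * alp D g := by
  have ha := red_aR_ne hD hg
  have hm := alp_mul_alb hD hg
  have hs := alp_add_alb hD hg
  have e1 : (g.1:ℝ) * w.2.1 = g.2.1 * w.1 + g.2.2 * w.2.2 := by exact_mod_cast hw.2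
  have expand : betb D g w * alp D g - ((w.1:ℝ) * alb D g + w.2.1)
      = (w.2.2:ℝ) * (alp D g * alb D g) - w.1 * (alp D g + alb D g)
        - w.1 * alb D g + w.1 * alb D g - w.2.1 := by
    unfold betb; ring
  have : betb D g w * alp D g - ((w.1:ℝ) * alb D g + w.2.1) = 0 := by
    rw [expand, hm, hs]
    field_simp
    linear_combination (-1:ℝ) * e1
  linarith

lemma bet_rev (hD : 0 < D) (hg : IsReducedForm D g) (hw : Good g w) :
    bet D (revForm g) (-w.1, w.2.2, w.2.1) * alb D g = betb D g w * alp D g := by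
  have h1 := alp_rev_mul hD hg
  have h2 := swap_id2 hD hg hw
  show ((w.2.1:ℝ) * alp D (revForm g) - (-w.1:ℤ)) * alb D g = betb D g w * alp D g
  push_cast
  linear_combination (w.2.1:ℝ) * h1 + h2

end Mat

/-! ### The crossing lemma -/

section Crossing

variable {D : ℤ} {g g' w : ℤ × ℤ × ℤ}

lemma abs_bet_sub (hD : 0 < D) (hg : IsReducedForm D g) (hw : Good g w)
    (hu : w.2.2 ≠ 0) :
    |bet D g w - 1 / bet D g w| ≥ rt D / |(g.1:ℝ)| := by
  have h1 := bet_sub_betb hD hg hw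
  rw [betb_eq_inv hD hg hw] at h1
  rw [h1]
  rw [abs_div, abs_mul]
  have hu1 : (1:ℝ) ≤ |(w.2.2:ℝ)| := by
    have : (1:ℤ) ≤ |w.2.2| := Int.one_le_abs hu
    exact_mod_cast this
  have hr : 0 ≤ rt D := Real.sqrt_nonneg _
  have hrabs : |rt D| = rt D := abs_of_nonneg hr
  rw [hrabs]
  have ha : 0 < |(g.1:ℝ)| := abs_pos.mpr (red_aR_ne hD hg)
  rw [ge_iff_le, div_le_div_iff₀ ha ha]
  nlinarith [mul_le_mul_of_nonneg_right hu1 (by positivity : (0:ℝ) ≤ rt D * |(g.1:ℝ)|), rt_pos hD, ha]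

lemma abs_bet_identity (hD : 0 < D) (hg : IsReducedForm D g) (hw : Good g w) :
    |bet D g w - 1 / bet D g w| = |(|bet D g w|)^2 - 1| / |bet D g w| := by
  have hne := bet_ne_zero hD hg hw
  have h2 : bet D g w - 1 / bet D g w = ((bet D g w)^2 - 1) / bet D g w := by
    field_simp
  rw [h2, abs_div]
  congr 2
  rw [sq_abs]

lemma cross_arith {r b A C X Y : ℝ} (hb : 0 < b) (hbr : b < r) (hA : 0 < A) (hC : 0 < C)
    (hX : 0 < X) (hY : 0 < Y)
    (hYX : Y * (r - b) = X * (r + b)) (hAC : 4 * (A * C) = r ^ 2 - b ^ 2)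
    (h1 : A * (1 - X ^ 2) ≥ r * X) (h2 : C * (Y ^ 2 - 1) ≥ r * Y) : False := by
  have hrb : (0:ℝ) < r - b := by linarith
  have hrbp : (0:ℝ) < r + b := by linarith
  have hr : (0:ℝ) < r := by linarith
  have h2a : C * ((Y*(r-b))^2) - C*(r-b)^2 ≥ r*(Y*(r-b))*(r-b) := by
    nlinarith [h2, sq_nonneg (r-b)]
  rw [hYX] at h2a
  have h2b : r*(X*(r+b))*(r-b) ≤ C * ((X*(r+b))^2) - C*(r-b)^2 := h2a
  have hposc : (0:ℝ) ≤ r*(X*(r+b))*(r-b) := by positivity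
  have hprod : (r*X) * (r*(X*(r+b))*(r-b)) ≤ (A * (1-X^2)) * (C * ((X*(r+b))^2) - C*(r-b)^2) :=
    mul_le_mul h1 h2b hposc (le_trans (by positivity) h1)
  have e3 : ((r+b)*(r-b)) * ((1 - X^2) * ((X*(r+b))^2 - (r-b)^2))
      = 4 * ((A * (1-X^2)) * (C * ((X*(r+b))^2) - C*(r-b)^2)) := by
    linear_combination (-((1 - X^2) * ((X*(r+b))^2 - (r-b)^2))) * hAC
  have hbig : 4 * ((r*X) * (r*(X*(r+b))*(r-b)))
      ≤ ((r+b)*(r-b)) * ((1 - X^2) * ((X*(r+b))^2 - (r-b)^2)) := by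
    rw [e3]; linarith
  have h5 : (1 - X^2) * ((X*(r+b))^2 - (r-b)^2) ≤ 4*b^2*X^2 := by
    nlinarith [sq_nonneg ((r-b) - X^2*(r+b))]
  have h6 : ((r+b)*(r-b))*((1 - X^2) * ((X*(r+b))^2 - (r-b)^2))
      ≤ ((r+b)*(r-b))*(4*b^2*X^2) :=
    mul_le_mul_of_nonneg_left h5 (by positivity)
  have hr2b2 : (0:ℝ) < r^2 - b^2 := by nlinarith
  have hpos : (0:ℝ) < X^2*((r+b)*(r-b))*(r^2-b^2) := by positivity
  nlinarith [hbig, h6, hpos]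

lemma crossing (hD : 0 < D) (hg : IsReducedForm D g) (hg' : IsReducedForm D g')
    (hadj : AdjRight D g g') (hw : Good g w)
    (hb1 : |bet D g w| ≤ 1) (hb2 : 1 < |bet D g' (stepW (adjm g g') w)|) :
    w.2.2 = 0 ∨ (stepW (adjm g g') w).2.2 = 0 := by
  by_contra hcon
  push_neg at hcon
  obtain ⟨hu, hu'⟩ := hcon
  have hw' : Good g' (stepW (adjm g g') w) := good_step hD hg hadj hw
  have hXpos : 0 < |bet D g w| := abs_pos.mpr (bet_ne_zero hD hg hw)
  have hYpos : 0 < |bet D g' (stepW (adjm g g') w)| :=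
    abs_pos.mpr (bet_ne_zero hD hg' hw')
  have hbR : (0:ℝ) < (g.2.1:ℝ) := by exact_mod_cast red_b_pos hg
  have hbr : (g.2.1:ℝ) < rt D := hg.2.2
  have hApos : 0 < |(g.1:ℝ)| := abs_pos.mpr (red_aR_ne hD hg)
  have hCpos : 0 < |(g'.1:ℝ)| := abs_pos.mpr (red_aR_ne hD hg')
  have hYX : |bet D g' (stepW (adjm g g') w)| * (rt D - (g.2.1:ℝ))
      = |bet D g w| * (rt D + (g.2.1:ℝ)) := by
    have hrbne : rt D - (g.2.1:ℝ) ≠ 0 := by linarith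
    rw [bet_step_abs hD hg hadj hw]
    field_simp
  have h1 : |(g.1:ℝ)| * (1 - |bet D g w|^2) ≥ rt D * |bet D g w| := by
    have ha := abs_bet_sub hD hg hw hu
    rw [abs_bet_identity hD hg hw] at ha
    have habs : abs ((|bet D g w|)^2 - 1) = 1 - (|bet D g w|)^2 := by
      rw [abs_of_nonpos (by nlinarith)]; ring
    rw [habs, ge_iff_le, div_le_div_iff₀ hApos hXpos] at ha
    nlinarith
  have h2 : |(g'.1:ℝ)| * (|bet D g' (stepW (adjm g g') w)|^2 - 1)
      ≥ rt D * |bet D g' (stepW (adjm g g') w)| := by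
    have ha := abs_bet_sub hD hg' hw' hu'
    rw [abs_bet_identity hD hg' hw'] at ha
    have habs : abs ((|bet D g' (stepW (adjm g g') w)|)^2 - 1)
        = (|bet D g' (stepW (adjm g g') w)|)^2 - 1 := by
      rw [abs_of_nonneg (by nlinarith)]
    rw [habs, ge_iff_le, div_le_div_iff₀ hCpos hYpos] at ha
    nlinarith
  have hAC : 4 * (|(g.1:ℝ)| * |(g'.1:ℝ)|) = (rt D)^2 - ((g.2.1:ℝ))^2 := by
    have hp := red_prod hD hg
    have ha' : (g'.1 : ℝ) = (g.2.2 : ℝ) := by exact_mod_cast adj_a' (D := D) hadj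
    rw [ha']
    nlinarith [hp]
  exact cross_arith hbR hbr hApos hCpos hXpos hYpos hYX hAC h1 h2

end Crossing

/-! ### Walking along the cycle -/

section Walk

variable {D : ℤ}

lemma sym_of_u {g w : ℤ × ℤ × ℤ} (hD : 0 < D) (hg : IsReducedForm D g)
    (hw : Good g w) (hu : w.2.2 = 0) : IsSymPoint D g := by
  have hs2 : w.1 ^ 2 = 1 := by have := hw.1; rw [hu] at this; linarith
  have hat : g.1 * w.2.1 = g.2.1 * w.1 := by have := hw.2; rw [hu] at this; linarith
  have hab : g.1 ∣ g.2.1 := ⟨w.2.1 * w.1, by linear_combination (-w.1) * hat - g.2.1 * hs2⟩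
  obtain ⟨k, hk⟩ := hab
  refine ⟨red_rev hD hg, ?_, hg.1, rfl, ?_⟩
  · have := hg.1; simp only [disc, revForm] at *; linarith
  · show 2 * g.1 ∣ (revForm g).2.1 + g.2.1
    simp only [revForm]
    exact ⟨k, by linear_combination 2 * hk⟩

variable (ρ : Equiv.Perm {f : ℤ × ℤ × ℤ // IsReducedForm D f})

def wseq (f₀ : {f : ℤ × ℤ × ℤ // IsReducedForm D f}) (w₀ : ℤ × ℤ × ℤ) : ℕ → ℤ × ℤ × ℤ
  | 0 => w₀
  | k+1 => stepW (adjm ((ρ^k) f₀).1 ((ρ^(k+1)) f₀).1) (wseq f₀ w₀ k)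

variable {ρ}

lemma pow_succ_apply (f₀ : {f : ℤ × ℤ × ℤ // IsReducedForm D f}) (k : ℕ) :
    (ρ^(k+1)) f₀ = ρ ((ρ^k) f₀) := by
  rw [pow_succ']
  rfl

lemma good_wseq (hD : 0 < D) (hρ : ∀ f, AdjRight D f.1 (ρ f).1)
    {f₀ : {f : ℤ × ℤ × ℤ // IsReducedForm D f}} {w₀ : ℤ × ℤ × ℤ}
    (hw : Good f₀.1 w₀) : ∀ k, Good ((ρ^k) f₀).1 (wseq ρ f₀ w₀ k)
  | 0 => by simpa [wseq] using hw
  | (k+1) => by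
    have ih := good_wseq hD hρ hw k
    have hadj : AdjRight D ((ρ^k) f₀).1 ((ρ^(k+1)) f₀).1 := by
      rw [pow_succ_apply]; exact hρ _
    exact good_step hD ((ρ^k) f₀).2 hadj ih

lemma bet_wseq_abs (hD : 0 < D) (hρ : ∀ f, AdjRight D f.1 (ρ f).1)
    {f₀ : {f : ℤ × ℤ × ℤ // IsReducedForm D f}} {w₀ : ℤ × ℤ × ℤ}
    (hw : Good f₀.1 w₀) (k : ℕ) :
    |bet D ((ρ^(k+1)) f₀).1 (wseq ρ f₀ w₀ (k+1))|
      = |bet D ((ρ^k) f₀).1 (wseq ρ f₀ w₀ k)|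
        * ((rt D + (((ρ^k) f₀).1.2.1:ℝ)) / (rt D - (((ρ^k) f₀).1.2.1:ℝ))) := by
  have hadj : AdjRight D ((ρ^k) f₀).1 ((ρ^(k+1)) f₀).1 := by
    rw [pow_succ_apply]; exact hρ _
  exact bet_step_abs hD ((ρ^k) f₀).2 hadj (good_wseq hD hρ hw k)

lemma ratio_ge (hD : 0 < D) (hDsq : ¬ IsSquare D) {g : ℤ × ℤ × ℤ}
    (hg : IsReducedForm D g) :
    (rt D + 1) / (rt D - 1) ≤ (rt D + (g.2.1:ℝ)) / (rt D - (g.2.1:ℝ)) := by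
  have h1 := rt_gt_one hD hDsq
  have hb1 : (1:ℝ) ≤ (g.2.1:ℝ) := by exact_mod_cast red_b_pos hg
  have hb2 : (g.2.1:ℝ) < rt D := hg.2.2
  rw [div_le_div_iff₀ (by linarith) (by linarith)]
  nlinarith

lemma bet_grow (hD : 0 < D) (hDsq : ¬ IsSquare D) (hρ : ∀ f, AdjRight D f.1 (ρ f).1)
    {f₀ : {f : ℤ × ℤ × ℤ // IsReducedForm D f}} {w₀ : ℤ × ℤ × ℤ}
    (hw : Good f₀.1 w₀) (k : ℕ) :
    |bet D f₀.1 w₀| * ((rt D + 1) / (rt D - 1))^k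
      ≤ |bet D ((ρ^k) f₀).1 (wseq ρ f₀ w₀ k)| := by
  induction k with
  | zero => simp [wseq]
  | succ k ih =>
    rw [bet_wseq_abs hD hρ hw k]
    have hq : (0:ℝ) < (rt D + 1) / (rt D - 1) := by
      have := rt_gt_one hD hDsq
      exact div_pos (by linarith) (by linarith)
    have hr := ratio_ge hD hDsq ((ρ^k) f₀).2
    have hbpos : 0 < |bet D ((ρ^k) f₀).1 (wseq ρ f₀ w₀ k)| :=
      abs_pos.mpr (bet_ne_zero hD ((ρ^k) f₀).2 (good_wseq hD hρ hw k))
    have h0 : 0 ≤ |bet D f₀.1 w₀| * ((rt D + 1) / (rt D - 1))^k := by positivity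
    calc |bet D f₀.1 w₀| * ((rt D + 1) / (rt D - 1))^(k+1)
        = (|bet D f₀.1 w₀| * ((rt D + 1) / (rt D - 1))^k) * ((rt D + 1) / (rt D - 1)) := by
          ring
      _ ≤ |bet D ((ρ^k) f₀).1 (wseq ρ f₀ w₀ k)| * ((rt D + 1) / (rt D - 1)) :=
          mul_le_mul_of_nonneg_right ih (le_of_lt hq)
      _ ≤ |bet D ((ρ^k) f₀).1 (wseq ρ f₀ w₀ k)|
            * ((rt D + (((ρ^k) f₀).1.2.1:ℝ)) / (rt D - (((ρ^k) f₀).1.2.1:ℝ))) :=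
          mul_le_mul_of_nonneg_left hr (le_of_lt hbpos)

lemma exists_sym_forward (hD : 0 < D) (hDsq : ¬ IsSquare D)
    (hρ : ∀ f, AdjRight D f.1 (ρ f).1)
    {f₀ : {f : ℤ × ℤ × ℤ // IsReducedForm D f}} {w₀ : ℤ × ℤ × ℤ}
    (hw : Good f₀.1 w₀) (hb : |bet D f₀.1 w₀| ≤ 1) :
    ∃ k : ℕ, IsSymPoint D ((ρ^k) f₀).1 := by
  classical
  have hbpos : 0 < |bet D f₀.1 w₀| := abs_pos.mpr (bet_ne_zero hD f₀.2 hw)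
  have hq1 : 1 < (rt D + 1) / (rt D - 1) := by
    have := rt_gt_one hD hDsq
    rw [lt_div_iff₀ (by linarith)]
    linarith
  obtain ⟨K, hK⟩ := pow_unbounded_of_one_lt (1 / |bet D f₀.1 w₀|) hq1
  have hbig : 1 < |bet D ((ρ^K) f₀).1 (wseq ρ f₀ w₀ K)| := by
    have hgrow := bet_grow hD hDsq hρ hw K
    have : 1 < |bet D f₀.1 w₀| * ((rt D + 1) / (rt D - 1))^K := by
      rw [div_lt_iff₀ hbpos] at hK
      nlinarith
    linarith
  have hex : ∃ k, 1 < |bet D ((ρ^k) f₀).1 (wseq ρ f₀ w₀ k)| := ⟨K, hbig⟩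
  have hfind := Nat.find_spec hex
  have hK0pos : Nat.find hex ≠ 0 := by
    intro h
    rw [h] at hfind
    simp only [pow_zero, wseq] at hfind
    have h1 : ((1 : Equiv.Perm {f : ℤ × ℤ × ℤ // IsReducedForm D f}) f₀) = f₀ := rfl
    rw [h1] at hfind
    linarith
  obtain ⟨k, hk⟩ : ∃ k, Nat.find hex = k + 1 := ⟨Nat.find hex - 1, by omega⟩
  have hsmall : ¬ (1 < |bet D ((ρ^k) f₀).1 (wseq ρ f₀ w₀ k)|) :=
    Nat.find_min hex (by omega)
  push_neg at hsmall
  have hadj : AdjRight D ((ρ^k) f₀).1 ((ρ^(k+1)) f₀).1 := by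
    rw [pow_succ_apply]; exact hρ _
  have hbig' : 1 < |bet D ((ρ^(k+1)) f₀).1
      (stepW (adjm ((ρ^k) f₀).1 ((ρ^(k+1)) f₀).1) (wseq ρ f₀ w₀ k))| := by
    have heq : wseq ρ f₀ w₀ (k+1)
        = stepW (adjm ((ρ^k) f₀).1 ((ρ^(k+1)) f₀).1) (wseq ρ f₀ w₀ k) := rfl
    rw [← heq]
    rw [hk] at hfind
    exact hfind
  rcases crossing hD ((ρ^k) f₀).2 ((ρ^(k+1)) f₀).2 hadj (good_wseq hD hρ hw k)
      hsmall hbig' with h | h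
  · exact ⟨k, sym_of_u hD ((ρ^k) f₀).2 (good_wseq hD hρ hw k) h⟩
  · refine ⟨k+1, sym_of_u hD ((ρ^(k+1)) f₀).2 (good_wseq hD hρ hw (k+1)) ?_⟩
    exact h

end Walk

/-! ### The reversal permutation -/

section Sigma

variable {D : ℤ}

lemma revForm_invol (g : ℤ × ℤ × ℤ) : revForm (revForm g) = g := rfl

def SpPerm (hD : 0 < D) : Equiv.Perm {f : ℤ × ℤ × ℤ // IsReducedForm D f} where
  toFun x := ⟨revForm x.1, red_rev hD x.2⟩
  invFun x := ⟨revForm x.1, red_rev hD x.2⟩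
  left_inv x := by simp [revForm_invol]
  right_inv x := by simp [revForm_invol]

variable {ρ : Equiv.Perm {f : ℤ × ℤ × ℤ // IsReducedForm D f}}

lemma Sp_invol (hD : 0 < D) (x : {f : ℤ × ℤ × ℤ // IsReducedForm D f}) :
    SpPerm hD (SpPerm hD x) = x := by
  simp [SpPerm, revForm_invol]

lemma Sp_rho (hD : 0 < D) (hρ : ∀ f, AdjRight D f.1 (ρ f).1)
    (x : {f : ℤ × ℤ × ℤ // IsReducedForm D f}) :
    ρ (SpPerm hD (ρ x)) = SpPerm hD x := by
  have h1 : AdjRight D (SpPerm hD (ρ x)).1 (ρ (SpPerm hD (ρ x))).1 := hρ _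
  have h2 : AdjRight D (SpPerm hD (ρ x)).1 (SpPerm hD x).1 := adj_rev (hρ x)
  exact Subtype.ext (adj_unique hD (SpPerm hD (ρ x)).2
    (ρ (SpPerm hD (ρ x))).2 (SpPerm hD x).2 h1 h2)

lemma Sp_conj (hD : 0 < D) (hρ : ∀ f, AdjRight D f.1 (ρ f).1) :
    SpPerm hD * ρ * SpPerm hD = ρ⁻¹ := by
  refine Equiv.ext fun y => ?_
  show SpPerm hD (ρ (SpPerm hD y)) = _
  have : ρ (SpPerm hD (ρ (SpPerm hD y))) = y := by
    have := Sp_rho hD hρ (SpPerm hD y)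
    rw [this, Sp_invol]
  calc SpPerm hD (ρ (SpPerm hD y))
      = ρ⁻¹ (ρ (SpPerm hD (ρ (SpPerm hD y)))) := by rw [Equiv.Perm.inv_def, Equiv.symm_apply_apply]
    _ = ρ⁻¹ y := by rw [this]

lemma Sp_inv (hD : 0 < D) : (SpPerm (D := D) hD)⁻¹ = SpPerm hD := by
  refine Equiv.ext fun y => ?_
  have : SpPerm hD (SpPerm hD y) = y := Sp_invol hD y
  calc (SpPerm hD)⁻¹ y = (SpPerm hD)⁻¹ (SpPerm hD (SpPerm hD y)) := by rw [this]
    _ = SpPerm hD y := by rw [Equiv.Perm.inv_def, Equiv.symm_apply_apply]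

lemma Sp_zpow (hD : 0 < D) (hρ : ∀ f, AdjRight D f.1 (ρ f).1) (n : ℤ)
    (x : {f : ℤ × ℤ × ℤ // IsReducedForm D f}) :
    SpPerm hD ((ρ^n) x) = (ρ^(-n)) (SpPerm hD x) := by
  have hconj : SpPerm hD * ρ^n * (SpPerm hD)⁻¹ = ρ^(-n) := by
    have h1 : (MulAut.conj (SpPerm hD)) (ρ^n) = ((MulAut.conj (SpPerm hD)) ρ)^n :=
      map_zpow _ _ _
    have h2 : (MulAut.conj (SpPerm hD)) ρ = ρ⁻¹ := by
      show SpPerm hD * ρ * (SpPerm hD)⁻¹ = ρ⁻¹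
      rw [Sp_inv hD]
      exact Sp_conj hD hρ
    have h3 : (MulAut.conj (SpPerm hD)) (ρ^n) = SpPerm hD * ρ^n * (SpPerm hD)⁻¹ := rfl
    rw [← h3, h1, h2, inv_zpow, ← zpow_neg]
  have := congrArg (fun σ => σ (SpPerm hD x)) hconj
  simp only [Equiv.Perm.mul_apply] at this
  rw [Sp_inv hD, Sp_invol] at this
  exact this

lemma Sp_ne (hD : 0 < D) (x : {f : ℤ × ℤ × ℤ // IsReducedForm D f}) :
    SpPerm hD x ≠ x := by
  intro h
  have h1 : revForm x.1 = x.1 := congrArg Subtype.val h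
  have h2 : x.1.2.2 = x.1.1 := congrArg Prod.fst h1
  have := red_ac_neg hD x.2
  rw [h2] at this
  nlinarith

lemma sym_rho (hD : 0 < D) (hρ : ∀ f, AdjRight D f.1 (ρ f).1)
    {g : {f : ℤ × ℤ × ℤ // IsReducedForm D f}} (h : IsSymPoint D g.1) :
    ρ (SpPerm hD g) = g :=
  Subtype.ext (adj_unique hD (SpPerm hD g).2 (ρ (SpPerm hD g)).2 g.2 (hρ _) h.2)

lemma sym_of_rho (hD : 0 < D) (hρ : ∀ f, AdjRight D f.1 (ρ f).1)
    {g : {f : ℤ × ℤ × ℤ // IsReducedForm D f}} (h : ρ (SpPerm hD g) = g) :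
    IsSymPoint D g.1 := by
  refine ⟨red_rev hD g.2, ?_⟩
  have := hρ (SpPerm hD g)
  rw [h] at this
  exact this

end Sigma

/-! ### Existence of a symmetry point in the orbit -/

section ExistsSym

variable {D : ℤ} {ρ : Equiv.Perm {f : ℤ × ℤ × ℤ // IsReducedForm D f}}

lemma exists_symZ (hD : 0 < D) (hDsq : ¬ IsSquare D)
    (hρ : ∀ f, AdjRight D f.1 (ρ f).1)
    (f : {f : ℤ × ℤ × ℤ // IsReducedForm D f})
    (hamb : ∃ γ : Matrix.SpecialLinearGroup (Fin 2) ℤ, Ambiguous (actForm γ.1 f.1)) :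
    ∃ e : ℤ, IsSymPoint D ((ρ^e) f).1 := by
  obtain ⟨τ, hdet, hfix⟩ := exists_improper hamb
  have hw : Good f.1 (τ 0 0, τ 0 1, τ 1 0) := improper_good hD f.2 τ hdet hfix
  set w := (τ 0 0, τ 0 1, τ 1 0) with hwdef
  by_cases hb : |bet D f.1 w| ≤ 1
  · obtain ⟨k, hk⟩ := exists_sym_forward hD hDsq hρ hw hb
    exact ⟨(k:ℤ), by rwa [zpow_natCast]⟩
  · push_neg at hb
    -- switch to the reversed form
    set w' := (-w.1, w.2.2, w.2.1) with hw'def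
    have hgood' : Good (revForm f.1) w' := good_rev hw
    have hred' : IsReducedForm D (revForm f.1) := red_rev hD f.2
    have hb' : |bet D (revForm f.1) w'| ≤ 1 := by
      have hrel := bet_rev hD f.2 hw
      have habs := congrArg abs hrel
      rw [abs_mul, abs_mul] at habs
      have h1 : |betb D f.1 w| < 1 := by
        rw [betb_eq_inv hD f.2 hw, abs_div, abs_one]
        rw [div_lt_one (by linarith : (0:ℝ) < |bet D f.1 w|)]
        exact hb
      have h2 := abs_alp_lt_one hD f.2
      have h3 := one_lt_abs_alb hD f.2
      have h4 : |bet D (revForm f.1) w'| * |alb D f.1| < 1 := by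
        rw [habs]
        nlinarith [abs_nonneg (betb D f.1 w), abs_nonneg (alp D f.1)]
      nlinarith [abs_nonneg (bet D (revForm f.1) w')]
    have hSp : (SpPerm hD f).1 = revForm f.1 := rfl
    obtain ⟨k, hk⟩ := exists_sym_forward hD hDsq hρ (f₀ := SpPerm hD f)
      (by rw [hSp]; exact hgood') (by rw [hSp]; exact hb')
    -- map back
    have hroh : ρ (SpPerm hD ((ρ^k) (SpPerm hD f))) = (ρ^k) (SpPerm hD f) :=
      sym_rho hD hρ hk
    have hz : SpPerm hD ((ρ^k) (SpPerm hD f)) = (ρ^(-(k:ℤ))) f := by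
      have := Sp_zpow hD hρ (k : ℤ) (SpPerm hD f)
      rw [zpow_natCast] at this
      rw [this, Sp_invol]
    rw [hz] at hroh
    refine ⟨1 + (-(k:ℤ)), ?_⟩
    have he : (ρ^((1:ℤ) + (-(k:ℤ)))) f = ρ ((ρ^(-(k:ℤ))) f) := by
      rw [zpow_add, zpow_one]
      rfl
    rw [he, hroh]
    exact hk

end ExistsSym

/-! ### Finiteness of reduced forms -/

section Fin

variable {D : ℤ}

lemma red_finite (hD : 0 < D) : Finite {f : ℤ × ℤ × ℤ // IsReducedForm D f} := by
  have h1 := rt_pos hD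
  have h2 := rt_sq hD
  have hD1 : (1:ℝ) ≤ (D:ℝ) := by exact_mod_cast hD
  have hr1 : 1 ≤ rt D := by nlinarith
  have hrD : rt D ≤ (D:ℝ) := by nlinarith
  have hsub : {f : ℤ × ℤ × ℤ | IsReducedForm D f}
      ⊆ (Set.Icc (-D) D) ×ˢ ((Set.Icc (-D) D) ×ˢ (Set.Icc (-D) D)) := by
    rintro ⟨a, b, c⟩ hf
    simp only [Set.mem_setOf_eq] at hf
    have hb0 : 0 < b := red_b_pos hf
    have hbr : (b:ℝ) < rt D := hf.2.2
    have haub : 2 * |(a:ℝ)| < rt D + (b:ℝ) := red_a_ub hf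
    have hcub : 2 * |(c:ℝ)| < rt D + (b:ℝ) := red_c_ub hD hf
    simp only [Set.mem_prod, Set.mem_Icc]
    have hbD : b ≤ D := by
      have : (b:ℝ) ≤ (D:ℝ) := by linarith
      exact_mod_cast this
    have haD : |a| ≤ D := by
      have : |(a:ℝ)| ≤ (D:ℝ) := by linarith
      exact_mod_cast this
    have hcD : |c| ≤ D := by
      have : |(c:ℝ)| ≤ (D:ℝ) := by linarith
      exact_mod_cast this
    refine ⟨⟨?_, ?_⟩, ⟨?_, ?_⟩, ⟨?_, ?_⟩⟩ <;>
      [linarith [neg_abs_le a]; linarith [le_abs_self a]; omega; exact hbD;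
       linarith [neg_abs_le c]; linarith [le_abs_self c]]
  have hfin : ({f : ℤ × ℤ × ℤ | IsReducedForm D f}).Finite :=
    Set.Finite.subset ((Set.finite_Icc (-D) D).prod
      ((Set.finite_Icc (-D) D).prod (Set.finite_Icc (-D) D))) hsub
  exact hfin.to_subtype

end Fin

/-! ### Counting: two distinct symmetry points -/

section Count

variable {D : ℤ} {ρ : Equiv.Perm {f : ℤ × ℤ × ℤ // IsReducedForm D f}}

lemma exists_period (hD : 0 < D) (g₀ : {f : ℤ × ℤ × ℤ // IsReducedForm D f}) :
    ∃ n : ℕ, 0 < n ∧ (ρ^(n:ℤ)) g₀ = g₀ := by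
  have := red_finite (D := D) hD
  obtain ⟨i, j, hne, hij⟩ :=
    Finite.exists_ne_map_eq_of_infinite (f := fun k : ℕ => (ρ^k) g₀)
  rcases Nat.lt_or_ge i j with h | h
  · refine ⟨j - i, by omega, ?_⟩
    have hj : (ρ^j) g₀ = (ρ^i) ((ρ^(j-i)) g₀) := by
      rw [← Equiv.Perm.mul_apply, ← pow_add, Nat.add_sub_cancel' (le_of_lt h)]
    have : (ρ^i) ((ρ^(j-i)) g₀) = (ρ^i) g₀ := by rw [← hj]; exact hij.symm
    have h2 := (Equiv.injective _) this
    rwa [zpow_natCast]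
  · have hij' : i ≠ j := hne
    have h' : j < i := by omega
    refine ⟨i - j, by omega, ?_⟩
    have hj : (ρ^i) g₀ = (ρ^j) ((ρ^(i-j)) g₀) := by
      rw [← Equiv.Perm.mul_apply, ← pow_add, Nat.add_sub_cancel' (le_of_lt h')]
    have : (ρ^j) ((ρ^(i-j)) g₀) = (ρ^j) g₀ := by rw [← hj]; exact hij
    have h2 := (Equiv.injective _) this
    rwa [zpow_natCast]

lemma period_dvd {g₀ : {f : ℤ × ℤ × ℤ // IsReducedForm D f}} {n : ℕ}
    (hn : 0 < n) (hfix : (ρ^(n:ℤ)) g₀ = g₀)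
    (hmin : ∀ m : ℕ, 0 < m → m < n → (ρ^(m:ℤ)) g₀ ≠ g₀) :
    ∀ z : ℤ, (ρ^z) g₀ = g₀ ↔ (n:ℤ) ∣ z := by
  intro z
  constructor
  · intro hz
    have hr0 : 0 ≤ z % (n:ℤ) := Int.emod_nonneg z (by exact_mod_cast hn.ne')
    have hrn : z % (n:ℤ) < (n:ℤ) := Int.emod_lt_of_pos z (by exact_mod_cast hn)
    have hdecomp : z = (n:ℤ) * (z / (n:ℤ)) + z % (n:ℤ) := (Int.mul_ediv_add_emod z _).symm
    have hfixq : (ρ^((n:ℤ) * (z / (n:ℤ)))) g₀ = g₀ := by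
      rw [zpow_mul]
      exact Function.IsFixedPt.perm_zpow hfix (z / (n:ℤ))
    have hrfix : (ρ^(z % (n:ℤ))) g₀ = g₀ := by
      have hzz : z % (n:ℤ) + (n:ℤ) * (z / (n:ℤ)) = z := by linarith [hdecomp]
      have : (ρ^(z % (n:ℤ))) ((ρ^((n:ℤ) * (z / (n:ℤ)))) g₀) = (ρ^z) g₀ := by
        rw [← Equiv.Perm.mul_apply, ← zpow_add, hzz]
      rw [hfixq] at this
      rw [this, hz]
    by_contra hdvd
    have hrne : z % (n:ℤ) ≠ 0 := fun h => hdvd (Int.dvd_of_emod_eq_zero h)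
    have := hmin (z % (n:ℤ)).toNat (by omega) (by omega)
    rw [Int.toNat_of_nonneg hr0] at this
    exact this hrfix
  · rintro ⟨q, rfl⟩
    rw [zpow_mul]
    exact Function.IsFixedPt.perm_zpow hfix q

end Count


/-- Lemma 2: the cycle of a reduced form lying in an ambiguous proper
equivalence class contains two distinct points of symmetry, and at any such
point `(a, b, c)` either `a ∣ D`, or `a` is even and `a / 2 ∣ D`. -/
theorem stmt_18 (D : ℤ) (hD : 0 < D) (hDsq : ¬ IsSquare D)
    (ρ : Equiv.Perm {f : ℤ × ℤ × ℤ // IsReducedForm D f})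
    (hρ : ∀ f : {f : ℤ × ℤ × ℤ // IsReducedForm D f}, AdjRight D f.1 (ρ f).1)
    (f : {f : ℤ × ℤ × ℤ // IsReducedForm D f})
    (hamb : ∃ γ : Matrix.SpecialLinearGroup (Fin 2) ℤ, Ambiguous (actForm γ.1 f.1)) :
    (∃ g₁ g₂ : {f : ℤ × ℤ × ℤ // IsReducedForm D f},
      (∃ n : ℤ, (ρ ^ n) f = g₁) ∧ (∃ n : ℤ, (ρ ^ n) f = g₂) ∧ g₁ ≠ g₂ ∧
      IsSymPoint D g₁.1 ∧ IsSymPoint D g₂.1) ∧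
    (∀ g : {f : ℤ × ℤ × ℤ // IsReducedForm D f}, (∃ n : ℤ, (ρ ^ n) f = g) →
      IsSymPoint D g.1 → (g.1.1 ∣ D ∨ (2 ∣ g.1.1 ∧ g.1.1 / 2 ∣ D))) := by
  classical
  constructor
  · obtain ⟨e, hsym0⟩ := exists_symZ hD hDsq hρ f hamb
    obtain ⟨g₀, hg₀⟩ : ∃ g, (ρ^e) f = g := ⟨_, rfl⟩
    rw [hg₀] at hsym0
    have hsym : IsSymPoint D g₀.1 := hsym0
    have lemA : ∀ (i j : ℤ) (x : {f : ℤ × ℤ × ℤ // IsReducedForm D f}),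
        (ρ^i) ((ρ^j) x) = (ρ^(i+j)) x := fun i j x => by rw [zpow_add]; rfl
    obtain ⟨n, hn, hfixn⟩ := exists_period (ρ := ρ) hD g₀
    have hex : ∃ n : ℕ, 0 < n ∧ (ρ^(n:ℤ)) g₀ = g₀ := ⟨n, hn, hfixn⟩
    have hspec := Nat.find_spec hex
    set N := Nat.find hex with hNdef
    have hmin : ∀ m : ℕ, 0 < m → m < N → (ρ^(m:ℤ)) g₀ ≠ g₀ :=
      fun m hm1 hm2 hfx => Nat.find_min hex hm2 ⟨hm1, hfx⟩
    have hdvd := period_dvd hspec.1 hspec.2 hmin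
    have hiff : ∀ i j : ℤ, (ρ^i) g₀ = (ρ^j) g₀ ↔ (N:ℤ) ∣ (i - j) := by
      intro i j
      rw [← hdvd (i - j)]
      constructor
      · intro h
        have h2 := congrArg (⇑(ρ^(-j))) h
        rw [lemA, lemA] at h2
        rw [show -j + i = i - j by ring, show -j + j = 0 by ring] at h2
        rw [h2]
        simp
      · intro h
        have h2 := congrArg (⇑(ρ^(j))) h
        rw [lemA] at h2
        rw [show (j:ℤ) + (i - j) = i by ring] at h2
        exact h2
    have hsr : ρ (SpPerm hD g₀) = g₀ := sym_rho hD hρ hsym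
    have hSp0 : SpPerm hD g₀ = (ρ^(-1:ℤ)) g₀ := by
      apply Equiv.injective ρ
      rw [hsr]
      show _ = ρ ((ρ^(-1:ℤ)) g₀)
      rw [zpow_neg_one, Equiv.Perm.inv_def, Equiv.apply_symm_apply]
    have hsig : ∀ z : ℤ, SpPerm hD ((ρ^z) g₀) = (ρ^(-z-1)) g₀ := by
      intro z
      rw [Sp_zpow hD hρ, hSp0, lemA]
      congr 1
    have hNeven : ∃ m : ℕ, N = 2 * m := by
      rcases Nat.even_or_odd N with he | ho
      · obtain ⟨k, hk⟩ := he
        exact ⟨k, by omega⟩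
      · exfalso
        obtain ⟨k, hk⟩ := ho
        have hfx : SpPerm hD ((ρ^(k:ℤ)) g₀) = (ρ^(k:ℤ)) g₀ := by
          rw [hsig (k:ℤ)]
          apply (hiff _ _).2
          refine ⟨-1, ?_⟩
          push_cast
          omega
        exact Sp_ne hD _ hfx
    obtain ⟨m, hm⟩ := hNeven
    have hm0 : 0 < m := by have := hspec.1; omega
    have hsym2 : IsSymPoint D ((ρ^(m:ℤ)) g₀).1 := by
      apply sym_of_rho hD hρ
      rw [hsig (m:ℤ)]
      have h1 : ρ ((ρ^(-(m:ℤ)-1)) g₀) = (ρ^(-(m:ℤ))) g₀ := by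
        have := lemA 1 (-(m:ℤ)-1) g₀
        rw [zpow_one] at this
        rw [this]
        congr 1
        ring
      rw [h1]
      apply (hiff _ _).2
      refine ⟨-1, ?_⟩
      push_cast
      omega
    have hneq : (ρ^(m:ℤ)) g₀ ≠ g₀ := by
      intro h
      have h0 : (ρ^(m:ℤ)) g₀ = (ρ^(0:ℤ)) g₀ := by simpa using h
      have := (hiff (m:ℤ) 0).1 h0
      rw [sub_zero] at this
      have hle := Int.le_of_dvd (by exact_mod_cast hm0) this
      have : (m:ℤ) < (N:ℤ) := by exact_mod_cast (by omega : m < N)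
      omega
    refine ⟨g₀, (ρ^(m:ℤ)) g₀, ⟨e, hg₀⟩, ⟨(m:ℤ) + e, ?_⟩, fun h => hneq h.symm,
      hsym, hsym2⟩
    rw [← hg₀, lemA]
  · rintro g - ⟨hrev, hadjr⟩
    have hdisc : disc g.1 = D := hadjr.2.1
    obtain ⟨k, hk⟩ := hadjr.2.2.2
    left
    have hb : g.1.2.1 = g.1.1 * k := by
      simp only [revForm] at hk
      linarith [hk]
    refine ⟨g.1.1 * k^2 - 4 * g.1.2.2, ?_⟩
    simp only [disc] at hdisc
    linear_combination (-1 : ℤ) * hdisc + (g.1.2.1 + g.1.1*k) * hb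
end
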